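/- arXiv:2603.15832 — 7 statements merged into one kernel-verified Lean document; each statement's English description precedes it below -/
import Mathlib

section
/- In any incentive-compatible mechanism, the allocation is monotone in the taste type and essentially independent of the externality type. Precisely: let q : Θ × [0,∞) → [0,A] and t : Θ × [0,∞) → ℝ satisfy incentive compatibility, i.e. for all (θ,ξ), (θ',ξ') ∈ Θ × [0,∞), u(q(θ,ξ),θ) − t(θ,ξ) ≥ u(q(θ',ξ'),θ) − t(θ',ξ'). Then: (i) for all θ' < θ in Θ and all ξ, ξ' ∈ [0,∞), q(θ',ξ') ≤ q(θ,ξ); and (ii) there is a nondecreasing function q̂ : Θ → [0,A] and a countable set N ⊂ Θ such that q(θ,ξ) = q̂(θ) for every θ ∈ Θ \ N and every ξ ∈ [0,∞). -/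
open MeasureTheory Set

/-- In any incentive-compatible mechanism, the allocation is monotone
in the taste type and essentially independent of the externality type. -/
theorem ic_allocation_monotone_and_xi_independent
    (θlow θhigh A : ℝ) (hθlow : 0 ≤ θlow) (hθ : θlow < θhigh) (hA : 0 < A)
    (u : ℝ → ℝ → ℝ)
    -- strictly increasing differences on [0,A] × Θ
    (hu_sid : ∀ x x' θ θ', 0 ≤ x → x < x' → x' ≤ A →
      θ ∈ Icc θlow θhigh → θ' ∈ Icc θlow θhigh → θ < θ' →
      u x' θ - u x θ < u x' θ' - u x θ')
    (q t : ℝ → ℝ → ℝ)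
    (hq_range : ∀ θ ∈ Icc θlow θhigh, ∀ ξ : ℝ, 0 ≤ ξ → q θ ξ ∈ Icc 0 A)
    -- incentive compatibility
    (hIC : ∀ θ ∈ Icc θlow θhigh, ∀ ξ : ℝ, 0 ≤ ξ →
      ∀ θ' ∈ Icc θlow θhigh, ∀ ξ' : ℝ, 0 ≤ ξ' →
      u (q θ' ξ') θ - t θ' ξ' ≤ u (q θ ξ) θ - t θ ξ) :
    -- (i) monotonicity in θ, uniformly over ξ
    (∀ θ ∈ Icc θlow θhigh, ∀ θ' ∈ Icc θlow θhigh, θ' < θ →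
      ∀ ξ ξ' : ℝ, 0 ≤ ξ → 0 ≤ ξ' → q θ' ξ' ≤ q θ ξ) ∧
    -- (ii) essential independence of ξ
    (∃ qhat : ℝ → ℝ, MonotoneOn qhat (Icc θlow θhigh) ∧
      (∀ θ ∈ Icc θlow θhigh, qhat θ ∈ Icc 0 A) ∧
      ∃ N : Set ℝ, N.Countable ∧
        ∀ θ ∈ Icc θlow θhigh \ N, ∀ ξ : ℝ, 0 ≤ ξ → q θ ξ = qhat θ) := by
  -- Part (i)
  have mono : ∀ θ ∈ Icc θlow θhigh, ∀ θ' ∈ Icc θlow θhigh, θ' < θ →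
      ∀ ξ ξ' : ℝ, 0 ≤ ξ → 0 ≤ ξ' → q θ' ξ' ≤ q θ ξ := by
    intro θ hθm θ' hθ'm hlt ξ ξ' hξ hξ'
    by_contra h
    push_neg at h
    have hx := hq_range θ hθm ξ hξ
    have hx' := hq_range θ' hθ'm ξ' hξ'
    have hsid := hu_sid (q θ ξ) (q θ' ξ') θ' θ hx.1 h hx'.2 hθ'm hθm hlt
    have IC1 := hIC θ hθm ξ hξ θ' hθ'm ξ' hξ'
    have IC2 := hIC θ' hθ'm ξ' hξ' θ hθm ξ hξ
    linarith
  refine ⟨mono, ?_⟩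
  -- the set of allocation values at type θ
  set S : ℝ → Set ℝ := fun θ => q θ '' Ici 0 with hS
  have hne : ∀ θ, (S θ).Nonempty := fun θ => ⟨q θ 0, mem_image_of_mem _ (mem_Ici.mpr le_rfl)⟩
  have hsub : ∀ θ ∈ Icc θlow θhigh, S θ ⊆ Icc 0 A := by
    intro θ hθm y hy
    obtain ⟨ξ, hξ, rfl⟩ := hy
    exact hq_range θ hθm ξ hξ
  have hbddA : ∀ θ ∈ Icc θlow θhigh, BddAbove (S θ) :=
    fun θ hθm => ⟨A, fun y hy => (hsub θ hθm hy).2⟩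
  have hbddB : ∀ θ ∈ Icc θlow θhigh, BddBelow (S θ) :=
    fun θ hθm => ⟨0, fun y hy => (hsub θ hθm hy).1⟩
  -- cross inequality: sSup at θ' ≤ sInf at θ for θ' < θ
  have hcross : ∀ θ ∈ Icc θlow θhigh, ∀ θ' ∈ Icc θlow θhigh, θ' < θ →
      sSup (S θ') ≤ sInf (S θ) := by
    intro θ hθm θ' hθ'm hlt
    apply csSup_le (hne θ')
    rintro y ⟨ξ', hξ', rfl⟩
    apply le_csInf (hne θ)
    rintro z ⟨ξ, hξ, rfl⟩
    exact mono θ hθm θ' hθ'm hlt ξ ξ' hξ hξ'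
  refine ⟨fun θ => sInf (S θ), ?_, ?_, ?_⟩
  · -- monotone
    intro θ1 h1 θ2 h2 hle
    rcases eq_or_lt_of_le hle with rfl | hlt
    · exact le_rfl
    · exact le_trans (csInf_le_csSup (hne θ1) (hbddB θ1 h1) (hbddA θ1 h1))
        (hcross θ2 h2 θ1 h1 hlt)
  · intro θ hθm
    constructor
    · exact le_csInf (hne θ) fun y hy => (hsub θ hθm hy).1
    · exact le_trans (csInf_le (hbddB θ hθm) (mem_image_of_mem _ (mem_Ici.mpr le_rfl)))
        (hq_range θ hθm 0 le_rfl).2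
  · refine ⟨{θ ∈ Icc θlow θhigh | sInf (S θ) < sSup (S θ)}, ?_, ?_⟩
    · apply Set.PairwiseDisjoint.countable_of_isOpen
        (s := fun θ => Ioo (sInf (S θ)) (sSup (S θ)))
      · intro a ha b hb hab
        rcases lt_or_gt_of_ne hab with h | h
        · apply Set.disjoint_left.2
          intro x hx1 hx2
          exact absurd (hx1.2.trans_le ((hcross b hb.1 a ha.1 h).trans hx2.1.le)) (lt_irrefl x)
        · apply Set.disjoint_left.2
          intro x hx1 hx2
          exact absurd (hx2.2.trans_le ((hcross a ha.1 b hb.1 h).trans hx1.1.le)) (lt_irrefl x)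
      · exact fun x _ => isOpen_Ioo
      · exact fun x hx => nonempty_Ioo.mpr hx.2
    · intro θ hθm ξ hξ
      have hmem : θ ∈ Icc θlow θhigh := hθm.1
      have hnot : ¬ sInf (S θ) < sSup (S θ) := fun hc => hθm.2 ⟨hmem, hc⟩
      have h1 : sInf (S θ) ≤ q θ ξ := csInf_le (hbddB θ hmem) (mem_image_of_mem _ (mem_Ici.mpr hξ))
      have h2 : q θ ξ ≤ sSup (S θ) := le_csSup (hbddA θ hmem) (mem_image_of_mem _ (mem_Ici.mpr hξ))
      linarith [not_lt.mp hnot]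
end

section
/- For any bounded nondecreasing function q : Θ → [0,∞), the worst case over nonincreasing conditional-mean functions coincides with the unrestricted worst case: inf over m ∈ M₋ of ∫_Θ m(θ) q(θ) dF(θ) equals μ · essinf_F q, where essinf_F q is the essential infimum of q with respect to F. -/
open MeasureTheory Set Filter

/-- For a bounded nondecreasing `q : Θ → [0,∞)`, the worst case over
nonincreasing conditional-mean functions coincides with the unrestricted worst case:
`inf_{m ∈ M₋} ∫ m q dF = μ · essinf_F q`. -/
theorem worst_case_negative_correlation_essInf
    (θlow θhigh : ℝ) (hθ : θlow < θhigh)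
    (F : Measure ℝ) [IsProbabilityMeasure F] (hsupp : F (Icc θlow θhigh)ᶜ = 0)
    (μ : ℝ) (hμ : 0 < μ)
    (q : ℝ → ℝ) (hq_mono : MonotoneOn q (Icc θlow θhigh))
    (hq_nonneg : ∀ θ ∈ Icc θlow θhigh, 0 ≤ q θ)
    (Cb : ℝ) (hq_bdd : ∀ θ ∈ Icc θlow θhigh, q θ ≤ Cb) :
    sInf ((fun m : ℝ → ℝ => ∫ θ, m θ * q θ ∂F) ''
        {m : ℝ → ℝ | (Measurable m ∧ (∀ θ, 0 ≤ m θ) ∧ ∫ θ, m θ ∂F = μ) ∧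
          AntitoneOn m (Icc θlow θhigh)}) =
      μ * essInf q F := by
  set e := essInf q F with he
  set S := ((fun m : ℝ → ℝ => ∫ θ, m θ * q θ ∂F) ''
        {m : ℝ → ℝ | (Measurable m ∧ (∀ θ, 0 ≤ m θ) ∧ ∫ θ, m θ ∂F = μ) ∧
          AntitoneOn m (Icc θlow θhigh)}) with hS
  -- a.e. membership in Icc
  have hae : ∀ᵐ θ ∂F, θ ∈ Icc θlow θhigh := by
    rw [ae_iff]
    exact hsupp
  -- a.e. bounds on q
  have hq0 : ∀ᵐ θ ∂F, 0 ≤ q θ := hae.mono fun θ h => hq_nonneg θ h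
  have hqCb : ∀ᵐ θ ∂F, q θ ≤ Cb := hae.mono fun θ h => hq_bdd θ h
  have hb_le : IsBoundedUnder (· ≤ ·) (ae F) q := ⟨Cb, by rwa [eventually_map]⟩
  have hb_ge : IsBoundedUnder (· ≥ ·) (ae F) q := ⟨0, by rwa [eventually_map]⟩
  have he_le : ∀ᵐ θ ∂F, e ≤ q θ := ae_essInf_le hb_ge
  -- q is a.e. measurable
  have hq_aem : AEMeasurable q F := by
    have hmono : Monotone fun θ => q (max θlow (min θ θhigh)) := by
      intro x y hxy
      refine hq_mono ⟨le_max_left _ _, max_le hθ.le (min_le_right _ _)⟩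
        ⟨le_max_left _ _, max_le hθ.le (min_le_right _ _)⟩ ?_
      exact max_le_max le_rfl (min_le_min hxy le_rfl)
    refine ⟨_, hmono.measurable, hae.mono fun θ hθ' => ?_⟩
    simp only [min_eq_left hθ'.2, max_eq_right hθ'.1]
  -- q is integrable
  have hq_int : Integrable q F := by
    refine (integrable_const Cb).mono' hq_aem.aestronglyMeasurable ?_
    filter_upwards [hq0, hqCb] with θ h0 h1
    rw [Real.norm_eq_abs, abs_of_nonneg h0]; exact h1
  -- lower bound for all elements of S
  have hlb : ∀ s ∈ S, μ * e ≤ s := by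
    rintro s ⟨m, ⟨⟨hm_meas, hm_nonneg, hm_int_eq⟩, hm_anti⟩, rfl⟩
    have hm_int : Integrable m F := by
      by_contra h
      rw [integral_undef h] at hm_int_eq
      exact absurd hm_int_eq.symm hμ.ne'
    have hmq_int : Integrable (fun θ => m θ * q θ) F := by
      refine (hm_int.const_mul Cb).mono'
        ((hm_meas.aemeasurable.mul hq_aem).aestronglyMeasurable) ?_
      filter_upwards [hq0, hqCb] with θ h0 h1
      calc ‖m θ * q θ‖ = m θ * q θ := Real.norm_of_nonneg (mul_nonneg (hm_nonneg θ) h0)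
        _ ≤ m θ * Cb := mul_le_mul_of_nonneg_left h1 (hm_nonneg θ)
        _ = Cb * m θ := mul_comm _ _
    have hkey : ∫ θ, e * m θ ∂F ≤ ∫ θ, m θ * q θ ∂F := by
      refine integral_mono_ae (hm_int.const_mul e) hmq_int ?_
      filter_upwards [he_le] with θ h
      calc e * m θ = m θ * e := mul_comm _ _
        _ ≤ m θ * q θ := mul_le_mul_of_nonneg_left h (hm_nonneg θ)
    rwa [integral_const_mul, hm_int_eq, mul_comm e μ] at hkey
  -- S is nonempty
  have hSne : S.Nonempty := by
    refine ⟨∫ θ, (fun _ => μ) θ * q θ ∂F, ⟨fun _ => μ, ⟨⟨measurable_const, fun _ => hμ.le, ?_⟩,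
      antitoneOn_const⟩, rfl⟩⟩
    simp [measure_univ]
  have hSbdd : BddBelow S := ⟨μ * e, fun s hs => hlb s hs⟩
  refine le_antisymm ?_ (le_csInf hSne fun s hs => hlb s hs)
  rw [Real.sInf_le_iff hSbdd hSne]
  intro ε hε
  set δ := ε / μ with hδdef
  have hδ : 0 < δ := div_pos hε hμ
  -- find t in Icc with positive mass below and q t < e + δ
  obtain ⟨t, htIcc, htF, htq⟩ : ∃ t, t ∈ Icc θlow θhigh ∧ 0 < F (Iic t) ∧ q t < e + δ := by
    set B := Icc θlow θhigh ∩ {θ | q θ < e + δ} with hB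
    have hFB : 0 < F B := by
      rcases (zero_le : 0 ≤ F B).lt_or_eq with h | h
      · exact h
      · exfalso
        have hB0 : F B = 0 := h.symm
        have hael : ∀ᵐ θ ∂F, e + δ ≤ q θ := by
          rw [ae_iff]
          refine measure_mono_null (fun θ hθ' => ?_) (measure_union_null hB0 hsupp)
        -- θ with ¬ e+δ ≤ q θ lies in B ∪ Iccᶜ
          by_cases h2 : θ ∈ Icc θlow θhigh
          · exact Or.inl ⟨h2, not_le.mp hθ'⟩
          · exact Or.inr h2
        have : e + δ ≤ e := Filter.le_liminf_of_le hb_le.isCoboundedUnder_ge hael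
        linarith
    have hBne : B.Nonempty := by
      rcases B.eq_empty_or_nonempty with h | h
      · rw [h] at hFB; simp at hFB
      · exact h
    by_contra hc
    push_neg at hc
    have h_all : ∀ u ∈ B, F (Iic u) = 0 := by
      rintro u ⟨hu1, hu2⟩
      rcases (zero_le : 0 ≤ F (Iic u)).lt_or_eq with h | h
      · exact absurd hu2 (not_lt.mpr (hc u hu1 h))
      · exact h.symm
    have hBbdd : BddAbove B := ⟨θhigh, fun x hx => hx.1.2⟩
    set s := sSup B with hs
    by_cases hsB : s ∈ B
    · have : F B ≤ F (Iic s) := measure_mono fun x hx => le_csSup hBbdd hx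
      rw [h_all s hsB] at this
      exact absurd (le_antisymm this zero_le) hFB.ne'
    · have hseq : ∀ n : ℕ, ∃ u ∈ B, s - 1 / (n + 1) < u := by
        intro n
        refine exists_lt_of_lt_csSup hBne ?_
        have : (0:ℝ) < 1 / (n + 1) := by positivity
        linarith
      choose u hu1 hu2 using hseq
      have hcover : B ⊆ ⋃ n, Iic (u n) := by
        intro x hx
        have hxs : x < s := lt_of_le_of_ne (le_csSup hBbdd hx) (fun hxe => hsB (hxe ▸ hx))
        obtain ⟨n, hn⟩ := exists_nat_one_div_lt (sub_pos.mpr hxs)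
        refine mem_iUnion.mpr ⟨n, ?_⟩
        have := hu2 n
        simp only [mem_Iic]
        linarith
      have : F B = 0 :=
        measure_mono_null hcover (measure_iUnion_null fun n => h_all (u n) (hu1 n))
      exact absurd this hFB.ne'
  -- build the admissible function
  set c := (F (Iic t)).toReal with hcdef
  have hc : 0 < c := ENNReal.toReal_pos htF.ne' (measure_ne_top F _)
  set m : ℝ → ℝ := fun θ => (μ / c) * (Iic t).indicator (fun _ => (1:ℝ)) θ with hm
  have hm_meas : Measurable m :=
    (measurable_const.indicator measurableSet_Iic).const_mul _
  have hm_nonneg : ∀ θ, 0 ≤ m θ := fun θ =>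
    mul_nonneg (div_nonneg hμ.le hc.le) (Set.indicator_nonneg (fun _ _ => zero_le_one) θ)
  have hm_int_eq : ∫ θ, m θ ∂F = μ := by
    show ∫ θ, (μ / c) * (Iic t).indicator (fun _ => (1:ℝ)) θ ∂F = μ
    rw [integral_const_mul, integral_indicator measurableSet_Iic, setIntegral_const,
      measureReal_def, smul_eq_mul, mul_one, ← hcdef, div_mul_cancel₀ μ hc.ne']
  have hm_anti : AntitoneOn m (Icc θlow θhigh) := by
    intro x _ y _ hxy
    refine mul_le_mul_of_nonneg_left ?_ (div_nonneg hμ.le hc.le)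
    by_cases hyt : y ≤ t
    · simp [Set.indicator_of_mem, mem_Iic, hyt, hxy.trans hyt]
    · have hy : (Iic t).indicator (fun _ => (1:ℝ)) y = 0 := by
        simp [Set.indicator_apply, mem_Iic, hyt]
      rw [hy]
      exact Set.indicator_nonneg (fun _ _ => zero_le_one) x
  refine ⟨∫ θ, m θ * q θ ∂F, ⟨m, ⟨⟨hm_meas, hm_nonneg, hm_int_eq⟩, hm_anti⟩, rfl⟩, ?_⟩
  have hval : ∫ θ, m θ * q θ ∂F = (μ / c) * ∫ θ in Iic t, q θ ∂F := by
    have h1 : ∀ θ, m θ * q θ = (μ / c) * (Iic t).indicator q θ := by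
      intro θ
      by_cases hth : θ ∈ Iic t <;>
        simp [hm, Set.indicator_of_mem, Set.indicator_of_notMem, hth, mul_assoc]
    simp_rw [h1]
    rw [integral_const_mul, integral_indicator measurableSet_Iic]
  have hbound : ∫ θ in Iic t, q θ ∂F ≤ q t * c := by
    have hle : ∀ᵐ θ ∂F.restrict (Iic t), q θ ≤ q t := by
      filter_upwards [ae_restrict_mem measurableSet_Iic, ae_restrict_of_ae hae] with θ h1 h2
      exact hq_mono h2 htIcc h1
    calc ∫ θ in Iic t, q θ ∂F ≤ ∫ _ in Iic t, q t ∂F :=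
          integral_mono_ae hq_int.restrict (integrable_const _) hle
      _ = q t * c := by rw [setIntegral_const, measureReal_def, smul_eq_mul, mul_comm]
  have hμq : ∫ θ, m θ * q θ ∂F ≤ μ * q t := by
    rw [hval]
    calc (μ / c) * ∫ θ in Iic t, q θ ∂F ≤ (μ / c) * (q t * c) :=
          mul_le_mul_of_nonneg_left hbound (div_nonneg hμ.le hc.le)
      _ = μ * q t := by field_simp
  calc ∫ θ, m θ * q θ ∂F ≤ μ * q t := hμq
    _ < μ * (e + δ) := by exact mul_lt_mul_of_pos_left htq hμ
    _ = μ * e + ε := by rw [mul_add, hδdef, mul_div_cancel₀ ε hμ.ne']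
end

section
/- For any bounded nondecreasing function q : Θ → [0,∞), the supremum over nondecreasing conditional-mean functions coincides with the unrestricted supremum: sup over m ∈ M₊ of ∫_Θ m(θ) q(θ) dF(θ) equals μ · esssup_F q, where esssup_F q is the essential supremum of q with respect to F. -/
open MeasureTheory Set

/-- Auxiliary: for `c < essSup Q F` with `Q` monotone, there is an upper set `A`
(of the form `Ici t` or `Ioi t`) with positive measure on which `Q > c`. -/
lemma exists_upper_set_of_lt_essSup
    (θlow θhigh : ℝ)
    (F : Measure ℝ) [IsProbabilityMeasure F] (hsupp : F (Icc θlow θhigh)ᶜ = 0)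
    (Q : ℝ → ℝ) (hQmono : Monotone Q) (hQ0 : ∀ x, 0 ≤ Q x)
    {c : ℝ} (hc : c < essSup Q F) :
    ∃ A : Set ℝ, MeasurableSet A ∧ (∀ ⦃x y : ℝ⦄, x ≤ y → x ∈ A → y ∈ A) ∧
      0 < F A ∧ ∀ x ∈ A, c < Q x := by
  have hne : (ae F).NeBot := ae_neBot.2 (IsProbabilityMeasure.ne_zero F)
  -- the superlevel set has positive measure
  have hpos : F {x | c < Q x} ≠ 0 := by
    intro h0
    have hle : Q ≤ᵐ[F] fun _ => c := by
      refine (ae_iff).2 ?_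
      simpa [not_le] using h0
    have : essSup Q F ≤ c :=
      Filter.limsup_le_of_le (Filter.isCoboundedUnder_le_of_le _ (fun x => hQ0 x)) hle
    exact absurd hc (not_lt.2 this)
  set B : Set ℝ := Icc θlow θhigh ∩ {x | c < Q x} with hB
  have hBpos : F B ≠ 0 := by
    intro h0
    have : F {x | c < Q x} ≤ F B + F (Icc θlow θhigh)ᶜ := by
      refine le_trans (measure_mono ?_) (measure_union_le _ _)
      intro x hx
      by_cases hxI : x ∈ Icc θlow θhigh
      · exact Or.inl ⟨hxI, hx⟩
      · exact Or.inr hxI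
    rw [h0, hsupp] at this
    exact hpos (le_antisymm (by simpa using this) (zero_le))
  have hBne : B.Nonempty := nonempty_of_measure_ne_zero hBpos
  have hBbdd : BddBelow B := ⟨θlow, fun x hx => hx.1.1⟩
  set t : ℝ := sInf B with ht
  by_cases htB : c < Q t
  · refine ⟨Ici t, measurableSet_Ici, fun x y hxy hx => le_trans hx hxy, ?_, ?_⟩
    · refine lt_of_lt_of_le (lt_of_le_of_ne (zero_le) (Ne.symm hBpos)) (measure_mono ?_)
      exact fun x hx => csInf_le hBbdd hx
    · exact fun x hx => lt_of_lt_of_le htB (hQmono hx)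
  · refine ⟨Ioi t, measurableSet_Ioi, fun x y hxy hx => lt_of_lt_of_le hx hxy, ?_, ?_⟩
    · refine lt_of_lt_of_le (lt_of_le_of_ne (zero_le) (Ne.symm hBpos)) (measure_mono ?_)
      intro x hx
      rcases lt_or_eq_of_le (csInf_le hBbdd hx) with h | h
      · exact h
      · exact absurd (show c < Q t by rw [ht, h]; exact hx.2) htB
    · intro x hx
      obtain ⟨b, hbB, hbx⟩ := (csInf_lt_iff hBbdd hBne).1 hx
      exact lt_of_lt_of_le hbB.2 (hQmono hbx.le)

/-- For a bounded nondecreasing `q : Θ → [0,∞)`, the supremum over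
nondecreasing conditional-mean functions coincides with the unrestricted supremum:
`sup_{m ∈ M₊} ∫ m q dF = μ · esssup_F q`. -/
theorem sup_positive_correlation_essSup
    (θlow θhigh : ℝ) (hθ : θlow < θhigh)
    (F : Measure ℝ) [IsProbabilityMeasure F] (hsupp : F (Icc θlow θhigh)ᶜ = 0)
    (μ : ℝ) (hμ : 0 < μ)
    (q : ℝ → ℝ) (hq_mono : MonotoneOn q (Icc θlow θhigh))
    (hq_nonneg : ∀ θ ∈ Icc θlow θhigh, 0 ≤ q θ)
    (Cb : ℝ) (hq_bdd : ∀ θ ∈ Icc θlow θhigh, q θ ≤ Cb) :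
    sSup ((fun m : ℝ → ℝ => ∫ θ, m θ * q θ ∂F) ''
        {m : ℝ → ℝ | (Measurable m ∧ (∀ θ, 0 ≤ m θ) ∧ ∫ θ, m θ ∂F = μ) ∧
          MonotoneOn m (Icc θlow θhigh)}) =
      μ * essSup q F := by
  have hθle : θlow ≤ θhigh := hθ.le
  have hne : (ae F).NeBot := ae_neBot.2 (IsProbabilityMeasure.ne_zero F)
  -- clamp function
  set clamp : ℝ → ℝ := fun x => max θlow (min x θhigh) with hclamp
  have hclamp_mem : ∀ x, clamp x ∈ Icc θlow θhigh := by
    intro x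
    exact ⟨le_max_left _ _, max_le (by linarith) (min_le_right _ _)⟩
  have hclamp_mono : Monotone clamp := fun x y hxy =>
    max_le_max le_rfl (min_le_min hxy le_rfl)
  have hclamp_eq : ∀ x ∈ Icc θlow θhigh, clamp x = x := by
    intro x hx
    simp [hclamp, min_eq_left hx.2, max_eq_right hx.1]
  -- extended monotone version of q
  set Q : ℝ → ℝ := fun x => q (clamp x) with hQ
  have hQmono : Monotone Q := fun x y hxy =>
    hq_mono (hclamp_mem x) (hclamp_mem y) (hclamp_mono hxy)
  have hQ0 : ∀ x, 0 ≤ Q x := fun x => hq_nonneg _ (hclamp_mem x)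
  have hQbdd : ∀ x, Q x ≤ Cb := fun x => hq_bdd _ (hclamp_mem x)
  have hQmeas : Measurable Q := hQmono.measurable
  have hae_Icc : ∀ᵐ x ∂F, x ∈ Icc θlow θhigh := by
    exact ae_iff.2 hsupp
  have hQae : Q =ᵐ[F] q := by
    filter_upwards [hae_Icc] with x hx
    simp [hQ, hclamp_eq x hx]
  have hess : essSup Q F = essSup q F := essSup_congr_ae hQae
  set s : ℝ := essSup q F with hs
  have hQles : ∀ᵐ x ∂F, Q x ≤ s := by
    rw [← hess]
    exact ae_le_essSup (Filter.isBoundedUnder_of ⟨Cb, fun x => hQbdd x⟩)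
  set S : Set ℝ := ((fun m : ℝ → ℝ => ∫ θ, m θ * q θ ∂F) ''
        {m : ℝ → ℝ | (Measurable m ∧ (∀ θ, 0 ≤ m θ) ∧ ∫ θ, m θ ∂F = μ) ∧
          MonotoneOn m (Icc θlow θhigh)}) with hS
  -- upper bound: every element of S is ≤ μ * s
  have hub : ∀ v ∈ S, v ≤ μ * s := by
    rintro v ⟨m, ⟨⟨hm_meas, hm_nonneg, hm_int⟩, _⟩, rfl⟩
    have hm_integrable : Integrable m F := by
      by_contra h
      rw [integral_undef h] at hm_int
      exact absurd hm_int.symm hμ.ne'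
    have h1 : ∫ θ, m θ * q θ ∂F = ∫ θ, m θ * Q θ ∂F := by
      refine integral_congr_ae ?_
      filter_upwards [hQae] with x hx
      rw [hx]
    have hmQ_int : Integrable (fun θ => m θ * Q θ) F := by
      refine Integrable.mono (hm_integrable.const_mul (max Cb 0))
        ((hm_meas.mul hQmeas).aestronglyMeasurable) ?_
      refine Filter.Eventually.of_forall fun x => ?_
      rw [Real.norm_eq_abs, Real.norm_eq_abs, abs_of_nonneg (mul_nonneg (hm_nonneg x) (hQ0 x)),
        abs_of_nonneg (mul_nonneg (le_max_right _ _) (hm_nonneg x))]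
      rw [mul_comm (max Cb 0) (m x)]
      exact mul_le_mul_of_nonneg_left ((hQbdd x).trans (le_max_left _ _)) (hm_nonneg x)
    have h2 : ∫ θ, m θ * Q θ ∂F ≤ ∫ θ, m θ * s ∂F := by
      refine integral_mono_ae hmQ_int (hm_integrable.mul_const s) ?_
      filter_upwards [hQles] with x hx
      exact mul_le_mul_of_nonneg_left hx (hm_nonneg x)
    have h3 : ∫ θ, m θ * s ∂F = μ * s := by
      rw [integral_mul_const, hm_int]
    show ∫ θ, m θ * q θ ∂F ≤ μ * s
    rw [h1]
    exact h2.trans_eq h3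
  have hSbdd : BddAbove S := ⟨μ * s, hub⟩
  -- nonempty: constant function μ
  have hSne : S.Nonempty := by
    refine ⟨∫ θ, (fun _ : ℝ => μ) θ * q θ ∂F, ⟨fun _ => μ, ⟨⟨measurable_const,
      fun _ => hμ.le, by simp⟩, fun x _ y _ _ => le_rfl⟩, rfl⟩⟩
  refine le_antisymm (csSup_le hSne hub) ?_
  -- lower bound
  refine le_of_forall_lt fun y hy => ?_
  have hyμ : y / μ < s := by
    rw [div_lt_iff₀ hμ, mul_comm]
    exact hy
  obtain ⟨c, hc1, hc2⟩ := exists_between hyμ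
  -- get an upper set A with F A > 0 and Q > c on A
  obtain ⟨A, hA_meas, hA_upper, hA_pos, hA_gt⟩ :=
    exists_upper_set_of_lt_essSup θlow θhigh F hsupp Q hQmono hQ0 (by rwa [hess])
  have hFA_top : F A ≠ ⊤ := (measure_lt_top F A).ne
  have hFA_real : 0 < (F A).toReal := ENNReal.toReal_pos (ne_of_gt hA_pos) hFA_top
  set k : ℝ := μ / (F A).toReal with hk
  have hk_pos : 0 < k := div_pos hμ hFA_real
  set m : ℝ → ℝ := A.indicator (fun _ => k) with hm
  have hm_meas : Measurable m := measurable_const.indicator hA_meas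
  have hm_nonneg : ∀ x, 0 ≤ m x := fun x => indicator_nonneg (fun _ _ => hk_pos.le) x
  have hm_int : ∫ θ, m θ ∂F = μ := by
    rw [hm, integral_indicator_const k hA_meas, smul_eq_mul, hk]
    field_simp
    rfl
  have hm_mono : Monotone m := by
    intro x y hxy
    by_cases hx : x ∈ A
    · rw [hm, indicator_of_mem hx, indicator_of_mem (hA_upper hxy hx)]
    · rw [hm, indicator_of_notMem hx]
      exact hm_nonneg y
  -- value of the integral
  have hmemS : (∫ θ, m θ * q θ ∂F) ∈ S := by
    exact ⟨m, ⟨⟨hm_meas, hm_nonneg, hm_int⟩, hm_mono.monotoneOn _⟩, rfl⟩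
  have hval : μ * c ≤ ∫ θ, m θ * q θ ∂F := by
    have h1 : ∫ θ, m θ * q θ ∂F = ∫ θ, m θ * Q θ ∂F := by
      refine integral_congr_ae ?_
      filter_upwards [hQae] with x hx
      rw [hx]
    have h2 : (fun θ => m θ * Q θ) = A.indicator (fun θ => k * Q θ) := by
      funext x
      by_cases hx : x ∈ A
      · rw [hm]; simp [indicator_of_mem hx]
      · rw [hm]; simp [indicator_of_notMem hx]
    have hQ_int : IntegrableOn (fun θ => k * Q θ) A F := by
      refine Integrable.integrableOn ?_
      refine (Integrable.const_mul ?_ k)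
      refine ⟨hQmeas.aestronglyMeasurable, ?_⟩
      refine HasFiniteIntegral.of_bounded (C := max Cb 0) ?_
      refine Filter.Eventually.of_forall fun x => ?_
      rw [Real.norm_eq_abs, abs_of_nonneg (hQ0 x)]
      exact (hQbdd x).trans (le_max_left _ _)
    have h3 : ∫ θ, m θ * Q θ ∂F = ∫ θ in A, k * Q θ ∂F := by
      rw [h2, integral_indicator hA_meas]
    have h4 : (k * c) * (F A).toReal ≤ ∫ θ in A, k * Q θ ∂F := by
      refine setIntegral_ge_of_const_le_real hA_meas hFA_top ?_ hQ_int
      intro x hx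
      exact mul_le_mul_of_nonneg_left (hA_gt x hx).le hk_pos.le
    have h5 : (k * c) * (F A).toReal = μ * c := by
      rw [hk]
      field_simp
    rw [h1, h3]
    rw [← h5]
    exact h4
  calc y < μ * c := by rw [← div_lt_iff₀' hμ]; exact hc1
    _ ≤ ∫ θ, m θ * q θ ∂F := hval
    _ ≤ sSup S := le_csSup hSbdd hmemS
end

section
/- (Theorem 1: unknown correlation favors a quantity floor.) There exists q̲ ∈ [0,A] such that, setting q₀*(θ) := max{q^LF(θ), q̲}: for every q ∈ Q, inf over m ∈ M₀ of W(q,m) is at most inf over m ∈ M₀ of W(q₀*, m); moreover, any q ∈ Q attaining this maximal worst-case value satisfies q = q₀* F-almost everywhere. -/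
open MeasureTheory Set

noncomputable section

/-- The set of implementable allocation functions: nondecreasing `q : Θ → [0,A]`. -/
def Qset (θlow θhigh A : ℝ) : Set (ℝ → ℝ) :=
  {q | MonotoneOn q (Icc θlow θhigh) ∧ ∀ θ ∈ Icc θlow θhigh, q θ ∈ Icc 0 A}

/-- The unknown-correlation ambiguity set: Borel `m : Θ → [0,∞)` with mean `μ`. -/
def M0 (F : Measure ℝ) (μ : ℝ) : Set (ℝ → ℝ) :=
  {m | Measurable m ∧ (∀ θ, 0 ≤ m θ) ∧ ∫ θ, m θ ∂F = μ}

/-- Total surplus with a positive externality. -/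
def W (F : Measure ℝ) (u : ℝ → ℝ → ℝ) (c : ℝ) (q m : ℝ → ℝ) : ℝ :=
  ∫ θ, (u (q θ) θ + (m θ - c) * q θ) ∂F

/-- Worst-case total surplus over the ambiguity set `M`. -/
def worst (F : Measure ℝ) (u : ℝ → ℝ → ℝ) (c : ℝ) (M : Set (ℝ → ℝ)) (q : ℝ → ℝ) : ℝ :=
  sInf ((fun m => W F u c q m) '' M)

set_option maxHeartbeats 1000000

def clf (a b θ : ℝ) : ℝ := max a (min θ b)

lemma clf_mem {a b : ℝ} (hab : a ≤ b) (θ : ℝ) : clf a b θ ∈ Icc a b := by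
  constructor
  · exact le_max_left _ _
  · simp only [clf, max_le_iff]
    exact ⟨hab, min_le_right _ _⟩

lemma clf_eq {a b θ : ℝ} (hθ : θ ∈ Icc a b) : clf a b θ = θ := by
  simp only [clf, min_eq_left hθ.2, max_eq_right hθ.1]

lemma clf_mono {a b : ℝ} : Monotone (clf a b) := fun x y hxy => by
  simp only [clf]
  exact max_le_max le_rfl (min_le_min hxy le_rfl)

lemma clf_meas {a b : ℝ} : Measurable (clf a b) := clf_mono.measurable

lemma meas_of_continuousOn {s : Set (ℝ × ℝ)} {f : ℝ × ℝ → ℝ} (hf : ContinuousOn f s)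
    {g : ℝ → ℝ × ℝ} (hg : Measurable g) (hmem : ∀ a, g a ∈ s) :
    Measurable (fun a => f (g a)) := by
  rw [continuousOn_iff_continuous_restrict] at hf
  have : (fun a => f (g a)) = (s.restrict f) ∘ (fun a => (⟨g a, hmem a⟩ : s)) := rfl
  rw [this]
  exact hf.measurable.comp (hg.subtype_mk)

/-- **Theorem 1.** Under the unknown-correlation benchmark there is a quantity
floor `q̲ ∈ [0,A]` so that `q₀*(θ) = max (q^LF θ) q̲` maximizes the worst-case total surplus
over all implementable allocations, and it is the F-a.e. unique maximizer. -/
theorem unknown_correlation_quantity_floor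
    (θlow θhigh A c μ : ℝ) (hθlow : 0 ≤ θlow) (hθ : θlow < θhigh)
    (hA : 0 < A) (hc : 0 < c) (hμ : 0 < μ)
    (F : Measure ℝ) [IsProbabilityMeasure F]
    -- F admits a positive continuous density on Θ
    (f : ℝ → ℝ) (hf_cont : ContinuousOn f (Icc θlow θhigh))
    (hf_pos : ∀ θ ∈ Icc θlow θhigh, 0 < f θ)
    (hF : F = (volume.restrict (Icc θlow θhigh)).withDensity fun θ => ENNReal.ofReal (f θ))
    (u : ℝ → ℝ → ℝ)
    (hu_cont : ContinuousOn (fun p : ℝ × ℝ => u p.1 p.2) (Icc 0 A ×ˢ Icc θlow θhigh))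
    (hu_mono : ∀ θ ∈ Icc θlow θhigh, StrictMonoOn (fun x => u x θ) (Icc 0 A))
    (hu_conc : ∀ θ ∈ Icc θlow θhigh, StrictConcaveOn ℝ (Icc 0 A) fun x => u x θ)
    (hu_sid : ∀ x x' θ θ', 0 ≤ x → x < x' → x' ≤ A →
      θ ∈ Icc θlow θhigh → θ' ∈ Icc θlow θhigh → θ < θ' →
      u x' θ - u x θ < u x' θ' - u x θ')
    -- D p θ is the unique maximizer of x ↦ u x θ - p x over [0,A]
    (D : ℝ → ℝ → ℝ)
    (hD : ∀ p : ℝ, ∀ θ ∈ Icc θlow θhigh, D p θ ∈ Icc 0 A ∧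
      ∀ x ∈ Icc 0 A, x ≠ D p θ → u x θ - p * x < u (D p θ) θ - p * D p θ) :
    ∃ qf ∈ Icc (0:ℝ) A,
      (∀ q ∈ Qset θlow θhigh A,
        worst F u c (M0 F μ) q ≤ worst F u c (M0 F μ) (fun θ => max (D c θ) qf)) ∧
      (∀ q ∈ Qset θlow θhigh A,
        worst F u c (M0 F μ) q = worst F u c (M0 F μ) (fun θ => max (D c θ) qf) →
        q =ᵐ[F] fun θ => max (D c θ) qf) := by
  have hab : θlow ≤ θhigh := hθ.le
  set I : Set ℝ := Icc θlow θhigh with hIdef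
  set cl : ℝ → ℝ := clf θlow θhigh with hcldef
  have hcl_mem : ∀ θ, cl θ ∈ I := clf_mem hab
  have hcl_eq : ∀ θ ∈ I, cl θ = θ := fun θ hθ' => clf_eq hθ'
  -- Topkis: D c is monotone on I
  have hDmono : MonotoneOn (D c) I := by
    intro θ₁ h₁ θ₂ h₂ h12
    rcases eq_or_lt_of_le h12 with rfl | hlt
    · exact le_rfl
    by_contra hcon
    push_neg at hcon
    have hx1 := hD c θ₁ h₁
    have hx2 := hD c θ₂ h₂
    have e1 := hx1.2 (D c θ₂) hx2.1 (by intro h; rw [h] at hcon; exact lt_irrefl _ hcon)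
    have e2 := hx2.2 (D c θ₁) hx1.1 (by intro h; rw [h] at hcon; exact lt_irrefl _ hcon)
    have e3 := hu_sid (D c θ₂) (D c θ₁) θ₁ θ₂ hx2.1.1 hcon hx1.1.2 h₁ h₂ hlt
    linarith
  set d : ℝ → ℝ := fun θ => D c (cl θ) with hddef
  have hd_mem : ∀ θ, d θ ∈ Icc 0 A := fun θ => (hD c (cl θ) (hcl_mem θ)).1
  have hd_mono : Monotone d := fun x y hxy => hDmono (hcl_mem x) (hcl_mem y) (clf_mono hxy)
  have hd_meas : Measurable d := hd_mono.measurable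
  -- bound on u over the compact set
  have hKcomp : IsCompact (Icc (0:ℝ) A ×ˢ I) := isCompact_Icc.prod isCompact_Icc
  obtain ⟨C, hC⟩ := hKcomp.exists_bound_of_continuousOn hu_cont
  have hCb : ∀ x ∈ Icc (0:ℝ) A, ∀ τ ∈ I, |u x τ| ≤ C := by
    intro x hx τ hτ
    simpa using hC (x, τ) ⟨hx, hτ⟩
  -- measurability of compositions
  have humeas : ∀ g : ℝ → ℝ, Measurable g → (∀ θ, g θ ∈ Icc 0 A) →
      Measurable (fun θ => u (g θ) (cl θ)) := by
    intro g hg hgm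
    exact meas_of_continuousOn hu_cont (hg.prodMk clf_meas)
      (fun a => ⟨hgm a, hcl_mem a⟩)
  -- integrability of φ-type integrands
  have hint : ∀ g : ℝ → ℝ, Measurable g → (∀ θ, g θ ∈ Icc 0 A) →
      Integrable (fun θ => u (g θ) (cl θ) - c * g θ) F := by
    intro g hg hgm
    refine Integrable.mono' (integrable_const (C + c * A))
      ((humeas g hg hgm).sub ((measurable_const.mul hg))).aestronglyMeasurable ?_
    refine Filter.Eventually.of_forall (fun θ => ?_)
    have h1 : |u (g θ) (cl θ)| ≤ C := hCb _ (hgm θ) _ (hcl_mem θ)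
    have h2 : |c * g θ| ≤ c * A := by
      rw [abs_mul, abs_of_pos hc]
      have := (hgm θ).1; have := (hgm θ).2
      rw [abs_of_nonneg ‹0 ≤ g θ›]
      nlinarith
    calc ‖u (g θ) (cl θ) - c * g θ‖ ≤ |u (g θ) (cl θ)| + |c * g θ| := abs_sub _ _
      _ ≤ C + c * A := add_le_add h1 h2
  -- measure facts
  have hF_null : ∀ s : Set ℝ, MeasurableSet s → volume (s ∩ I) = 0 → F s = 0 := by
    intro s hs hvol
    rw [hF, withDensity_apply _ hs]
    rw [Measure.restrict_restrict hs, Measure.restrict_eq_zero.mpr hvol]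
    exact lintegral_zero_measure _
  have hae_Ioc : ∀ᵐ θ ∂F, θ ∈ Ioc θlow θhigh := by
    have h0 : F (Ioc θlow θhigh)ᶜ = 0 := by
      refine hF_null _ measurableSet_Ioc.compl ?_
      refine measure_mono_null (fun x hx => ?_) (Real.volume_singleton (a := θlow))
      obtain ⟨hx1, hx2⟩ := hx
      simp only [mem_compl_iff, mem_Ioc, not_and_or, not_lt, not_le] at hx1
      rcases hx1 with h | h
      · exact le_antisymm h hx2.1
      · exact absurd hx2.2 (not_le.mpr h)
    exact MeasureTheory.mem_ae_iff.mpr h0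
  have hF_pos : ∀ s : Set ℝ, MeasurableSet s → s ⊆ I → 0 < volume s → 0 < F s := by
    intro s hs hsI hvol
    obtain ⟨τ₀, hτ₀I, hτ₀min⟩ := isCompact_Icc.exists_isMinOn ((nonempty_Icc).mpr hab)
      hf_cont
    have hfmin : 0 < f τ₀ := hf_pos τ₀ hτ₀I
    rw [hF, withDensity_apply _ hs, Measure.restrict_restrict hs,
      inter_eq_self_of_subset_left hsI]
    have : ENNReal.ofReal (f τ₀) * volume s ≤ ∫⁻ a in s, ENNReal.ofReal (f a) ∂volume := by
      rw [← setLIntegral_const s (ENNReal.ofReal (f τ₀))]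
      refine lintegral_mono_ae ((ae_restrict_iff' hs).2 (Filter.Eventually.of_forall
        (fun x hx => ENNReal.ofReal_le_ofReal (hτ₀min (hsI hx)))))
    refine lt_of_lt_of_le ?_ this
    exact ENNReal.mul_pos (by simp [hfmin]) hvol.ne'
  -- the key formula for the worst-case value
  have worst_formula : ∀ q g : ℝ → ℝ, Monotone g → (∀ θ, g θ ∈ Icc 0 A) →
      (∀ θ ∈ I, q θ = g θ) →
      worst F u c (M0 F μ) q
        = (∫ θ, (u (g θ) (cl θ) - c * g θ) ∂F) + μ * sInf (g '' Ioc θlow θhigh) := by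
    intro q g hgmono hgmem hqg
    have hg_meas : Measurable g := hgmono.measurable
    have hg_int : Integrable g F := by
      refine Integrable.mono' (integrable_const A) hg_meas.aestronglyMeasurable
        (Filter.Eventually.of_forall (fun θ => ?_))
      rw [Real.norm_eq_abs, abs_of_nonneg (hgmem θ).1]
      exact (hgmem θ).2
    set T : ℝ := ∫ θ, (u (g θ) (cl θ) - c * g θ) ∂F with hTdef
    set b : ℝ := sInf (g '' Ioc θlow θhigh) with hbdef
    have hne : (g '' Ioc θlow θhigh).Nonempty :=
      ⟨g θhigh, mem_image_of_mem _ ⟨hθ, le_rfl⟩⟩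
    have hbdd : BddBelow (g '' Ioc θlow θhigh) := by
      refine ⟨0, ?_⟩
      rintro y ⟨x, -, rfl⟩
      exact (hgmem x).1
    have hgb : ∀ θ ∈ Ioc θlow θhigh, b ≤ g θ := fun θ hθ' =>
      csInf_le hbdd (mem_image_of_mem _ hθ')
    have hWeq : ∀ m ∈ M0 F μ, Integrable (fun θ => m θ * g θ) F ∧ Integrable m F ∧
        W F u c q m = T + ∫ θ, m θ * g θ ∂F := by
      rintro m ⟨hm_meas, hm_nonneg, hm_int⟩
      have hm_integrable : Integrable m F := by
        by_contra hni
        rw [integral_undef hni] at hm_int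
        exact hμ.ne' hm_int.symm
      have hmg_int : Integrable (fun θ => m θ * g θ) F := by
        refine Integrable.mono' (hm_integrable.const_mul A)
          ((hm_meas.mul hg_meas).aestronglyMeasurable)
          (Filter.Eventually.of_forall (fun θ => ?_))
        rw [Real.norm_eq_abs, abs_of_nonneg (mul_nonneg (hm_nonneg θ) (hgmem θ).1)]
        nlinarith [hm_nonneg θ, (hgmem θ).1, (hgmem θ).2]
      refine ⟨hmg_int, hm_integrable, ?_⟩
      have hcong : (fun θ => u (q θ) θ + (m θ - c) * q θ)
          =ᵐ[F] (fun θ => (u (g θ) (cl θ) - c * g θ) + m θ * g θ) := by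
        filter_upwards [hae_Ioc] with θ hθ'
        have hθI : θ ∈ I := Ioc_subset_Icc_self hθ'
        rw [hqg θ hθI, hcl_eq θ hθI]
        ring
      rw [W, integral_congr_ae hcong, integral_add (hint g hg_meas hgmem) hmg_int]
    have hlow : ∀ m ∈ M0 F μ, T + μ * b ≤ W F u c q m := by
      intro m hm
      obtain ⟨hmg_int, hm_integrable, hWm⟩ := hWeq m hm
      obtain ⟨hm_meas, hm_nonneg, hm_int⟩ := hm
      rw [hWm]
      have : b * μ ≤ ∫ θ, m θ * g θ ∂F := by
        have h1 : ∫ θ, b * m θ ∂F ≤ ∫ θ, m θ * g θ ∂F := by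
          refine integral_mono_ae (hm_integrable.const_mul b) hmg_int ?_
          filter_upwards [hae_Ioc] with θ hθ'
          nlinarith [hm_nonneg θ, hgb θ hθ']
        rw [integral_const_mul, hm_int] at h1
        exact h1
      nlinarith
    have hm0 : (fun _ : ℝ => μ) ∈ M0 F μ := by
      refine ⟨measurable_const, fun _ => hμ.le, ?_⟩
      simp [integral_const]
    have hSne : ((fun m => W F u c q m) '' M0 F μ).Nonempty :=
      ⟨_, mem_image_of_mem _ hm0⟩
    have hSbdd : BddBelow ((fun m => W F u c q m) '' M0 F μ) := by
      refine ⟨T + μ * b, ?_⟩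
      rintro y ⟨m, hm, rfl⟩
      exact hlow m hm
    refine le_antisymm ?_ (le_csInf hSne (by rintro y ⟨m, hm, rfl⟩; exact hlow m hm))
    refine le_of_forall_pos_le_add (fun ε hε => ?_)
    set ε' : ℝ := ε / μ with hε'def
    have hε' : 0 < ε' := div_pos hε hμ
    obtain ⟨y, hy, hylt⟩ := exists_lt_of_csInf_lt hne (lt_add_of_pos_right b hε')
    obtain ⟨θε, hθε, rfl⟩ := hy
    set E : Set ℝ := Ioc θlow θε with hEdef
    have hEmeas : MeasurableSet E := measurableSet_Ioc
    have hEsub : E ⊆ I := fun x hx => ⟨hx.1.le, hx.2.trans hθε.2⟩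
    have hFE : 0 < F E := by
      refine hF_pos E hEmeas hEsub ?_
      rw [Real.volume_Ioc]
      simp [hθε.1]
    have hFEne : F E ≠ ⊤ := measure_ne_top F E
    have hFEtop : 0 < (F E).toReal := ENNReal.toReal_pos hFE.ne' hFEne
    set k : ℝ := μ / (F E).toReal with hkdef
    have hk : 0 < k := div_pos hμ hFEtop
    set m : ℝ → ℝ := E.indicator (fun _ => k) with hmdef
    have hm_mem : m ∈ M0 F μ := by
      refine ⟨measurable_const.indicator hEmeas, fun θ => indicator_nonneg (fun _ _ => hk.le) θ, ?_⟩
      rw [hmdef, integral_indicator_const k hEmeas, smul_eq_mul, hkdef]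
      field_simp
      rfl
    obtain ⟨hmg_int, hm_integrable, hWm⟩ := hWeq m hm_mem
    have hmg : ∫ θ, m θ * g θ ∂F ≤ μ * b + ε := by
      have h1 : (fun θ => m θ * g θ) = fun θ => E.indicator (fun τ => k * g τ) θ := by
        funext θ
        rw [hmdef, ← Set.indicator_mul_left]
      have h2 : ∫ θ, m θ * g θ ∂F = k * ∫ θ in E, g θ ∂F := by
        rw [h1, integral_indicator hEmeas, integral_const_mul]
      have h3 : ∫ θ in E, g θ ∂F ≤ (b + ε') * (F E).toReal := by
        have := setIntegral_mono_on hg_int.integrableOn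
          (integrableOn_const hFEne : IntegrableOn (fun _ => b + ε') E F)
          hEmeas (fun x hx => le_of_lt (lt_of_le_of_lt (hgmono hx.2) hylt))
        rw [setIntegral_const, smul_eq_mul] at this
        rw [show F.real E = (F E).toReal from rfl] at this
        linarith [this]
      have h4 : k * ∫ θ in E, g θ ∂F ≤ k * ((b + ε') * (F E).toReal) :=
        mul_le_mul_of_nonneg_left h3 hk.le
      have h5 : k * ((b + ε') * (F E).toReal) = μ * (b + ε') := by
        rw [hkdef]
        field_simp
      have h6 : μ * (b + ε') = μ * b + ε := by
        rw [hε'def]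
        field_simp
      linarith [h2 ▸ h4, h5, h6]
    calc sInf ((fun m => W F u c q m) '' M0 F μ) ≤ W F u c q m :=
          csInf_le hSbdd (mem_image_of_mem _ hm_mem)
      _ = T + ∫ θ, m θ * g θ ∂F := hWm
      _ ≤ T + μ * b + ε := by linarith
  -- pointwise facts about x ↦ u x τ - c x
  have hphi_lt : ∀ τ ∈ I, ∀ x ∈ Icc (0:ℝ) A, x ≠ D c τ →
      u x τ - c*x < u (D c τ) τ - c * D c τ := fun τ hτ => (hD c τ hτ).2
  have hconc_mid : ∀ τ ∈ I, ∀ a b : ℝ, a ∈ Icc (0:ℝ) A → b ∈ Icc (0:ℝ) A → a ≠ b →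
      (u a τ - c*a + (u b τ - c*b))/2 < u ((a+b)/2) τ - c*((a+b)/2) := by
    intro τ hτ a b ha hb hab'
    have h := (hu_conc τ hτ).2 ha hb hab' (by norm_num : (0:ℝ) < 1/2)
      (by norm_num : (0:ℝ) < 1/2) (by norm_num)
    simp only [smul_eq_mul] at h
    have he : (1/2 : ℝ)*a + (1/2)*b = (a+b)/2 := by ring
    rw [he] at h
    linarith
  have hdec : ∀ τ ∈ I, ∀ s t : ℝ, D c τ ≤ s → s < t → t ≤ A →
      u t τ - c*t < u s τ - c*s := by
    intro τ hτ s t hds hst htA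
    have hdm := (hD c τ hτ).1
    have ht_mem : t ∈ Icc (0:ℝ) A := ⟨le_trans (le_trans hdm.1 hds) hst.le, htA⟩
    have hphi_t : u t τ - c*t < u (D c τ) τ - c*(D c τ) :=
      hphi_lt τ hτ t ht_mem (ne_of_gt (lt_of_le_of_lt hds hst))
    rcases eq_or_lt_of_le hds with heq | hlt
    · exact heq ▸ hphi_t
    · set L : ℝ := (t - s)/(t - D c τ) with hL
      have htd : 0 < t - D c τ := by linarith
      have hL0 : 0 < L := div_pos (by linarith) htd
      have hL1 : 0 < 1 - L := by
        rw [hL, sub_pos, div_lt_one htd]; linarith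
      have htd' : t - D c τ ≠ 0 := ne_of_gt htd
      have hcomb : L * (D c τ) + (1-L) * t = s := by
        rw [hL]
        field_simp
        ring
      have hcc := (hu_conc τ hτ).2 hdm ht_mem (ne_of_lt (lt_trans hlt hst))
        hL0 hL1 (by ring)
      simp only [smul_eq_mul] at hcc
      rw [hcomb] at hcc
      nlinarith [mul_pos hL0 (by linarith :
        (0:ℝ) < (u (D c τ) τ - c * D c τ) - (u t τ - c*t))]
  have hmax_upper : ∀ τ ∈ I, ∀ b' ∈ Icc (0:ℝ) A, ∀ x, b' ≤ x → x ≤ A → x ≠ max (D c τ) b' →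
      u x τ - c*x < u (max (D c τ) b') τ - c * max (D c τ) b' := by
    intro τ hτ b' hb' x hbx hxA hne'
    rcases le_or_gt b' (D c τ) with h | h
    · rw [max_eq_left h] at *
      exact hphi_lt τ hτ x ⟨le_trans hb'.1 hbx, hxA⟩ hne'
    · rw [max_eq_right h.le] at *
      exact hdec τ hτ b' x h.le (lt_of_le_of_ne hbx (Ne.symm hne')) hxA
  -- the one-dimensional objective V
  have hmaxmem : ∀ b' ∈ Icc (0:ℝ) A, ∀ θ, max (d θ) b' ∈ Icc (0:ℝ) A := fun b' hb' θ =>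
    ⟨le_trans (hd_mem θ).1 (le_max_left _ _), max_le (hd_mem θ).2 hb'.2⟩
  have hGint : ∀ b' ∈ Icc (0:ℝ) A,
      Integrable (fun θ => u (max (d θ) b') (cl θ) - c * max (d θ) b') F := fun b' hb' =>
    hint _ (hd_meas.max measurable_const) (hmaxmem b' hb')
  set V : ℝ → ℝ := fun b' =>
    (∫ θ, (u (max (d θ) b') (cl θ) - c * max (d θ) b') ∂F) + μ * b' with hVdef
  have hVcont : ContinuousOn V (Icc 0 A) := by
    have hucont2 : ContinuousOn (fun p : ℝ×ℝ => u p.1 p.2 - c * p.1) (Icc 0 A ×ˢ I) :=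
      hu_cont.sub ((continuous_const.mul continuous_fst).continuousOn)
    have hUC := hKcomp.uniformContinuousOn_of_continuous hucont2
    rw [Metric.uniformContinuousOn_iff] at hUC
    rw [Metric.continuousOn_iff]
    intro b hb ε hε
    obtain ⟨δ₀, hδ₀, hδ⟩ := hUC (ε/2) (by linarith)
    refine ⟨min δ₀ (ε/(2*(μ+1))), lt_min hδ₀ (by positivity), ?_⟩
    intro x hx hdist
    have hd1 : dist x b < δ₀ := lt_of_lt_of_le hdist (min_le_left _ _)
    have hd2 : dist x b < ε/(2*(μ+1)) := lt_of_lt_of_le hdist (min_le_right _ _)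
    have key : ∀ θ, ‖(u (max (d θ) x) (cl θ) - c * max (d θ) x)
        - (u (max (d θ) b) (cl θ) - c * max (d θ) b)‖ ≤ ε/2 := by
      intro θ
      have hp1 : ((max (d θ) x, cl θ) : ℝ×ℝ) ∈ Icc (0:ℝ) A ×ˢ I := ⟨hmaxmem x hx θ, hcl_mem θ⟩
      have hp2 : ((max (d θ) b, cl θ) : ℝ×ℝ) ∈ Icc (0:ℝ) A ×ˢ I := ⟨hmaxmem b hb θ, hcl_mem θ⟩
      have hdp : dist ((max (d θ) x, cl θ) : ℝ×ℝ) ((max (d θ) b, cl θ) : ℝ×ℝ) < δ₀ := by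
        rw [Prod.dist_eq]
        have h1 : dist (max (d θ) x) (max (d θ) b) ≤ dist x b := by
          rw [Real.dist_eq, Real.dist_eq, max_comm (d θ) x, max_comm (d θ) b]
          exact abs_max_sub_max_le_abs _ _ _
        have h2 : dist (cl θ) (cl θ) = 0 := dist_self _
        rw [h2]
        exact max_lt (lt_of_le_of_lt h1 hd1) hδ₀
      have := hδ _ hp1 _ hp2 hdp
      rw [Real.dist_eq] at this
      exact le_of_lt this
    have hib : ‖(∫ θ, (u (max (d θ) x) (cl θ) - c * max (d θ) x) ∂F)
        - ∫ θ, (u (max (d θ) b) (cl θ) - c * max (d θ) b) ∂F‖ ≤ ε/2 := by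
      rw [← integral_sub (hGint x hx) (hGint b hb)]
      have hni := norm_integral_le_of_norm_le_const (μ := F)
        (Filter.Eventually.of_forall key)
      simpa [measure_univ] using hni
    have hsplit : V x - V b = ((∫ θ, (u (max (d θ) x) (cl θ) - c * max (d θ) x) ∂F)
        - ∫ θ, (u (max (d θ) b) (cl θ) - c * max (d θ) b) ∂F) + μ * (x - b) := by
      simp only [hVdef]
      ring
    have habs2 : |μ * (x - b)| < ε/2 := by
      rw [abs_mul, abs_of_pos hμ]
      have hxb : |x - b| < ε/(2*(μ+1)) := by rw [← Real.dist_eq]; exact hd2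
      calc μ * |x-b| ≤ (μ+1) * |x-b| := by nlinarith [abs_nonneg (x-b)]
        _ < (μ+1) * (ε/(2*(μ+1))) := mul_lt_mul_of_pos_left hxb (by linarith)
        _ = ε/2 := by field_simp
    rw [Real.dist_eq]
    calc |V x - V b| ≤ ‖(∫ θ, (u (max (d θ) x) (cl θ) - c * max (d θ) x) ∂F)
          - ∫ θ, (u (max (d θ) b) (cl θ) - c * max (d θ) b) ∂F‖ + |μ * (x - b)| := by
          rw [hsplit]; exact abs_add_le _ _
      _ < ε/2 + ε/2 := add_lt_add_of_le_of_lt hib habs2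
      _ = ε := by ring
  obtain ⟨qf, hqf_mem, hqf_max⟩ := isCompact_Icc.exists_isMaxOn
    (nonempty_Icc.mpr hA.le) hVcont
  have hqf_ge : ∀ b' ∈ Icc (0:ℝ) A, V b' ≤ V qf := fun b' hb' => hqf_max hb'
  set G : ℝ → ℝ → ℝ := fun b' θ => u (max (d θ) b') (cl θ) - c * max (d θ) b' with hGdef
  have hGint' : ∀ b' ∈ Icc (0:ℝ) A, Integrable (G b') F := fun b' hb' => hGint b' hb'
  have hVG : ∀ b', V b' = (∫ θ, G b' θ ∂F) + μ * b' := fun b' => rfl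
  -- the infimum of d over (θlow, θhigh]
  set d0 : ℝ := sInf (d '' Ioc θlow θhigh) with hd0def
  have hdne : (d '' Ioc θlow θhigh).Nonempty := ⟨d θhigh, mem_image_of_mem _ ⟨hθ, le_rfl⟩⟩
  have hdbdd : BddBelow (d '' Ioc θlow θhigh) := by
    refine ⟨0, ?_⟩; rintro y ⟨x, -, rfl⟩; exact (hd_mem x).1
  have hd0mem : d0 ∈ Icc (0:ℝ) A := by
    constructor
    · refine le_csInf hdne ?_
      rintro y ⟨x, -, rfl⟩; exact (hd_mem x).1
    · exact le_trans (csInf_le hdbdd (mem_image_of_mem _ ⟨hθ, le_rfl⟩)) (hd_mem θhigh).2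
  have hd0le : ∀ θ ∈ Ioc θlow θhigh, d0 ≤ d θ := fun θ hθ' =>
    csInf_le hdbdd (mem_image_of_mem _ hθ')
  have hd0qf : d0 ≤ qf := by
    by_contra hcon
    push_neg at hcon
    have heqint : (∫ θ, G qf θ ∂F) = ∫ θ, G d0 θ ∂F := by
      refine integral_congr_ae ?_
      filter_upwards [hae_Ioc] with θ hθ'
      simp only [hGdef]
      rw [max_eq_left (le_trans hcon.le (hd0le θ hθ')), max_eq_left (hd0le θ hθ')]
    have hVd0 : V d0 = V qf + μ * (d0 - qf) := by
      rw [hVG, hVG, heqint]; ring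
    have := hqf_ge d0 hd0mem
    nlinarith
  -- the floored allocation
  have hq0mono : Monotone (fun θ => max (d θ) qf) := fun x y h =>
    max_le_max (hd_mono h) le_rfl
  have hq0mem : ∀ θ, max (d θ) qf ∈ Icc (0:ℝ) A := hmaxmem qf hqf_mem
  have hq0eq : ∀ θ ∈ I, max (D c θ) qf = max (d θ) qf := by
    intro θ hθ'
    simp only [hddef]
    rw [hcl_eq θ hθ']
  have hq0bdd : BddBelow ((fun θ => max (d θ) qf) '' Ioc θlow θhigh) := by
    refine ⟨qf, ?_⟩; rintro y ⟨x, -, rfl⟩; exact le_max_right _ _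
  have hq0inf : sInf ((fun θ => max (d θ) qf) '' Ioc θlow θhigh) = qf := by
    refine le_antisymm ?_ ?_
    · refine le_of_forall_pos_le_add (fun ε hε => ?_)
      obtain ⟨y, ⟨θ₁, hθ₁, rfl⟩, hylt⟩ := exists_lt_of_csInf_lt hdne
        (lt_add_of_pos_right d0 hε)
      refine le_trans (csInf_le hq0bdd (mem_image_of_mem _ hθ₁)) ?_
      exact max_le (by linarith [hd0qf]) (by linarith)
    · refine le_csInf ⟨max (d θhigh) qf, mem_image_of_mem _ ⟨hθ, le_rfl⟩⟩ ?_
      rintro y ⟨x, -, rfl⟩; exact le_max_right _ _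
  have hworst_q0 : worst F u c (M0 F μ) (fun θ => max (D c θ) qf) = V qf := by
    rw [worst_formula (fun θ => max (D c θ) qf) (fun θ => max (d θ) qf)
      hq0mono hq0mem hq0eq, hq0inf, hVG]
  -- pointwise comparison lemma for G
  have hGpt : ∀ b1 b2 : ℝ, b1 ∈ Icc (0:ℝ) A → b2 ∈ Icc (0:ℝ) A → b1 < b2 → ∀ θ,
      (G b2 θ ≤ G b1 θ) ∧ (d θ < b2 → (G b1 θ + G b2 θ)/2 < G ((b1+b2)/2) θ) ∧
      (b2 ≤ d θ → G b1 θ = G b2 θ ∧ G ((b1+b2)/2) θ = G b2 θ) := by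
    intro b1 b2 hb1 hb2 h12 θ
    have hτ : cl θ ∈ I := hcl_mem θ
    have hddτ : d θ = D c (cl θ) := rfl
    have hmid12 : b1 < (b1+b2)/2 := by linarith
    have hmid21 : (b1+b2)/2 < b2 := by linarith
    have hmidmem : (b1+b2)/2 ∈ Icc (0:ℝ) A := ⟨by linarith [hb1.1, hb2.1], by linarith [hb1.2, hb2.2]⟩
    refine ⟨?_, ?_, ?_⟩
    · -- G b2 ≤ G b1
      rcases eq_or_ne (max (d θ) b2) (max (d θ) b1) with he | hne'
      · simp only [hGdef]; rw [he]
      · have := hmax_upper (cl θ) hτ b1 hb1 (max (d θ) b2)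
          (le_trans h12.le (le_max_right _ _)) (max_le (hd_mem θ).2 hb2.2)
          (by rw [← hddτ]; exact hne')
        simp only [hGdef]
        rw [hddτ] at this ⊢
        exact this.le
    · -- strict midpoint improvement when d θ < b2
      intro hdb2
      by_cases hd1 : d θ ≤ b1
      · have h1 : max (d θ) b1 = b1 := max_eq_right hd1
        have h2 : max (d θ) b2 = b2 := max_eq_right (by linarith)
        have h3 : max (d θ) ((b1+b2)/2) = (b1+b2)/2 := max_eq_right (by linarith)
        have := hconc_mid (cl θ) hτ b1 b2 hb1 hb2 (ne_of_lt h12)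
        simp only [hGdef]
        rw [h1, h2, h3]
        linarith
      · push_neg at hd1
        have h1 : max (d θ) b1 = d θ := max_eq_left hd1.le
        have h2 : max (d θ) b2 = b2 := max_eq_right hdb2.le
        rcases le_or_gt (d θ) ((b1+b2)/2) with hmid | hmid
        · have h3 : max (d θ) ((b1+b2)/2) = (b1+b2)/2 := max_eq_right hmid
          have hp := hconc_mid (cl θ) hτ (d θ) b2 (hd_mem θ) hb2
            (by rw [hddτ] at hdb2 ⊢; exact ne_of_lt hdb2)
          have hcmp : u ((d θ+b2)/2) (cl θ) - c*((d θ+b2)/2)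
              ≤ u ((b1+b2)/2) (cl θ) - c*((b1+b2)/2) := by
            rcases eq_or_lt_of_le (show (b1+b2)/2 ≤ (d θ+b2)/2 by linarith) with he | hlt2
            · rw [← he]
            · refine le_of_lt (hdec (cl θ) hτ ((b1+b2)/2) ((d θ+b2)/2) ?_ hlt2 ?_)
              · rw [← hddτ]; exact hmid
              · have := (hd_mem θ).2; have := hb2.2; linarith
          simp only [hGdef]
          rw [h1, h2, h3, hddτ] at *
          linarith
        · have h3 : max (d θ) ((b1+b2)/2) = d θ := max_eq_left hmid.le
          have hlt : u b2 (cl θ) - c*b2 < u (d θ) (cl θ) - c*(d θ) := by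
            rw [hddτ]
            exact hphi_lt (cl θ) hτ b2 hb2 (by rw [hddτ] at hdb2; exact ne_of_gt hdb2)
          simp only [hGdef]
          rw [h1, h2, h3]
          linarith
    · -- equalities when b2 ≤ d θ
      intro hdb2
      have h1 : max (d θ) b1 = d θ := max_eq_left (by linarith)
      have h2 : max (d θ) b2 = d θ := max_eq_left hdb2
      have h3 : max (d θ) ((b1+b2)/2) = d θ := max_eq_left (by linarith)
      simp only [hGdef]
      rw [h1, h2, h3]
      exact ⟨rfl, rfl⟩
  -- uniqueness of the optimal floor
  have huniq_b : ∀ b' ∈ Icc (0:ℝ) A, V b' = V qf → b' = qf := by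
    have htwo : ∀ b1 b2 : ℝ, b1 ∈ Icc (0:ℝ) A → b2 ∈ Icc (0:ℝ) A → b1 < b2 →
        V b1 = V qf → V b2 = V qf → False := by
      intro b1 b2 hb1 hb2 h12 hV1 hV2
      have hmidmem : (b1+b2)/2 ∈ Icc (0:ℝ) A :=
        ⟨by linarith [hb1.1, hb2.1], by linarith [hb1.2, hb2.2]⟩
      have hk_val : (∫ θ, (G b1 θ - G b2 θ) ∂F) = μ * (b2 - b1) := by
        rw [integral_sub (hGint' b1 hb1) (hGint' b2 hb2)]
        have e1 : (∫ θ, G b1 θ ∂F) = V b1 - μ*b1 := by rw [hVG]; ring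
        have e2 : (∫ θ, G b2 θ ∂F) = V b2 - μ*b2 := by rw [hVG]; ring
        rw [e1, e2, hV1, hV2]; ring
      have hsum_int : Integrable (fun θ => (G b1 θ + G b2 θ)/2) F :=
        ((hGint' b1 hb1).add (hGint' b2 hb2)).div_const 2
      have hh_int : Integrable (fun θ => G ((b1+b2)/2) θ - (G b1 θ + G b2 θ)/2) F :=
        (hGint' _ hmidmem).sub hsum_int
      have hh_nonneg : ∀ θ, 0 ≤ G ((b1+b2)/2) θ - (G b1 θ + G b2 θ)/2 := by
        intro θ
        rcases lt_or_ge (d θ) b2 with hlt | hge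
        · linarith [(hGpt b1 b2 hb1 hb2 h12 θ).2.1 hlt]
        · obtain ⟨he1, he2⟩ := (hGpt b1 b2 hb1 hb2 h12 θ).2.2 hge
          rw [he1, he2]; ring_nf; exact le_rfl
      have hh_val : (∫ θ, (G ((b1+b2)/2) θ - (G b1 θ + G b2 θ)/2) ∂F)
          = V ((b1+b2)/2) - V qf := by
        rw [integral_sub (hGint' _ hmidmem) hsum_int]
        have hsum_val : (∫ θ, (G b1 θ + G b2 θ)/2 ∂F)
            = ((∫ θ, G b1 θ ∂F) + ∫ θ, G b2 θ ∂F)/2 := by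
          rw [integral_div, integral_add (hGint' b1 hb1) (hGint' b2 hb2)]
        rw [hsum_val]
        have e1 : (∫ θ, G b1 θ ∂F) = V b1 - μ*b1 := by rw [hVG]; ring
        have e2 : (∫ θ, G b2 θ ∂F) = V b2 - μ*b2 := by rw [hVG]; ring
        have e3 : (∫ θ, G ((b1+b2)/2) θ ∂F) = V ((b1+b2)/2) - μ*((b1+b2)/2) := by
          rw [hVG]; ring
        rw [e1, e2, e3, hV1, hV2]; ring
      have hh_le : (∫ θ, (G ((b1+b2)/2) θ - (G b1 θ + G b2 θ)/2) ∂F) ≤ 0 := by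
        rw [hh_val]
        linarith [hqf_ge ((b1+b2)/2) hmidmem]
      have hh_ge : 0 ≤ (∫ θ, (G ((b1+b2)/2) θ - (G b1 θ + G b2 θ)/2) ∂F) :=
        integral_nonneg hh_nonneg
      have hh_zero : (fun θ => G ((b1+b2)/2) θ - (G b1 θ + G b2 θ)/2) =ᵐ[F] 0 :=
        (integral_eq_zero_iff_of_nonneg_ae (Filter.Eventually.of_forall hh_nonneg)
          hh_int).mp (le_antisymm hh_le hh_ge)
      have hk_zero : (fun θ => G b1 θ - G b2 θ) =ᵐ[F] 0 := by
        filter_upwards [hh_zero] with θ hθ'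
        simp only [Pi.zero_apply] at hθ' ⊢
        rcases lt_or_ge (d θ) b2 with hlt | hge
        · exfalso
          have := (hGpt b1 b2 hb1 hb2 h12 θ).2.1 hlt
          linarith
        · obtain ⟨he1, -⟩ := (hGpt b1 b2 hb1 hb2 h12 θ).2.2 hge
          rw [he1]; ring
      have : (∫ θ, (G b1 θ - G b2 θ) ∂F) = 0 := by
        rw [integral_congr_ae hk_zero]
        simp
      rw [hk_val] at this
      nlinarith
    intro b' hb' hVb'
    rcases lt_trichotomy b' qf with h | h | h
    · exact (htwo b' qf hb' hqf_mem h hVb' rfl).elim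
    · exact h
    · exact (htwo qf b' hqf_mem hb' h rfl hVb').elim
  refine ⟨qf, hqf_mem, ?_, ?_⟩
  · -- part 1 : qf-floored allocation is worst-case optimal
    rintro q ⟨hqmono, hqmem⟩
    set g : ℝ → ℝ := fun θ => q (cl θ) with hgdef
    have hgmono : Monotone g := fun x y hxy => hqmono (hcl_mem x) (hcl_mem y) (clf_mono hxy)
    have hgmem : ∀ θ, g θ ∈ Icc (0:ℝ) A := fun θ => hqmem (cl θ) (hcl_mem θ)
    have hqg : ∀ θ ∈ I, q θ = g θ := by
      intro θ hθ'
      simp only [hgdef]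
      rw [hcl_eq θ hθ']
    have hwq := worst_formula q g hgmono hgmem hqg
    set bq : ℝ := sInf (g '' Ioc θlow θhigh) with hbqdef
    have hbq_bdd : BddBelow (g '' Ioc θlow θhigh) := by
      refine ⟨0, ?_⟩; rintro y ⟨x, -, rfl⟩; exact (hgmem x).1
    have hbq_mem : bq ∈ Icc (0:ℝ) A := by
      constructor
      · refine le_csInf ⟨g θhigh, mem_image_of_mem _ ⟨hθ, le_rfl⟩⟩ ?_
        rintro y ⟨x, -, rfl⟩; exact (hgmem x).1
      · exact le_trans (csInf_le hbq_bdd (mem_image_of_mem _ ⟨hθ, le_rfl⟩)) (hgmem θhigh).2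
    have hgbq : ∀ θ ∈ Ioc θlow θhigh, bq ≤ g θ := fun θ hθ' =>
      csInf_le hbq_bdd (mem_image_of_mem _ hθ')
    have hptle : ∀ᵐ θ ∂F, u (g θ) (cl θ) - c * g θ ≤ G bq θ := by
      filter_upwards [hae_Ioc] with θ hθ'
      rcases eq_or_ne (g θ) (max (d θ) bq) with he | hne'
      · simp only [hGdef]; rw [he]
      · have := hmax_upper (cl θ) (hcl_mem θ) bq hbq_mem (g θ) (hgbq θ hθ')
          (hgmem θ).2 hne'
        simp only [hGdef]
        exact this.le
    have hIle : (∫ θ, (u (g θ) (cl θ) - c * g θ) ∂F) ≤ ∫ θ, G bq θ ∂F :=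
      integral_mono_ae (hint g hgmono.measurable hgmem) (hGint' bq hbq_mem) hptle
    rw [hwq, hworst_q0]
    have h1 : (∫ θ, G bq θ ∂F) + μ * bq = V bq := (hVG bq).symm
    linarith [hqf_ge bq hbq_mem]
  · -- part 2 : uniqueness
    rintro q ⟨hqmono, hqmem⟩ heq
    set g : ℝ → ℝ := fun θ => q (cl θ) with hgdef
    have hgmono : Monotone g := fun x y hxy => hqmono (hcl_mem x) (hcl_mem y) (clf_mono hxy)
    have hgmem : ∀ θ, g θ ∈ Icc (0:ℝ) A := fun θ => hqmem (cl θ) (hcl_mem θ)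
    have hqg : ∀ θ ∈ I, q θ = g θ := by
      intro θ hθ'
      simp only [hgdef]
      rw [hcl_eq θ hθ']
    have hwq := worst_formula q g hgmono hgmem hqg
    set bq : ℝ := sInf (g '' Ioc θlow θhigh) with hbqdef
    have hbq_bdd : BddBelow (g '' Ioc θlow θhigh) := by
      refine ⟨0, ?_⟩; rintro y ⟨x, -, rfl⟩; exact (hgmem x).1
    have hbq_mem : bq ∈ Icc (0:ℝ) A := by
      constructor
      · refine le_csInf ⟨g θhigh, mem_image_of_mem _ ⟨hθ, le_rfl⟩⟩ ?_
        rintro y ⟨x, -, rfl⟩; exact (hgmem x).1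
      · exact le_trans (csInf_le hbq_bdd (mem_image_of_mem _ ⟨hθ, le_rfl⟩)) (hgmem θhigh).2
    have hgbq : ∀ θ ∈ Ioc θlow θhigh, bq ≤ g θ := fun θ hθ' =>
      csInf_le hbq_bdd (mem_image_of_mem _ hθ')
    have hptle : ∀ᵐ θ ∂F, u (g θ) (cl θ) - c * g θ ≤ G bq θ := by
      filter_upwards [hae_Ioc] with θ hθ'
      rcases eq_or_ne (g θ) (max (d θ) bq) with he | hne'
      · simp only [hGdef]; rw [he]
      · have := hmax_upper (cl θ) (hcl_mem θ) bq hbq_mem (g θ) (hgbq θ hθ')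
          (hgmem θ).2 hne'
        simp only [hGdef]
        exact this.le
    have hIle : (∫ θ, (u (g θ) (cl θ) - c * g θ) ∂F) ≤ ∫ θ, G bq θ ∂F :=
      integral_mono_ae (hint g hgmono.measurable hgmem) (hGint' bq hbq_mem) hptle
    rw [hwq, hworst_q0] at heq
    have hVbq : V bq = V qf := by
      refine le_antisymm (hqf_ge bq hbq_mem) ?_
      rw [hVG bq]
      linarith
    have hbq_eq : bq = qf := huniq_b bq hbq_mem hVbq
    rw [hbq_eq] at hgbq hptle hIle heq
    have hsub_int : Integrable (fun θ => G qf θ - (u (g θ) (cl θ) - c * g θ)) F :=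
      (hGint' qf hqf_mem).sub (hint g hgmono.measurable hgmem)
    have hzero_int : (∫ θ, (G qf θ - (u (g θ) (cl θ) - c * g θ)) ∂F) = 0 := by
      rw [integral_sub (hGint' qf hqf_mem) (hint g hgmono.measurable hgmem)]
      have e1 : (∫ θ, G qf θ ∂F) = V qf - μ * qf := by rw [hVG]; ring
      rw [e1]
      linarith
    have hptnn : 0 ≤ᵐ[F] fun θ => G qf θ - (u (g θ) (cl θ) - c * g θ) := by
      filter_upwards [hptle] with θ hθ'
      simp only [Pi.zero_apply]
      linarith
    have hae0 := (integral_eq_zero_iff_of_nonneg_ae hptnn hsub_int).mp hzero_int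
    filter_upwards [hae0, hae_Ioc] with θ h0 hθ'
    have hθI : θ ∈ I := Ioc_subset_Icc_self hθ'
    show q θ = max (D c θ) qf
    rw [hqg θ hθI, hq0eq θ hθI]
    by_contra hne'
    have hgt := hmax_upper (cl θ) (hcl_mem θ) qf hqf_mem (g θ) (hgbq θ hθ')
      (hgmem θ).2 hne'
    simp only [Pi.zero_apply, hGdef] at h0
    linarith
end
end

section
/- (Theorem 2(a): positive correlation favors a uniform subsidy.) The allocation q₊*(θ) := D(c − μ, θ) belongs to Q and maximizes the worst-case total surplus under the positive-correlation benchmark: for every q ∈ Q, inf over m ∈ M₊ of W(q,m) is at most inf over m ∈ M₊ of W(q₊*, m); moreover, any q ∈ Q attaining this maximal worst-case value satisfies q = q₊* F-almost everywhere. -/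
open MeasureTheory Set

noncomputable section

/-- The positive-correlation ambiguity set: nondecreasing members of `M₀`. -/
def Mplus (θlow θhigh : ℝ) (F : Measure ℝ) (μ : ℝ) : Set (ℝ → ℝ) :=
  {m ∈ M0 F μ | MonotoneOn m (Icc θlow θhigh)}

/-- **Theorem 2(a).** Under the positive-correlation benchmark the allocation
`q₊*(θ) = D (c - μ) θ` (a uniform subsidy `μ`) belongs to `Q`, maximizes the worst-case
total surplus, and is the F-a.e. unique maximizer. -/
theorem positive_correlation_uniform_subsidy
    (θlow θhigh A c μ : ℝ) (hθlow : 0 ≤ θlow) (hθ : θlow < θhigh)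
    (hA : 0 < A) (hc : 0 < c) (hμ : 0 < μ)
    (F : Measure ℝ) [IsProbabilityMeasure F]
    (f : ℝ → ℝ) (hf_cont : ContinuousOn f (Icc θlow θhigh))
    (hf_pos : ∀ θ ∈ Icc θlow θhigh, 0 < f θ)
    (hF : F = (volume.restrict (Icc θlow θhigh)).withDensity fun θ => ENNReal.ofReal (f θ))
    (u : ℝ → ℝ → ℝ)
    (hu_cont : ContinuousOn (fun p : ℝ × ℝ => u p.1 p.2) (Icc 0 A ×ˢ Icc θlow θhigh))
    (hu_mono : ∀ θ ∈ Icc θlow θhigh, StrictMonoOn (fun x => u x θ) (Icc 0 A))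
    (hu_conc : ∀ θ ∈ Icc θlow θhigh, StrictConcaveOn ℝ (Icc 0 A) fun x => u x θ)
    (hu_sid : ∀ x x' θ θ', 0 ≤ x → x < x' → x' ≤ A →
      θ ∈ Icc θlow θhigh → θ' ∈ Icc θlow θhigh → θ < θ' →
      u x' θ - u x θ < u x' θ' - u x θ')
    (D : ℝ → ℝ → ℝ)
    (hD : ∀ p : ℝ, ∀ θ ∈ Icc θlow θhigh, D p θ ∈ Icc 0 A ∧
      ∀ x ∈ Icc 0 A, x ≠ D p θ → u x θ - p * x < u (D p θ) θ - p * D p θ) :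
    (fun θ => D (c - μ) θ) ∈ Qset θlow θhigh A ∧
    (∀ q ∈ Qset θlow θhigh A,
      worst F u c (Mplus θlow θhigh F μ) q ≤
        worst F u c (Mplus θlow θhigh F μ) (fun θ => D (c - μ) θ)) ∧
    (∀ q ∈ Qset θlow θhigh A,
      worst F u c (Mplus θlow θhigh F μ) q =
        worst F u c (Mplus θlow θhigh F μ) (fun θ => D (c - μ) θ) →
      q =ᵐ[F] fun θ => D (c - μ) θ) := by
  have hKmeas : MeasurableSet (Icc θlow θhigh) := measurableSet_Icc
  set K : Set ℝ := Icc θlow θhigh with hKdef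
  set qs : ℝ → ℝ := fun θ => D (c - μ) θ with hqsdef
  set mc : ℝ → ℝ := fun _ => μ with hmcdef
  -- absolute continuity and a.e. membership in K
  have hac : F ≪ volume.restrict K := by
    rw [hF]; exact withDensity_absolutelyContinuous _ _
  have haeK : ∀ᵐ θ ∂F, θ ∈ K := by
    have h0 : (volume.restrict K) Kᶜ = 0 := by
      rw [Measure.restrict_apply hKmeas.compl]
      simp
    exact Filter.eventually_iff.mpr (mem_ae_iff.mpr (hac h0))
  -- bound for u on the compact rectangle
  obtain ⟨B, hB⟩ := (isCompact_Icc.prod isCompact_Icc).exists_bound_of_continuousOn hu_cont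
  -- Tietze extension of u
  have hSclosed : IsClosed (Icc (0:ℝ) A ×ˢ K) := isClosed_Icc.prod isClosed_Icc
  obtain ⟨U, hU⟩ := ContinuousMap.exists_restrict_eq hSclosed
    ⟨(Icc (0:ℝ) A ×ˢ K).restrict (fun p : ℝ × ℝ => u p.1 p.2), hu_cont.restrict⟩
  have hUeq : ∀ z ∈ Icc (0:ℝ) A ×ˢ K, U z = u z.1 z.2 :=
    fun z hz => DFunLike.congr_fun hU ⟨z, hz⟩
  -- q* is in Qset
  have hqsQ : qs ∈ Qset θlow θhigh A := by
    constructor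
    · intro a ha b hb hab
      rcases eq_or_lt_of_le hab with rfl | hlt
      · exact le_refl _
      by_contra hcon
      push_neg at hcon
      have h1 := (hD (c - μ) a ha).2 (qs b) (hD (c - μ) b hb).1 (ne_of_lt hcon)
      have h2 := (hD (c - μ) b hb).2 (qs a) (hD (c - μ) a ha).1 (ne_of_gt hcon)
      have h3 := hu_sid (qs b) (qs a) a b (hD (c - μ) b hb).1.1 hcon
        (hD (c - μ) a ha).1.2 ha hb hlt
      simp only [hqsdef] at h1 h2 h3
      linarith
    · exact fun θ hθ' => (hD (c - μ) θ hθ').1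
  -- the constant function μ is in Mplus
  have hmcM : mc ∈ Mplus θlow θhigh F μ := by
    refine ⟨⟨measurable_const, fun _ => le_of_lt hμ, ?_⟩, monotoneOn_const⟩
    simp [hmcdef]
  -- a.e. measurability and integrability facts
  have haemq : ∀ q ∈ Qset θlow θhigh A, AEMeasurable q F :=
    fun q hq => (aemeasurable_restrict_of_monotoneOn hKmeas hq.1).mono_ac hac
  have hIq : ∀ q ∈ Qset θlow θhigh A, Integrable q F := by
    intro q hq
    refine (integrable_const A).mono' (haemq q hq).aestronglyMeasurable ?_
    filter_upwards [haeK] with θ hθ'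
    rw [Real.norm_eq_abs, abs_of_nonneg (hq.2 θ hθ').1]
    exact (hq.2 θ hθ').2
  have hIu : ∀ q ∈ Qset θlow θhigh A, Integrable (fun θ => u (q θ) θ) F := by
    intro q hq
    have h1 : AEMeasurable (fun θ => (q θ, θ)) F :=
      (haemq q hq).prodMk aemeasurable_id
    have h2 : AEMeasurable (fun θ => U (q θ, θ)) F :=
      U.continuous.measurable.comp_aemeasurable h1
    have h3 : AEMeasurable (fun θ => u (q θ) θ) F := by
      refine h2.congr ?_
      filter_upwards [haeK] with θ hθ'
      exact hUeq (q θ, θ) ⟨hq.2 θ hθ', hθ'⟩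
    refine (integrable_const B).mono' h3.aestronglyMeasurable ?_
    filter_upwards [haeK] with θ hθ'
    exact hB (q θ, θ) ⟨hq.2 θ hθ', hθ'⟩
  have hImInt : ∀ m ∈ M0 F μ, Integrable m F := by
    intro m hm
    by_contra hcon
    have h3 := hm.2.2
    rw [integral_undef hcon] at h3
    linarith
  have hImq : ∀ q ∈ Qset θlow θhigh A, ∀ m ∈ M0 F μ,
      Integrable (fun θ => m θ * q θ) F := by
    intro q hq m hm
    refine ((hImInt m hm).const_mul A).mono'
      ((hm.1.aemeasurable.mul (haemq q hq)).aestronglyMeasurable) ?_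
    filter_upwards [haeK] with θ hθ'
    rw [Real.norm_eq_abs, abs_mul, abs_of_nonneg (hm.2.1 θ),
      abs_of_nonneg (hq.2 θ hθ').1]
    calc m θ * q θ ≤ m θ * A := mul_le_mul_of_nonneg_left (hq.2 θ hθ').2 (hm.2.1 θ)
      _ = A * m θ := mul_comm _ _
  -- decomposition of W
  have hWeq : ∀ q ∈ Qset θlow θhigh A, ∀ m ∈ M0 F μ,
      W F u c q m = (∫ θ, u (q θ) θ ∂F) + (∫ θ, m θ * q θ ∂F) - c * ∫ θ, q θ ∂F := by
    intro q hq m hm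
    rw [W]
    have h1 : ∀ θ, u (q θ) θ + (m θ - c) * q θ
        = (u (q θ) θ + m θ * q θ) + (-c) * q θ := by intro θ; ring
    have hfg : Integrable (fun θ => u (q θ) θ + m θ * q θ) F :=
      (hIu q hq).add (hImq q hq m hm)
    have hcq : Integrable (fun θ => -c * q θ) F := (hIq q hq).const_mul (-c)
    simp_rw [h1]
    rw [integral_add hfg hcq, integral_add (hIu q hq) (hImq q hq m hm),
      integral_const_mul]
    ring
  -- W with the constant m = μ
  have hWc : ∀ q : ℝ → ℝ, W F u c q mc = ∫ θ, (u (q θ) θ + (μ - c) * q θ) ∂F := by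
    intro q; rfl
  have hIgc : ∀ q ∈ Qset θlow θhigh A,
      Integrable (fun θ => u (q θ) θ + (μ - c) * q θ) F :=
    fun q hq => (hIu q hq).add ((hIq q hq).const_mul (μ - c))
  -- pointwise optimality of qs for the integrand with m = μ
  have hpt : ∀ θ ∈ K, ∀ x ∈ Icc (0:ℝ) A,
      u x θ + (μ - c) * x ≤ u (qs θ) θ + (μ - c) * qs θ := by
    intro θ hθ' x hx
    rcases eq_or_ne x (qs θ) with rfl | hne
    · exact le_refl _
    · have := (hD (c - μ) θ hθ').2 x hx hne
      simp only [hqsdef] at this ⊢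
      nlinarith [this]
  have hptstrict : ∀ θ ∈ K, ∀ x ∈ Icc (0:ℝ) A, x ≠ qs θ →
      u x θ + (μ - c) * x < u (qs θ) θ + (μ - c) * qs θ := by
    intro θ hθ' x hx hne
    have := (hD (c - μ) θ hθ').2 x hx hne
    simp only [hqsdef] at this ⊢
    nlinarith [this]
  -- FKG / Chebyshev inequality: for monotone m, ∫ m qs ≥ μ ∫ qs
  have hFKG : ∀ m ∈ Mplus θlow θhigh F μ,
      μ * (∫ θ, qs θ ∂F) ≤ ∫ θ, m θ * qs θ ∂F := by
    intro m hm
    have hIm := hImInt m hm.1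
    have hIqs := hIq qs hqsQ
    have hImqs := hImq qs hqsQ m hm.1
    have hinner : ∀ x ∈ K,
        ∫ y, (m x - m y) * (qs x - qs y) ∂F
          = m x * qs x - m x * (∫ θ, qs θ ∂F) - qs x * μ + ∫ θ, m θ * qs θ ∂F := by
      intro x hx
      have h1 : ∀ y, (m x - m y) * (qs x - qs y)
          = (m x * qs x) + ((-(m x)) * qs y + ((-(qs x)) * m y + m y * qs y)) := by
        intro y; ring
      have hc1 : Integrable (fun y => (-(m x)) * qs y) F := hIqs.const_mul _
      have hc2 : Integrable (fun y => (-(qs x)) * m y) F := hIm.const_mul _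
      have hc3 : Integrable (fun y => (-(qs x)) * m y + m y * qs y) F := hc2.add hImqs
      have hc4 : Integrable
          (fun y => (-(m x)) * qs y + ((-(qs x)) * m y + m y * qs y)) F := hc1.add hc3
      simp_rw [h1]
      rw [integral_add (integrable_const _) hc4, integral_add hc1 hc3,
        integral_add hc2 hImqs]
      simp only [integral_const, measure_univ, probReal_univ, ENNReal.toReal_one, one_smul,
        integral_const_mul]
      rw [hm.1.2.2]
      ring
    have hinner_nonneg : ∀ x ∈ K,
        0 ≤ ∫ y, (m x - m y) * (qs x - qs y) ∂F := by
      intro x hx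
      refine integral_nonneg_of_ae ?_
      filter_upwards [haeK] with y hy
      simp only [Pi.zero_apply]
      rcases le_total x y with hxy | hxy
      · have h1 := hm.2 hx hy hxy
        have h2 := hqsQ.1 hx hy hxy
        nlinarith [mul_nonneg (sub_nonneg.2 h1) (sub_nonneg.2 h2)]
      · have h1 := hm.2 hy hx hxy
        have h2 := hqsQ.1 hy hx hxy
        nlinarith [mul_nonneg (sub_nonneg.2 h1) (sub_nonneg.2 h2)]
    have houter : 0 ≤ ∫ x, (m x * qs x - m x * (∫ θ, qs θ ∂F) - qs x * μ
        + ∫ θ, m θ * qs θ ∂F) ∂F := by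
      refine integral_nonneg_of_ae ?_
      filter_upwards [haeK] with x hx
      simp only [Pi.zero_apply]
      rw [← hinner x hx]
      exact hinner_nonneg x hx
    have hcalc : ∫ x, (m x * qs x - m x * (∫ θ, qs θ ∂F) - qs x * μ
        + ∫ θ, m θ * qs θ ∂F) ∂F
        = 2 * ((∫ θ, m θ * qs θ ∂F) - μ * ∫ θ, qs θ ∂F) := by
      have h1 : ∀ x, m x * qs x - m x * (∫ θ, qs θ ∂F) - qs x * μ
          + ∫ θ, m θ * qs θ ∂F
          = (m x * qs x) + ((-(∫ θ, qs θ ∂F)) * m x + ((-μ) * qs x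
            + ∫ θ, m θ * qs θ ∂F)) := by intro x; ring
      have hc1 : Integrable (fun x => (-(∫ θ, qs θ ∂F)) * m x) F := hIm.const_mul _
      have hc2 : Integrable (fun x => (-μ) * qs x + ∫ θ, m θ * qs θ ∂F) F :=
        (hIqs.const_mul _).add (integrable_const _)
      have hc3 : Integrable (fun x => (-(∫ θ, qs θ ∂F)) * m x
          + ((-μ) * qs x + ∫ θ, m θ * qs θ ∂F)) F := hc1.add hc2
      simp_rw [h1]
      rw [integral_add hImqs hc3, integral_add hc1 hc2,
        integral_add (hIqs.const_mul _) (integrable_const _)]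
      simp only [integral_const, measure_univ, probReal_univ, ENNReal.toReal_one, one_smul,
        integral_const_mul]
      rw [hm.1.2.2]
      ring
    rw [hcalc] at houter
    linarith
  -- the worst-case set is nonempty and bounded below
  have hne : ∀ q : ℝ → ℝ, ((fun m => W F u c q m) '' Mplus θlow θhigh F μ).Nonempty :=
    fun q => ⟨W F u c q mc, mc, hmcM, rfl⟩
  have hbdd : ∀ q ∈ Qset θlow θhigh A,
      BddBelow ((fun m => W F u c q m) '' Mplus θlow θhigh F μ) := by
    intro q hq
    refine ⟨-B - c * A, ?_⟩
    rintro w ⟨m, hm, rfl⟩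
    dsimp only
    rw [hWeq q hq m hm.1]
    have h1 : -B ≤ ∫ θ, u (q θ) θ ∂F := by
      have := integral_mono_ae (integrable_const (-B)) (hIu q hq) ?_
      · simpa using this
      · filter_upwards [haeK] with θ hθ'
        have := hB (q θ, θ) ⟨hq.2 θ hθ', hθ'⟩
        rw [Real.norm_eq_abs] at this
        exact neg_le_of_abs_le this
    have h2 : 0 ≤ ∫ θ, m θ * q θ ∂F := by
      refine integral_nonneg_of_ae ?_
      filter_upwards [haeK] with θ hθ'
      simp only [Pi.zero_apply]
      exact mul_nonneg (hm.1.2.1 θ) (hq.2 θ hθ').1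
    have h3 : ∫ θ, q θ ∂F ≤ A := by
      have := integral_mono_ae (hIq q hq) (integrable_const A) ?_
      · simpa using this
      · filter_upwards [haeK] with θ hθ'
        exact (hq.2 θ hθ').2
    nlinarith
  -- worst q ≤ W q mc
  have hupper : ∀ q ∈ Qset θlow θhigh A,
      worst F u c (Mplus θlow θhigh F μ) q ≤ W F u c q mc :=
    fun q hq => csInf_le (hbdd q hq) ⟨mc, hmcM, rfl⟩
  -- worst qs = W qs mc (lower bound part)
  have hlowqs : W F u c qs mc ≤ worst F u c (Mplus θlow θhigh F μ) qs := by
    refine le_csInf (hne qs) ?_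
    rintro w ⟨m, hm, rfl⟩
    dsimp only
    rw [hWeq qs hqsQ m hm.1, hWeq qs hqsQ mc hmcM.1]
    have h1 : ∫ θ, mc θ * qs θ ∂F = μ * ∫ θ, qs θ ∂F := by
      simp only [hmcdef]
      rw [integral_const_mul]
    rw [h1]
    have := hFKG m hm
    linarith
  -- pointwise comparison W q mc ≤ W qs mc
  have hWle : ∀ q ∈ Qset θlow θhigh A, W F u c q mc ≤ W F u c qs mc := by
    intro q hq
    rw [hWc q, hWc qs]
    refine integral_mono_ae (hIgc q hq) (hIgc qs hqsQ) ?_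
    filter_upwards [haeK] with θ hθ'
    exact hpt θ hθ' (q θ) (hq.2 θ hθ')
  refine ⟨hqsQ, ?_, ?_⟩
  · intro q hq
    calc worst F u c (Mplus θlow θhigh F μ) q ≤ W F u c q mc := hupper q hq
      _ ≤ W F u c qs mc := hWle q hq
      _ ≤ worst F u c (Mplus θlow θhigh F μ) qs := hlowqs
  · intro q hq heq
    -- all quantities coincide
    have h1 : W F u c q mc = W F u c qs mc := by
      have ha := hupper q hq
      have hb := hupper qs hqsQ
      have hcq := hWle q hq
      rw [heq] at ha
      linarith
    -- integral of the nonnegative gap is zero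
    have hgap : ∫ θ, ((u (qs θ) θ + (μ - c) * qs θ) - (u (q θ) θ + (μ - c) * q θ)) ∂F
        = 0 := by
      rw [integral_sub (hIgc qs hqsQ) (hIgc q hq)]
      rw [hWc q, hWc qs] at h1
      linarith
    have hIsub : Integrable
        (fun θ => (u (qs θ) θ + (μ - c) * qs θ) - (u (q θ) θ + (μ - c) * q θ)) F :=
      (hIgc qs hqsQ).sub (hIgc q hq)
    have hnn : 0 ≤ᵐ[F]
        fun θ => (u (qs θ) θ + (μ - c) * qs θ) - (u (q θ) θ + (μ - c) * q θ) := by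
      filter_upwards [haeK] with θ hθ'
      have := hpt θ hθ' (q θ) (hq.2 θ hθ')
      simp only [Pi.zero_apply]
      linarith
    have hgapae := (integral_eq_zero_iff_of_nonneg_ae hnn hIsub).mp hgap
    filter_upwards [haeK, hgapae] with θ hθ' hz
    by_contra hne'
    have := hptstrict θ hθ' (q θ) (hq.2 θ hθ') hne'
    simp only [Pi.zero_apply] at hz
    linarith
end
end

section
/- (Theorem 2(b): negative correlation favors a quantity floor.) There exists q̲ ∈ [0,A] such that, setting q₋*(θ) := max{q^LF(θ), q̲}: for every q ∈ Q, inf over m ∈ M₋ of W(q,m) is at most inf over m ∈ M₋ of W(q₋*, m); moreover, any q ∈ Q attaining this maximal worst-case value satisfies q = q₋* F-almost everywhere, and q₋* coincides with the optimal allocation under the unknown-correlation benchmark (using M₀ in place of M₋). -/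
open MeasureTheory Set

noncomputable section
open scoped ENNReal

private lemma strictConcaveOn_congr' {s : Set ℝ} {f g : ℝ → ℝ}
    (h : StrictConcaveOn ℝ s f) (he : ∀ x ∈ s, f x = g x) : StrictConcaveOn ℝ s g :=
  ⟨h.1, fun x hx y hy hne a b ha hb hab => by
    rw [← he x hx, ← he y hy, ← he _ (h.1 hx hy ha.le hb.le hab)]
    exact h.2 hx hy hne ha hb hab⟩

private lemma strictConcave_shift {A c : ℝ} {v : ℝ → ℝ}
    (hv : StrictConcaveOn ℝ (Icc 0 A) v) :
    StrictConcaveOn ℝ (Icc 0 A) (fun x => v x - c * x) := by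
  refine ⟨convex_Icc _ _, ?_⟩
  intro x hx y hy hne a b ha hb hab
  have h := hv.2 hx hy hne ha hb hab
  simp only [smul_eq_mul] at *
  nlinarith

/-- strictly concave with strict max at d is strictly decreasing to the right of d -/
private lemma psi_strict_anti {A : ℝ} {ψ : ℝ → ℝ} {d : ℝ}
    (hconc : StrictConcaveOn ℝ (Icc 0 A) ψ) (hd : d ∈ Icc 0 A)
    (hmax : ∀ x ∈ Icc 0 A, x ≠ d → ψ x < ψ d)
    {y x : ℝ} (hy : d ≤ y) (hyx : y < x) (hx : x ≤ A) : ψ x < ψ y := by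
  rcases eq_or_lt_of_le hy with rfl | hdy
  · exact hmax x ⟨hd.1.trans (hy.trans hyx.le), hx⟩ (by rintro rfl; exact lt_irrefl _ hyx)
  · have hxI : x ∈ Icc 0 A := ⟨hd.1.trans (hy.trans hyx.le), hx⟩
    have hxd : ψ x < ψ d := hmax x hxI (by rintro rfl; exact absurd hdy (not_lt.2 hyx.le))
    set a : ℝ := (x - y) / (x - d) with ha_def
    set b : ℝ := (y - d) / (x - d) with hb_def
    have hxd0 : (0:ℝ) < x - d := by linarith
    have ha : 0 < a := div_pos (by linarith) hxd0
    have hb : 0 < b := div_pos (by linarith) hxd0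
    have hab : a + b = 1 := by rw [ha_def, hb_def]; field_simp; ring
    have hcomb : a • d + b • x = y := by
      rw [ha_def, hb_def, smul_eq_mul, smul_eq_mul]
      field_simp
      ring
    have h := hconc.2 hd hxI (by intro h; rw [h] at hdy; linarith) ha hb hab
    rw [hcomb, smul_eq_mul, smul_eq_mul] at h
    have e1 : a * ψ x + b * ψ x = ψ x := by rw [← add_mul, hab, one_mul]
    have e2 : a * ψ x ≤ a * ψ d := mul_le_mul_of_nonneg_left hxd.le ha.le
    linarith

/-- key pointwise inequality: for x ∈ [b,A], ψ x ≤ ψ (max d b), strict unless x = max d b -/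
private lemma key_ineq {A : ℝ} {ψ : ℝ → ℝ} {d b x : ℝ}
    (hconc : StrictConcaveOn ℝ (Icc 0 A) ψ) (hd : d ∈ Icc 0 A)
    (hmax : ∀ y ∈ Icc 0 A, y ≠ d → ψ y < ψ d)
    (hb0 : 0 ≤ b) (hbx : b ≤ x) (hxA : x ≤ A) (hne : x ≠ max d b) :
    ψ x < ψ (max d b) := by
  rcases le_or_gt b d with hbd | hdb
  · rw [max_eq_left hbd] at hne ⊢
    exact hmax x ⟨hb0.trans hbx, hxA⟩ hne
  · rw [max_eq_right hdb.le] at hne ⊢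
    exact psi_strict_anti hconc hd hmax hdb.le (lt_of_le_of_ne hbx (Ne.symm hne)) hxA

private lemma key_ineq_le {A : ℝ} {ψ : ℝ → ℝ} {d b x : ℝ}
    (hconc : StrictConcaveOn ℝ (Icc 0 A) ψ) (hd : d ∈ Icc 0 A)
    (hmax : ∀ y ∈ Icc 0 A, y ≠ d → ψ y < ψ d)
    (hb0 : 0 ≤ b) (hbx : b ≤ x) (hxA : x ≤ A) :
    ψ x ≤ ψ (max d b) := by
  rcases eq_or_ne x (max d b) with rfl | hne
  · exact le_refl _
  · exact (key_ineq hconc hd hmax hb0 hbx hxA hne).le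

/-- midpoint concavity for b ↦ ψ (max d b), strict when d < b' -/
private lemma mid_ineq {A : ℝ} {ψ : ℝ → ℝ} {d b b' : ℝ}
    (hconc : StrictConcaveOn ℝ (Icc 0 A) ψ) (hd : d ∈ Icc 0 A)
    (hmax : ∀ y ∈ Icc 0 A, y ≠ d → ψ y < ψ d)
    (hb0 : 0 ≤ b) (hbb' : b < b') (hb'A : b' ≤ A) :
    (ψ (max d b) + ψ (max d b')) / 2 ≤ ψ (max d ((b + b') / 2)) ∧
    (d < b' → (ψ (max d b) + ψ (max d b')) / 2 < ψ (max d ((b + b') / 2))) := by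
  set t : ℝ := (b + b') / 2 with ht_def
  have htb : b < t := by rw [ht_def]; linarith
  have htb' : t < b' := by rw [ht_def]; linarith
  rcases le_or_gt b' d with hb'd | hdb'
  · -- d ≥ b' : all maxes are d
    rw [max_eq_left (hbb'.le.trans hb'd), max_eq_left hb'd, max_eq_left (htb'.le.trans hb'd)]
    constructor
    · linarith
    · intro h; linarith
  · have hstrict : (ψ (max d b) + ψ (max d b')) / 2 < ψ (max d t) := by
      rw [max_eq_right hdb'.le]
      have hb'I : b' ∈ Icc 0 A := ⟨hb0.trans hbb'.le, hb'A⟩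
      have hψb' : ψ b' < ψ d := hmax b' hb'I (by rintro rfl; exact lt_irrefl _ hdb')
      rcases le_or_gt b d with hbd | hdb
      · -- b ≤ d < b'
        rw [max_eq_left hbd]
        rcases le_or_gt t d with htd | hdt
        · rw [max_eq_left htd]; linarith
        · rw [max_eq_right hdt.le]
          set a : ℝ := (b' - t) / (b' - d) with ha_def
          set e : ℝ := (t - d) / (b' - d) with he_def
          have hden : (0:ℝ) < b' - d := by linarith
          have ha : 0 < a := div_pos (by linarith) hden
          have he : 0 < e := div_pos (by linarith) hden
          have hae : a + e = 1 := by rw [ha_def, he_def]; field_simp; ring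
          have hcomb : a • d + e • b' = t := by
            rw [ha_def, he_def, smul_eq_mul, smul_eq_mul]; field_simp; ring
          have h := hconc.2 hd hb'I (by intro h; rw [h] at hdb'; linarith) ha he hae
          rw [hcomb, smul_eq_mul, smul_eq_mul] at h
          -- a ≥ 1/2 since t ≤ (d+b')/2 (because b ≤ d)
          have ha2 : (1:ℝ)/2 ≤ a := by
            rw [ha_def, le_div_iff₀ hden, ht_def]; linarith
          have e2 : (a - 1/2) * ψ b' ≤ (a - 1/2) * ψ d :=
            mul_le_mul_of_nonneg_left hψb'.le (by linarith)
          have e3 : e * ψ b' = ψ b' - a * ψ b' := by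
            have : e = 1 - a := by linarith
            rw [this]; ring
          have e4 : (a - 1/2) * ψ b' = a * ψ b' - ψ b'/2 := by ring
          have e5 : (a - 1/2) * ψ d = a * ψ d - ψ d/2 := by ring
          linarith
      · -- d < b < b'
        rw [max_eq_right hdb.le, max_eq_right (hdb.trans htb).le]
        have hbI : b ∈ Icc 0 A := ⟨hb0, hbb'.le.trans hb'A⟩
        have h := hconc.2 hbI hb'I hbb'.ne (by norm_num : (0:ℝ) < 1/2) (by norm_num : (0:ℝ) < 1/2) (by norm_num)
        simp only [smul_eq_mul] at h
        have : (1:ℝ)/2 * b + 1/2 * b' = t := by rw [ht_def]; ring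
        rw [this] at h
        linarith
    exact ⟨hstrict.le, fun _ => hstrict⟩



/-- The negative-correlation ambiguity set: nonincreasing members of `M₀`. -/
def Mminus (θlow θhigh : ℝ) (F : Measure ℝ) (μ : ℝ) : Set (ℝ → ℝ) :=
  {m ∈ M0 F μ | AntitoneOn m (Icc θlow θhigh)}

/-- **Theorem 2(b).** Under the negative-correlation benchmark there is a
quantity floor `q̲ ∈ [0,A]` so that `q₋*(θ) = max (q^LF θ) q̲` maximizes the worst-case total
surplus, is the F-a.e. unique maximizer, and coincides with the optimal allocation under the
unknown-correlation benchmark. -/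
theorem negative_correlation_quantity_floor
    (θlow θhigh A c μ : ℝ) (hθlow : 0 ≤ θlow) (hθ : θlow < θhigh)
    (hA : 0 < A) (hc : 0 < c) (hμ : 0 < μ)
    (F : Measure ℝ) [IsProbabilityMeasure F]
    (f : ℝ → ℝ) (hf_cont : ContinuousOn f (Icc θlow θhigh))
    (hf_pos : ∀ θ ∈ Icc θlow θhigh, 0 < f θ)
    (hF : F = (volume.restrict (Icc θlow θhigh)).withDensity fun θ => ENNReal.ofReal (f θ))
    (u : ℝ → ℝ → ℝ)
    (hu_cont : ContinuousOn (fun p : ℝ × ℝ => u p.1 p.2) (Icc 0 A ×ˢ Icc θlow θhigh))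
    (hu_mono : ∀ θ ∈ Icc θlow θhigh, StrictMonoOn (fun x => u x θ) (Icc 0 A))
    (hu_conc : ∀ θ ∈ Icc θlow θhigh, StrictConcaveOn ℝ (Icc 0 A) fun x => u x θ)
    (hu_sid : ∀ x x' θ θ', 0 ≤ x → x < x' → x' ≤ A →
      θ ∈ Icc θlow θhigh → θ' ∈ Icc θlow θhigh → θ < θ' →
      u x' θ - u x θ < u x' θ' - u x θ')
    (D : ℝ → ℝ → ℝ)
    (hD : ∀ p : ℝ, ∀ θ ∈ Icc θlow θhigh, D p θ ∈ Icc 0 A ∧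
      ∀ x ∈ Icc 0 A, x ≠ D p θ → u x θ - p * x < u (D p θ) θ - p * D p θ) :
    ∃ qf ∈ Icc (0:ℝ) A,
      (∀ q ∈ Qset θlow θhigh A,
        worst F u c (Mminus θlow θhigh F μ) q ≤
          worst F u c (Mminus θlow θhigh F μ) (fun θ => max (D c θ) qf)) ∧
      (∀ q ∈ Qset θlow θhigh A,
        worst F u c (Mminus θlow θhigh F μ) q =
          worst F u c (Mminus θlow θhigh F μ) (fun θ => max (D c θ) qf) →
        q =ᵐ[F] fun θ => max (D c θ) qf) ∧
      -- the same allocation is optimal under the unknown-correlation benchmark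
      (∀ q ∈ Qset θlow θhigh A,
        worst F u c (M0 F μ) q ≤ worst F u c (M0 F μ) (fun θ => max (D c θ) qf)) ∧
      (∀ q ∈ Qset θlow θhigh A,
        worst F u c (M0 F μ) q = worst F u c (M0 F μ) (fun θ => max (D c θ) qf) →
        q =ᵐ[F] fun θ => max (D c θ) qf) := by
  have hθθ : θlow ≤ θhigh := hθ.le
  -- clamps
  set cθ : ℝ → ℝ := fun θ => max θlow (min θ θhigh) with hcθ
  have cθmono : Monotone cθ := fun a b hab => max_le_max le_rfl (min_le_min hab le_rfl)
  have cθmem : ∀ θ, cθ θ ∈ Icc θlow θhigh :=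
    fun θ => ⟨le_max_left _ _, max_le hθθ (min_le_right _ _)⟩
  have cθid : ∀ θ ∈ Icc θlow θhigh, cθ θ = θ := by
    intro θ hθ'
    simp only [hcθ]
    rw [min_eq_left hθ'.2, max_eq_right hθ'.1]
  have cθcont : Continuous cθ := continuous_const.max (continuous_id.min continuous_const)
  set cx : ℝ → ℝ := fun x => max 0 (min x A) with hcx
  have cxmem : ∀ x, cx x ∈ Icc 0 A := fun x => ⟨le_max_left _ _, max_le hA.le (min_le_right _ _)⟩
  have cxid : ∀ x ∈ Icc 0 A, cx x = x := by
    intro x hx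
    simp only [hcx]
    rw [min_eq_left hx.2, max_eq_right hx.1]
  have cxcont : Continuous cx := continuous_const.max (continuous_id.min continuous_const)
  -- clamped utility
  set U : ℝ × ℝ → ℝ := fun p => u (cx p.1) (cθ p.2) with hU
  have Ucont : Continuous U := by
    have : U = (fun p : ℝ × ℝ => u p.1 p.2) ∘ (fun p : ℝ × ℝ => (cx p.1, cθ p.2)) := rfl
    rw [this]
    exact hu_cont.comp_continuous
      ((cxcont.comp continuous_fst).prodMk (cθcont.comp continuous_snd))
      (fun p => mk_mem_prod (cxmem _) (cθmem _))
  have Ueq : ∀ x ∈ Icc 0 A, ∀ θ ∈ Icc θlow θhigh, U (x, θ) = u x θ := by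
    intro x hx θ hθ'
    simp only [hU]
    rw [cxid x hx, cθid θ hθ']
  obtain ⟨C, hC⟩ : ∃ C, ∀ p, |U p| ≤ C := by
    obtain ⟨C, hC⟩ := (isCompact_Icc.prod isCompact_Icc).exists_bound_of_continuousOn hu_cont
    exact ⟨C, fun p => by
      simpa [Real.norm_eq_abs] using hC (cx p.1, cθ p.2) (mk_mem_prod (cxmem _) (cθmem _))⟩
  -- net utility
  set φ : ℝ → ℝ → ℝ := fun x θ => U (x, θ) - c * x with hφ
  have φbound : ∀ x θ, x ∈ Icc 0 A → |φ x θ| ≤ C + c * A := by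
    intro x θ hx
    simp only [hφ]
    have h1 := hC (x, θ)
    have h2 : |c * x| ≤ c * A := by
      rw [abs_mul, abs_of_pos hc, abs_of_nonneg hx.1]
      exact mul_le_mul_of_nonneg_left hx.2 hc.le
    calc |U (x, θ) - c * x| ≤ |U (x, θ)| + |c * x| := abs_sub _ _
      _ ≤ C + c * A := add_le_add h1 h2
  -- the laissez-faire allocation, clamped
  have Dmono : ∀ θ ∈ Icc θlow θhigh, ∀ θ' ∈ Icc θlow θhigh, θ ≤ θ' → D c θ ≤ D c θ' := by
    intro θ hθ1 θ' hθ2 hle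
    rcases eq_or_lt_of_le hle with rfl | hlt
    · exact le_rfl
    by_contra hcon
    push_neg at hcon
    have h1 := (hD c θ hθ1).2 (D c θ') (hD c θ' hθ2).1 hcon.ne
    have h2 := (hD c θ' hθ2).2 (D c θ) (hD c θ hθ1).1 hcon.ne'
    have h3 := hu_sid (D c θ') (D c θ) θ θ' (hD c θ' hθ2).1.1 hcon (hD c θ hθ1).1.2 hθ1 hθ2 hlt
    linarith
  set d : ℝ → ℝ := fun θ => D c (cθ θ) with hd
  have dKeq : ∀ θ ∈ Icc θlow θhigh, d θ = D c θ := by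
    intro θ hθ'; simp only [hd]; rw [cθid θ hθ']
  have dI : ∀ θ, d θ ∈ Icc 0 A := fun θ => (hD c (cθ θ) (cθmem θ)).1
  have dmono : Monotone d := fun a b hab => Dmono _ (cθmem a) _ (cθmem b) (cθmono hab)
  have dmeas : Measurable d := dmono.measurable
  have φconc : ∀ θ ∈ Icc θlow θhigh, StrictConcaveOn ℝ (Icc 0 A) (fun x => φ x θ) := by
    intro θ hθ'
    have h1 : StrictConcaveOn ℝ (Icc 0 A) (fun x => U (x, θ)) :=
      strictConcaveOn_congr' (hu_conc θ hθ') (fun x hx => (Ueq x hx θ hθ').symm)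
    exact strictConcave_shift h1
  have φmax : ∀ θ ∈ Icc θlow θhigh, ∀ x ∈ Icc 0 A, x ≠ d θ → φ x θ < φ (d θ) θ := by
    intro θ hθ' x hx hne
    rw [dKeq θ hθ'] at hne ⊢
    have h := (hD c θ hθ').2 x hx hne
    simp only [hφ]
    rw [Ueq x hx θ hθ', Ueq (D c θ) (hD c θ hθ').1 θ hθ']
    linarith
  -- measure facts
  have hFc : F (Icc θlow θhigh)ᶜ = 0 := by
    rw [hF, withDensity_apply _ measurableSet_Icc.compl]
    apply setLIntegral_measure_zero
    rw [Measure.restrict_apply measurableSet_Icc.compl, compl_inter_self]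
    exact measure_empty
  have aeK : ∀ᵐ θ ∂F, θ ∈ Icc θlow θhigh := by
    rw [ae_iff]
    exact hFc
  have hFlow : F {θlow} = 0 := by
    rw [hF, withDensity_apply _ (measurableSet_singleton θlow)]
    apply setLIntegral_measure_zero
    refine le_antisymm ?_ zero_le
    rw [Measure.restrict_apply (measurableSet_singleton θlow)]
    calc volume ({θlow} ∩ Icc θlow θhigh) ≤ volume {θlow} := measure_mono inter_subset_left
      _ = 0 := Real.volume_singleton
  have aeIoc : ∀ᵐ θ ∂F, θ ∈ Ioc θlow θhigh := by
    have h2 : ∀ᵐ θ ∂F, θ ∉ ({θlow} : Set ℝ) := by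
      rw [ae_iff]
      simpa using hFlow
    filter_upwards [aeK, h2] with θ h1 h2
    exact ⟨lt_of_le_of_ne h1.1 (fun h => h2 (by simp [← h])), h1.2⟩
  obtain ⟨ε, hε, hεf⟩ : ∃ ε > 0, ∀ θ ∈ Icc θlow θhigh, ε ≤ f θ := by
    obtain ⟨θ0, hθ0, hmin⟩ := isCompact_Icc.exists_isMinOn (nonempty_Icc.2 hθθ) hf_cont
    exact ⟨f θ0, hf_pos θ0 hθ0, fun θ hθ' => hmin hθ'⟩
  have Fpos : ∀ t, θlow < t → 0 < F (Iic t) := by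
    intro t ht
    rw [hF, withDensity_apply _ measurableSet_Iic, Measure.restrict_restrict measurableSet_Iic]
    have hsub : Icc θlow (min t θhigh) ⊆ Iic t ∩ Icc θlow θhigh := by
      intro x hx
      exact ⟨hx.2.trans (min_le_left _ _), hx.1, hx.2.trans (min_le_right _ _)⟩
    have h1 : ∫⁻ θ in Iic t ∩ Icc θlow θhigh, ENNReal.ofReal ε ∂volume ≤
        ∫⁻ θ in Iic t ∩ Icc θlow θhigh, ENNReal.ofReal (f θ) ∂volume := by
      apply setLIntegral_mono' (measurableSet_Iic.inter measurableSet_Icc)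
      intro θ hθ'
      exact ENNReal.ofReal_le_ofReal (hεf θ hθ'.2)
    have hvpos : (0:ℝ≥0∞) < volume (Iic t ∩ Icc θlow θhigh) := by
      refine lt_of_lt_of_le ?_ (measure_mono hsub)
      rw [Real.volume_Icc, ENNReal.ofReal_pos, sub_pos]
      exact lt_min ht hθ
    have h2 : (0:ℝ≥0∞) < ENNReal.ofReal ε * volume (Iic t ∩ Icc θlow θhigh) :=
      ENNReal.mul_pos (ENNReal.ofReal_pos.2 hε).ne' hvpos.ne'
    calc (0:ℝ≥0∞) < ENNReal.ofReal ε * volume (Iic t ∩ Icc θlow θhigh) := h2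
      _ = ∫⁻ θ in Iic t ∩ Icc θlow θhigh, ENNReal.ofReal ε ∂volume := by
          rw [setLIntegral_const, mul_comm]
      _ ≤ _ := h1
  -- integrability of members of M0
  have M0int : ∀ m ∈ M0 F μ, Integrable m F := by
    intro m hm
    by_contra h
    have h3 := hm.2.2
    rw [integral_undef h] at h3
    exact hμ.ne' h3.symm
  -- monotone extension of q ∈ Qset
  have qext : ∀ q ∈ Qset θlow θhigh A, ∃ q' : ℝ → ℝ, Monotone q' ∧
      (∀ θ ∈ Icc θlow θhigh, q' θ = q θ) ∧ (∀ θ, q' θ ∈ Icc 0 A) := by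
    intro q hq
    exact ⟨fun θ => q (cθ θ), fun a b hab => hq.1 (cθmem a) (cθmem b) (cθmono hab),
      fun θ hθ' => by simp only []; rw [cθid θ hθ'], fun θ => hq.2 _ (cθmem _)⟩
  -- measurability and integrability for q ∈ Qset
  have qint : ∀ q ∈ Qset θlow θhigh A, AEStronglyMeasurable q F ∧ Integrable q F := by
    intro q hq
    obtain ⟨q', hq'mono, hq'eq, hq'I⟩ := qext q hq
    have haeq : q' =ᵐ[F] q := by
      filter_upwards [aeK] with θ hθ'
      exact hq'eq θ hθ'
    have hsm : AEStronglyMeasurable q F :=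
      (hq'mono.measurable.aestronglyMeasurable).congr haeq
    refine ⟨hsm, ?_⟩
    apply Integrable.mono' (integrable_const A) hsm
    filter_upwards [aeK] with θ hθ'
    rw [Real.norm_eq_abs, abs_of_nonneg (hq.2 θ hθ').1]
    exact (hq.2 θ hθ').2
  have φqint : ∀ q ∈ Qset θlow θhigh A,
      AEStronglyMeasurable (fun θ => φ (q θ) θ) F ∧ Integrable (fun θ => φ (q θ) θ) F := by
    intro q hq
    obtain ⟨q', hq'mono, hq'eq, hq'I⟩ := qext q hq
    have hmeas : Measurable (fun θ => φ (q' θ) θ) := by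
      simp only [hφ]
      exact (Ucont.measurable.comp (hq'mono.measurable.prodMk measurable_id)).sub
        (hq'mono.measurable.const_mul c)
    have haeq : (fun θ => φ (q' θ) θ) =ᵐ[F] (fun θ => φ (q θ) θ) := by
      filter_upwards [aeK] with θ hθ'
      rw [hq'eq θ hθ']
    have hsm : AEStronglyMeasurable (fun θ => φ (q θ) θ) F :=
      hmeas.aestronglyMeasurable.congr haeq
    refine ⟨hsm, ?_⟩
    apply Integrable.mono' (integrable_const (C + c * A)) hsm
    filter_upwards [aeK] with θ hθ'
    rw [Real.norm_eq_abs]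
    exact φbound _ _ (hq.2 θ hθ')
  -- the infimum of q over (θlow, θhigh]
  set bfn : (ℝ → ℝ) → ℝ := fun q => sInf (q '' Ioc θlow θhigh) with hbfn
  set Gfn : (ℝ → ℝ) → ℝ := fun q => ∫ θ, φ (q θ) θ ∂F with hGfn
  have Iocne : (Ioc θlow θhigh).Nonempty := nonempty_Ioc.2 hθ
  have qbdd : ∀ q ∈ Qset θlow θhigh A, BddBelow (q '' Ioc θlow θhigh) := by
    rintro q hq
    refine ⟨0, ?_⟩
    rintro x ⟨θ, hθ', rfl⟩
    exact (hq.2 θ ⟨hθ'.1.le, hθ'.2⟩).1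
  have bfnI : ∀ q ∈ Qset θlow θhigh A, bfn q ∈ Icc 0 A := by
    intro q hq
    constructor
    · exact le_csInf (Iocne.image q) (by rintro x ⟨θ, hθ', rfl⟩; exact (hq.2 θ ⟨hθ'.1.le, hθ'.2⟩).1)
    · exact le_trans (csInf_le (qbdd q hq) ⟨θhigh, ⟨hθ, le_rfl⟩, rfl⟩)
        (hq.2 θhigh ⟨hθθ, le_rfl⟩).2
  have bfnle : ∀ q ∈ Qset θlow θhigh A, ∀ θ ∈ Ioc θlow θhigh, bfn q ≤ q θ :=
    fun q hq θ hθ' => csInf_le (qbdd q hq) ⟨θ, hθ', rfl⟩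
  have bfnlt : ∀ q ∈ Qset θlow θhigh A, ∀ ε > 0, ∃ θ ∈ Ioc θlow θhigh, q θ < bfn q + ε := by
    intro q hq ε hε
    have h := (csInf_lt_iff (qbdd q hq) (Iocne.image q)).1 (show sInf (q '' Ioc θlow θhigh) < bfn q + ε by simp only [hbfn]; linarith)
    obtain ⟨x, ⟨θ', hθ', rfl⟩, hx⟩ := h
    exact ⟨θ', hθ', hx⟩
  -- splitting W
  have Wsplit : ∀ q ∈ Qset θlow θhigh A, ∀ m ∈ M0 F μ,
      Integrable (fun θ => m θ * q θ) F ∧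
      W F u c q m = Gfn q + ∫ θ, m θ * q θ ∂F := by
    intro q hq m hm
    obtain ⟨q', hq'mono, hq'eq, hq'I⟩ := qext q hq
    have him : Integrable m F := M0int m hm
    have hintmq : Integrable (fun θ => m θ * q θ) F := by
      have h1 : Integrable (fun θ => q' θ * m θ) F := by
        apply him.bdd_mul (c := A) hq'mono.measurable.aestronglyMeasurable
        exact Filter.Eventually.of_forall (fun θ => by
          rw [Real.norm_eq_abs, abs_of_nonneg (hq'I θ).1]; exact (hq'I θ).2)
      apply h1.congr
      filter_upwards [aeK] with θ hθ'
      rw [hq'eq θ hθ', mul_comm]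
    refine ⟨hintmq, ?_⟩
    have hae : ∀ᵐ θ ∂F, u (q θ) θ + (m θ - c) * q θ = φ (q θ) θ + m θ * q θ := by
      filter_upwards [aeK] with θ hθ'
      have hUe : U (q θ, θ) = u (q θ) θ := Ueq _ (hq.2 θ hθ') _ hθ'
      simp only [hφ]
      rw [hUe]
      ring
    show (∫ θ, (u (q θ) θ + (m θ - c) * q θ) ∂F) = _
    rw [integral_congr_ae hae, integral_add (φqint q hq).2 hintmq]
  -- lower bound for W over M0
  have Wlower : ∀ q ∈ Qset θlow θhigh A, ∀ m ∈ M0 F μ,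
      Gfn q + μ * bfn q ≤ W F u c q m := by
    intro q hq m hm
    obtain ⟨hintmq, hWeq⟩ := Wsplit q hq m hm
    rw [hWeq]
    have h1 : μ * bfn q ≤ ∫ θ, m θ * q θ ∂F := by
      have h2 : ∫ θ, m θ * bfn q ∂F = μ * bfn q := by
        rw [integral_mul_const, hm.2.2]
      rw [← h2]
      apply integral_mono_ae ((M0int m hm).mul_const _) hintmq
      filter_upwards [aeIoc] with θ hθ'
      exact mul_le_mul_of_nonneg_left (bfnle q hq θ hθ') (hm.2.1 θ)
    linarith
  -- the upper bound construction
  have Wupper : ∀ q ∈ Qset θlow θhigh A, ∀ t ∈ Ioc θlow θhigh,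
      ∃ m ∈ Mminus θlow θhigh F μ, W F u c q m ≤ Gfn q + μ * q t := by
    intro q hq t ht
    set r := (F (Iic t)).toReal with hr
    have hrpos : 0 < r := ENNReal.toReal_pos (Fpos t ht.1).ne' (measure_ne_top F _)
    set m : ℝ → ℝ := (Iic t).indicator (fun _ => μ / r) with hm_def
    have hmnn : ∀ θ, 0 ≤ m θ :=
      fun θ => indicator_nonneg (fun _ _ => div_nonneg hμ.le hrpos.le) θ
    have hmM0 : m ∈ M0 F μ := by
      refine ⟨measurable_const.indicator measurableSet_Iic, hmnn, ?_⟩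
      rw [hm_def, integral_indicator_const _ measurableSet_Iic]
      simp only [smul_eq_mul, measureReal_def, ← hr]
      field_simp
    have hmM : m ∈ Mminus θlow θhigh F μ := by
      refine ⟨hmM0, ?_⟩
      intro a _ b _ hab
      rw [hm_def]
      by_cases hbt : b ≤ t
      · rw [indicator_of_mem (mem_Iic.2 hbt), indicator_of_mem (mem_Iic.2 (hab.trans hbt))]
      · rw [indicator_of_notMem (fun hmem => hbt (mem_Iic.1 hmem))]
        exact hmnn a
    refine ⟨m, hmM, ?_⟩
    obtain ⟨hintmq, hWeq⟩ := Wsplit q hq m hmM0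
    rw [hWeq]
    have hind : (fun θ => m θ * q θ) = (Iic t).indicator (fun θ => (μ / r) * q θ) := by
      funext θ
      rw [hm_def]
      by_cases hθt : θ ∈ Iic t
      · rw [indicator_of_mem hθt, indicator_of_mem hθt]
      · rw [indicator_of_notMem hθt, indicator_of_notMem hθt, zero_mul]
    have hset : ∫ θ, m θ * q θ ∂F = (μ / r) * ∫ θ in Iic t, q θ ∂F := by
      rw [hind, integral_indicator measurableSet_Iic, integral_const_mul]
    have hsetbound : ∫ θ in Iic t, q θ ∂F ≤ q t * r := by
      have h1 : ∫ θ in Iic t, q θ ∂F ≤ ∫ θ in Iic t, q t ∂F := by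
        apply integral_mono_ae ((qint q hq).2.integrableOn)
          (integrableOn_const (measure_lt_top _ _).ne)
        refine (ae_restrict_iff' measurableSet_Iic).2 ?_
        filter_upwards [aeIoc] with θ hθ' hθt
        exact hq.1 ⟨hθ'.1.le, hθ'.2⟩ ⟨ht.1.le, ht.2⟩ hθt
      have h2 : ∫ θ in Iic t, (q t : ℝ) ∂F = q t * r := by
        rw [setIntegral_const, smul_eq_mul, mul_comm, hr, measureReal_def]
      linarith
    have hqt0 : 0 ≤ q t := (hq.2 t ⟨ht.1.le, ht.2⟩).1
    have : (μ / r) * ∫ θ in Iic t, q θ ∂F ≤ μ * q t := by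
      calc (μ / r) * ∫ θ in Iic t, q θ ∂F ≤ (μ / r) * (q t * r) :=
            mul_le_mul_of_nonneg_left hsetbound (div_nonneg hμ.le hrpos.le)
        _ = μ * q t := by field_simp
    rw [hset]
    linarith
  -- nonemptiness of Mminus
  have hMne : (fun _ : ℝ => μ) ∈ Mminus θlow θhigh F μ := by
    refine ⟨⟨measurable_const, fun _ => hμ.le, by rw [integral_const]; simp⟩, fun _ _ _ _ _ => le_rfl⟩
  have hMsub : Mminus θlow θhigh F μ ⊆ M0 F μ := fun m hm => hm.1
  -- the reduction: worst-case surplus equals Gfn q + μ * bfn q for both ambiguity sets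
  have hred : ∀ q ∈ Qset θlow θhigh A,
      worst F u c (Mminus θlow θhigh F μ) q = Gfn q + μ * bfn q ∧
      worst F u c (M0 F μ) q = Gfn q + μ * bfn q := by
    intro q hq
    have key : ∀ M : Set (ℝ → ℝ), Mminus θlow θhigh F μ ⊆ M → M ⊆ M0 F μ →
        worst F u c M q = Gfn q + μ * bfn q := by
      intro M hsub1 hsub2
      have hne : ((fun m => W F u c q m) '' M).Nonempty :=
        ⟨_, mem_image_of_mem _ (hsub1 hMne)⟩
      have hbdd : BddBelow ((fun m => W F u c q m) '' M) := by
        refine ⟨Gfn q + μ * bfn q, ?_⟩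
        rintro x ⟨m, hm, rfl⟩
        exact Wlower q hq m (hsub2 hm)
      apply le_antisymm
      · apply le_of_forall_pos_le_add
        intro ε hε
        obtain ⟨t, ht, hqt⟩ := bfnlt q hq (ε / μ) (div_pos hε hμ)
        obtain ⟨m, hm, hW⟩ := Wupper q hq t ht
        calc sInf ((fun m => W F u c q m) '' M) ≤ W F u c q m :=
              csInf_le hbdd (mem_image_of_mem _ (hsub1 hm))
          _ ≤ Gfn q + μ * q t := hW
          _ ≤ Gfn q + μ * bfn q + ε := by
              have : μ * q t ≤ μ * (bfn q + ε / μ) := mul_le_mul_of_nonneg_left hqt.le hμ.le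
              have h2 : μ * (bfn q + ε / μ) = μ * bfn q + ε := by field_simp
              linarith
      · apply le_csInf hne
        rintro x ⟨m, hm, rfl⟩
        exact Wlower q hq m (hsub2 hm)
    exact ⟨key _ (fun _ h => h) hMsub, key _ hMsub (fun _ h => h)⟩
  -- the one-dimensional objective
  set gp : ℝ → ℝ → ℝ := fun b θ => φ (max (d θ) (cx b)) θ with hgp
  set h : ℝ → ℝ := fun b => (∫ θ, gp b θ ∂F) + μ * b with hh
  have gpmeas : ∀ b, Measurable (gp b) := by
    intro b
    simp only [hgp, hφ]
    exact (Ucont.measurable.comp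
      (((dmeas.max measurable_const)).prodMk measurable_id)).sub
      ((dmeas.max measurable_const).const_mul c)
  have gpbound : ∀ b θ, |gp b θ| ≤ C + c * A := by
    intro b θ
    simp only [hgp]
    exact φbound _ _ ⟨le_trans (dI θ).1 (le_max_left _ _), max_le (dI θ).2 (cxmem b).2⟩
  have gpint : ∀ b, Integrable (gp b) F := by
    intro b
    apply Integrable.mono' (integrable_const (C + c * A)) (gpmeas b).aestronglyMeasurable
    filter_upwards with θ
    rw [Real.norm_eq_abs]
    exact gpbound b θ
  have hcont : Continuous h := by
    apply Continuous.add ?_ (continuous_const.mul continuous_id)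
    apply continuous_of_dominated (fun b => (gpmeas b).aestronglyMeasurable)
      (fun b => Filter.Eventually.of_forall (fun θ => by rw [Real.norm_eq_abs]; exact gpbound b θ))
      (integrable_const (C + c * A))
    filter_upwards with θ
    simp only [hgp, hφ]
    apply Continuous.sub
    · exact Ucont.comp ((continuous_const.max cxcont).prodMk continuous_const)
    · exact continuous_const.mul (continuous_const.max cxcont)
  obtain ⟨qf, hqfI, hqfmax'⟩ :=
    isCompact_Icc.exists_isMaxOn (nonempty_Icc.2 hA.le) hcont.continuousOn
  have hqfmax : ∀ b ∈ Icc 0 A, h b ≤ h qf := fun b hb => hqfmax' hb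
  -- key comparison: V q ≤ h (bfn q)
  have Vle : ∀ q ∈ Qset θlow θhigh A, Gfn q + μ * bfn q ≤ h (bfn q) := by
    intro q hq
    have h1 : Gfn q ≤ ∫ θ, gp (bfn q) θ ∂F := by
      apply integral_mono_ae (φqint q hq).2 (gpint _)
      filter_upwards [aeIoc] with θ hθ'
      have hθK : θ ∈ Icc θlow θhigh := ⟨hθ'.1.le, hθ'.2⟩
      simp only [hgp]
      rw [cxid _ (bfnI q hq)]
      exact key_ineq_le (φconc θ hθK) (dI θ) (φmax θ hθK) (bfnI q hq).1
        (bfnle q hq θ hθ') (hq.2 θ hθK).2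
    simp only [hh]
    linarith
  -- the candidate allocation
  set qs : ℝ → ℝ := fun θ => max (D c θ) qf with hqs
  have hqsQ : qs ∈ Qset θlow θhigh A := by
    constructor
    · intro a ha b hb hab
      exact max_le_max (Dmono a ha b hb hab) le_rfl
    · intro θ hθ'
      exact ⟨le_trans (hD c θ hθ').1.1 (le_max_left _ _),
        max_le (hD c θ hθ').1.2 hqfI.2⟩
  have hbqs_ge : qf ≤ bfn qs := by
    apply le_csInf (Iocne.image qs)
    rintro x ⟨θ, hθ', rfl⟩
    exact le_max_right _ _
  have hbqs_mem : bfn qs ∈ Icc 0 A := bfnI qs hqsQ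
  have gpeq : ∀ θ ∈ Ioc θlow θhigh, gp (bfn qs) θ = gp qf θ := by
    intro θ hθ'
    have hθK : θ ∈ Icc θlow θhigh := ⟨hθ'.1.le, hθ'.2⟩
    have hqsθ : qs θ = max (d θ) qf := by simp only [hqs]; rw [dKeq θ hθK]
    suffices hsuff : max (d θ) (cx (bfn qs)) = max (d θ) (cx qf) by
      simp only [hgp]; rw [hsuff]
    rw [cxid qf hqfI, cxid _ hbqs_mem]
    rcases le_or_gt (bfn qs) (d θ) with h1 | h1
    · rw [max_eq_left h1, max_eq_left (hbqs_ge.trans h1)]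
    · have h2 : bfn qs ≤ max (d θ) qf := by
        rw [← hqsθ]
        exact bfnle qs hqsQ θ hθ'
      have h3 : max (d θ) qf = qf := by
        rcases max_cases (d θ) qf with ⟨he, _⟩ | ⟨he, _⟩
        · exfalso; rw [he] at h2; exact absurd h2 (not_le.2 h1)
        · exact he
      have h4 : bfn qs = qf := le_antisymm (h3 ▸ h2) hbqs_ge
      rw [h4]
  have hbeq : bfn qs = qf := by
    have h1 : h (bfn qs) = h qf + μ * (bfn qs - qf) := by
      simp only [hh]
      have : ∫ θ, gp (bfn qs) θ ∂F = ∫ θ, gp qf θ ∂F := by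
        apply integral_congr_ae
        filter_upwards [aeIoc] with θ hθ'
        exact gpeq θ hθ'
      rw [this]; ring
    have h2 : h (bfn qs) ≤ h qf := hqfmax _ hbqs_mem
    have h3 : μ * (bfn qs - qf) ≤ 0 := by linarith
    have h4 : bfn qs - qf ≤ 0 := nonpos_of_mul_nonpos_right ?_ hμ
    · linarith [hbqs_ge]
    · linarith [h3, mul_comm μ (bfn qs - qf)]
  have Vqs : Gfn qs + μ * bfn qs = h qf := by
    have h1 : Gfn qs = ∫ θ, gp qf θ ∂F := by
      apply integral_congr_ae
      filter_upwards [aeIoc] with θ hθ'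
      have hθK : θ ∈ Icc θlow θhigh := ⟨hθ'.1.le, hθ'.2⟩
      show φ (qs θ) θ = gp qf θ
      simp only [hqs, hgp]
      rw [dKeq θ hθK, cxid qf hqfI]
    simp only [hh]
    rw [h1, hbeq]
  -- uniqueness of the maximizer of h
  have key : ∀ p p', p ∈ Icc 0 A → p' ∈ Icc 0 A → p < p' →
      h p = h qf → h p' = h qf → False := by
    intro p p' hp hp' hpp' he he'
    set t : ℝ := (p + p') / 2 with ht_def
    have htI : t ∈ Icc 0 A := ⟨by rw [ht_def]; linarith [hp.1, hp'.1],
      by rw [ht_def]; linarith [hp.2, hp'.2]⟩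
    have aemid : ∀ᵐ θ ∂F, (gp p θ + gp p' θ) / 2 ≤ gp t θ := by
      filter_upwards [aeIoc] with θ hθ'
      have hθK : θ ∈ Icc θlow θhigh := ⟨hθ'.1.le, hθ'.2⟩
      simp only [hgp]
      rw [cxid p hp, cxid p' hp', cxid t htI, ht_def]
      exact (mid_ineq (φconc θ hθK) (dI θ) (φmax θ hθK) hp.1 hpp' hp'.2).1
    have intavg : Integrable (fun θ => (gp p θ + gp p' θ) / 2) F :=
      ((gpint p).add (gpint p')).div_const 2
    have hint : ∫ θ, (gp p θ + gp p' θ) / 2 ∂F ≤ ∫ θ, gp t θ ∂F :=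
      integral_mono_ae intavg (gpint t) aemid
    have havg : ∫ θ, (gp p θ + gp p' θ) / 2 ∂F =
        ((∫ θ, gp p θ ∂F) + ∫ θ, gp p' θ ∂F) / 2 := by
      rw [integral_div, integral_add (gpint p) (gpint p')]
    have hmut : μ * t = (μ * p + μ * p') / 2 := by rw [ht_def]; ring
    have hteq : h t = h qf := by
      have hle := hqfmax t htI
      have hge : h qf ≤ h t := by
        have e1 : h t = (∫ θ, gp t θ ∂F) + μ * t := rfl
        have e2 : h p = (∫ θ, gp p θ ∂F) + μ * p := rfl
        have e3 : h p' = (∫ θ, gp p' θ ∂F) + μ * p' := rfl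
        rw [e1]
        rw [e2] at he
        rw [e3] at he'
        linarith
      exact le_antisymm hle hge
    have hI3 : ∫ θ, gp t θ ∂F = ∫ θ, (gp p θ + gp p' θ) / 2 ∂F := by
      have e1 : h t = (∫ θ, gp t θ ∂F) + μ * t := rfl
      have e2 : h p = (∫ θ, gp p θ ∂F) + μ * p := rfl
      have e3 : h p' = (∫ θ, gp p' θ ∂F) + μ * p' := rfl
      rw [e1] at hteq
      rw [e2] at he
      rw [e3] at he'
      linarith
    have hzero : ∫ θ, (gp t θ - (gp p θ + gp p' θ) / 2) ∂F = 0 := by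
      rw [integral_sub (gpint t) intavg, hI3, sub_self]
    have haee : (fun θ => gp t θ - (gp p θ + gp p' θ) / 2) =ᵐ[F] 0 := by
      apply (integral_eq_zero_iff_of_nonneg_ae ?_ ((gpint t).sub intavg)).1 hzero
      filter_upwards [aemid] with θ hθ'
      simp only [Pi.zero_apply, Pi.sub_apply]
      linarith
    have hdae : ∀ᵐ θ ∂F, p' ≤ d θ := by
      filter_upwards [haee, aeIoc] with θ hz hθ'
      have hθK : θ ∈ Icc θlow θhigh := ⟨hθ'.1.le, hθ'.2⟩
      simp only [Pi.zero_apply] at hz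
      by_contra hcon
      push_neg at hcon
      have hstrict := (mid_ineq (φconc θ hθK) (dI θ) (φmax θ hθK) hp.1 hpp' hp'.2).2 hcon
      have e1 : gp t θ = φ (max (d θ) ((p + p') / 2)) θ := by
        simp only [hgp]; rw [cxid t htI, ht_def]
      have e2 : gp p θ = φ (max (d θ) p) θ := by simp only [hgp]; rw [cxid p hp]
      have e3 : gp p' θ = φ (max (d θ) p') θ := by simp only [hgp]; rw [cxid p' hp']
      rw [e1, e2, e3] at hz
      linarith
    have hgpe : (fun θ => gp p θ) =ᵐ[F] (fun θ => gp p' θ) := by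
      filter_upwards [hdae] with θ hd'
      simp only [hgp]
      rw [cxid p hp, cxid p' hp', max_eq_left (hpp'.le.trans hd'), max_eq_left hd']
    have hIeq : ∫ θ, gp p θ ∂F = ∫ θ, gp p' θ ∂F := integral_congr_ae hgpe
    have e2 : h p = (∫ θ, gp p θ ∂F) + μ * p := rfl
    have e3 : h p' = (∫ θ, gp p' θ ∂F) + μ * p' := rfl
    have : μ * p < μ * p' := mul_lt_mul_of_pos_left hpp' hμ
    rw [e2] at he
    rw [e3] at he'
    linarith
  have huniq : ∀ b ∈ Icc 0 A, h b = h qf → b = qf := by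
    intro b hb hbe
    by_contra hne
    rcases lt_or_gt_of_ne hne with hlt | hgt
    · exact key b qf hb hqfI hlt hbe rfl
    · exact key qf b hqfI hb hgt rfl hbe
  -- the main comparison
  have main_le : ∀ q ∈ Qset θlow θhigh A,
      Gfn q + μ * bfn q ≤ Gfn qs + μ * bfn qs := by
    intro q hq
    rw [Vqs]
    exact (Vle q hq).trans (hqfmax _ (bfnI q hq))
  have main_eq : ∀ q ∈ Qset θlow θhigh A,
      Gfn q + μ * bfn q = Gfn qs + μ * bfn qs → q =ᵐ[F] qs := by
    intro q hq heq
    have h1 : Gfn q + μ * bfn q = h qf := heq.trans Vqs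
    have h2 : h (bfn q) = h qf :=
      le_antisymm (hqfmax _ (bfnI q hq)) (h1 ▸ Vle q hq)
    have hbq : bfn q = qf := huniq _ (bfnI q hq) h2
    have h3 : ∫ θ, gp qf θ ∂F = Gfn q := by
      have e1 : h qf = (∫ θ, gp qf θ ∂F) + μ * qf := rfl
      rw [hbq] at h1
      rw [e1] at h1
      linarith
    have hGdef : Gfn q = ∫ θ, φ (q θ) θ ∂F := rfl
    have hzero : ∫ θ, (gp qf θ - φ (q θ) θ) ∂F = 0 := by
      rw [integral_sub (gpint qf) (φqint q hq).2, ← hGdef, h3, sub_self]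
    have haee : (fun θ => gp qf θ - φ (q θ) θ) =ᵐ[F] 0 := by
      apply (integral_eq_zero_iff_of_nonneg_ae ?_ ((gpint qf).sub (φqint q hq).2)).1 hzero
      filter_upwards [aeIoc] with θ hθ'
      have hθK : θ ∈ Icc θlow θhigh := ⟨hθ'.1.le, hθ'.2⟩
      simp only [Pi.zero_apply, Pi.sub_apply, hgp]
      rw [cxid qf hqfI]
      have := key_ineq_le (φconc θ hθK) (dI θ) (φmax θ hθK) hqfI.1
        (hbq ▸ bfnle q hq θ hθ') (hq.2 θ hθK).2
      linarith
    filter_upwards [haee, aeIoc] with θ hz hθ'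
    have hθK : θ ∈ Icc θlow θhigh := ⟨hθ'.1.le, hθ'.2⟩
    simp only [Pi.zero_apply] at hz
    show q θ = qs θ
    have hqsθ : qs θ = max (d θ) qf := by simp only [hqs]; rw [dKeq θ hθK]
    rw [hqsθ]
    by_contra hne
    have hstrict := key_ineq (φconc θ hθK) (dI θ) (φmax θ hθK) hqfI.1
      (hbq ▸ bfnle q hq θ hθ') (hq.2 θ hθK).2 hne
    have e1 : gp qf θ = φ (max (d θ) qf) θ := by simp only [hgp]; rw [cxid qf hqfI]
    rw [e1] at hz
    linarith
  -- assemble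
  refine ⟨qf, hqfI, ?_, ?_, ?_, ?_⟩
  · intro q hq
    rw [show (fun θ => max (D c θ) qf) = qs from hqs.symm,
      (hred q hq).1, (hred qs hqsQ).1]
    exact main_le q hq
  · intro q hq he
    rw [show (fun θ => max (D c θ) qf) = qs from hqs.symm] at he ⊢
    rw [(hred q hq).1, (hred qs hqsQ).1] at he
    exact main_eq q hq he
  · intro q hq
    rw [show (fun θ => max (D c θ) qf) = qs from hqs.symm,
      (hred q hq).2, (hred qs hqsQ).2]
    exact main_le q hq
  · intro q hq he
    rw [show (fun θ => max (D c θ) qf) = qs from hqs.symm] at he ⊢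
    rw [(hred q hq).2, (hred qs hqsQ).2] at he
    exact main_eq q hq he
end
end

section
/- (Theorem 1': unknown correlation with negative externalities favors a quantity ceiling.) There exists q̄ ∈ [0,A] such that, setting q₀*(θ) := min{q^LF(θ), q̄}: for every q ∈ Q, inf over m ∈ M₀ of W⁻(q,m) is at most inf over m ∈ M₀ of W⁻(q₀*, m); moreover, any q ∈ Q attaining this maximal worst-case value satisfies q = q₀* F-almost everywhere. -/
open MeasureTheory Set

noncomputable section

/-- Total surplus with a negative externality. -/
def Wneg (F : Measure ℝ) (u : ℝ → ℝ → ℝ) (c : ℝ) (q m : ℝ → ℝ) : ℝ :=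
  ∫ θ, (u (q θ) θ - (c + m θ) * q θ) ∂F

/-- Worst-case total surplus (negative externality) over the ambiguity set `M`. -/
def worstNeg (F : Measure ℝ) (u : ℝ → ℝ → ℝ) (c : ℝ) (M : Set (ℝ → ℝ)) (q : ℝ → ℝ) : ℝ :=
  sInf ((fun m => Wneg F u c q m) '' M)

namespace UCQC

/-- Projection of `ℝ` onto `[lo, hi]`. -/
def prj (lo hi θ : ℝ) : ℝ := max lo (min θ hi)

lemma prj_mono (lo hi : ℝ) : Monotone (prj lo hi) :=
  fun _ _ hab => max_le_max le_rfl (min_le_min hab le_rfl)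

lemma prj_mem {lo hi : ℝ} (h : lo ≤ hi) (θ : ℝ) : prj lo hi θ ∈ Icc lo hi :=
  ⟨le_max_left _ _, max_le h (min_le_right _ _)⟩

lemma prj_id {lo hi θ : ℝ} (hθ : θ ∈ Icc lo hi) : prj lo hi θ = θ := by
  unfold prj
  rw [min_eq_left hθ.2, max_eq_right hθ.1]

/-- Clamp to `[0, A]`. -/
def clamp (A s : ℝ) : ℝ := max 0 (min s A)

lemma clamp_mono (A : ℝ) : Monotone (clamp A) :=
  fun _ _ hab => max_le_max le_rfl (min_le_min hab le_rfl)

lemma clamp_mem {A : ℝ} (hA : 0 ≤ A) (s : ℝ) : clamp A s ∈ Icc 0 A :=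
  ⟨le_max_left _ _, max_le hA (min_le_right _ _)⟩

lemma clamp_id {A s : ℝ} (hs : s ∈ Icc 0 A) : clamp A s = s := by
  unfold clamp
  rw [min_eq_left hs.2, max_eq_right hs.1]

lemma meas_comp {θlow θhigh A : ℝ} {u : ℝ → ℝ → ℝ}
    (hu_cont : ContinuousOn (fun p : ℝ × ℝ => u p.1 p.2) (Icc 0 A ×ˢ Icc θlow θhigh))
    (hle : θlow ≤ θhigh) {x : ℝ → ℝ} (hx : Measurable x) (hxm : ∀ θ, x θ ∈ Icc 0 A) :
    Measurable fun θ => u (x θ) (prj θlow θhigh θ) := by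
  have hpair : Measurable fun θ =>
      (⟨(x θ, prj θlow θhigh θ), mem_prod.mpr ⟨hxm θ, prj_mem hle θ⟩⟩ :
        (Icc (0:ℝ) A ×ˢ Icc θlow θhigh : Set (ℝ × ℝ))) :=
    (hx.prodMk (prj_mono θlow θhigh).measurable).subtype_mk
  exact hu_cont.restrict.measurable.comp hpair

lemma int_aux {θlow θhigh A c : ℝ} {F : Measure ℝ} [IsFiniteMeasure F] {u : ℝ → ℝ → ℝ}
    (hu_cont : ContinuousOn (fun p : ℝ × ℝ => u p.1 p.2) (Icc 0 A ×ˢ Icc θlow θhigh))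
    (hle : θlow ≤ θhigh) (hA : 0 ≤ A) {x : ℝ → ℝ} (hx : Measurable x)
    (hxm : ∀ θ, x θ ∈ Icc 0 A) :
    Integrable (fun θ => u (x θ) (prj θlow θhigh θ) - c * x θ) F := by
  obtain ⟨B, hB⟩ := (isCompact_Icc.prod isCompact_Icc).exists_bound_of_continuousOn hu_cont
  have hm : Measurable fun θ => u (x θ) (prj θlow θhigh θ) - c * x θ :=
    (meas_comp hu_cont hle hx hxm).sub (measurable_const.mul hx)
  refine (integrable_const (B + |c| * A)).mono' hm.aestronglyMeasurable
    (Filter.Eventually.of_forall fun θ => ?_)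
  have h1 : ‖u (x θ) (prj θlow θhigh θ)‖ ≤ B :=
    hB ((x θ, prj θlow θhigh θ) : ℝ × ℝ) (mem_prod.mpr ⟨hxm θ, prj_mem hle θ⟩)
  have h2 : |c * x θ| ≤ |c| * A := by
    rw [abs_mul]
    exact mul_le_mul_of_nonneg_left
      (abs_le.mpr ⟨by linarith [(hxm θ).1, (hxm θ).2], (hxm θ).2⟩) (abs_nonneg c)
  calc ‖u (x θ) (prj θlow θhigh θ) - c * x θ‖
      ≤ ‖u (x θ) (prj θlow θhigh θ)‖ + ‖c * x θ‖ := norm_sub_le _ _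
    _ ≤ B + |c| * A := add_le_add h1 h2

/-- The worst-case total surplus formula. -/
lemma worst_formula {θlow θhigh A c μ : ℝ} {F : Measure ℝ} [IsProbabilityMeasure F]
    {u : ℝ → ℝ → ℝ}
    (hθ : θlow < θhigh) (hA : 0 < A) (hμ : 0 < μ)
    (hu_cont : ContinuousOn (fun p : ℝ × ℝ => u p.1 p.2) (Icc 0 A ×ˢ Icc θlow θhigh))
    (hnull : F (Ico θlow θhigh)ᶜ = 0)
    (hpos : ∀ θ0, θlow ≤ θ0 → θ0 < θhigh → 0 < F (Ico θ0 θhigh))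
    {q : ℝ → ℝ} (hq : q ∈ Qset θlow θhigh A) :
    worstNeg F u c (M0 F μ) q =
      (∫ θ, (u (clamp A (q (prj θlow θhigh θ))) (prj θlow θhigh θ)
          - c * clamp A (q (prj θlow θhigh θ))) ∂F) - μ * sSup (q '' Ico θlow θhigh) := by
  obtain ⟨hqmono, hqmem⟩ := hq
  have hle : θlow ≤ θhigh := hθ.le
  set P := prj θlow θhigh with hP
  set qt : ℝ → ℝ := fun θ => clamp A (q (P θ)) with hqtdef
  have hqt_meas : Measurable qt := by
    have : Monotone qt := fun a b hab =>
      clamp_mono A (hqmono (prj_mem hle a) (prj_mem hle b) (prj_mono θlow θhigh hab))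
    exact this.measurable
  have hqt_mem : ∀ θ, qt θ ∈ Icc 0 A := fun θ => clamp_mem hA.le _
  have hqt_eq : ∀ θ ∈ Ico θlow θhigh, qt θ = q θ := by
    intro θ hθ'
    have h1 : θ ∈ Icc θlow θhigh := Ico_subset_Icc_self hθ'
    simp only [hqtdef, hP, prj_id h1, clamp_id (hqmem θ h1)]
  have hae : ∀ {Pr : ℝ → Prop}, (∀ θ ∈ Ico θlow θhigh, Pr θ) → (∀ᵐ θ ∂F, Pr θ) := by
    intro Pr h
    refine ae_iff.mpr (measure_mono_null ?_ hnull)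
    intro θ hθ'
    simp only [mem_setOf_eq] at hθ'
    exact fun hmem => hθ' (h θ hmem)
  set ψ : ℝ → ℝ := fun θ => u (qt θ) (P θ) - c * qt θ with hψdef
  have hIψ : Integrable ψ F := int_aux hu_cont hle hA.le hqt_meas hqt_mem
  set sq := sSup (q '' Ico θlow θhigh) with hsq
  have himg_ne : (q '' Ico θlow θhigh).Nonempty :=
    ⟨q θlow, mem_image_of_mem _ ⟨le_rfl, hθ⟩⟩
  have hbdd : BddAbove (q '' Ico θlow θhigh) := by
    refine ⟨A, ?_⟩
    rintro y ⟨θ', hθ', rfl⟩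
    exact (hqmem θ' (Ico_subset_Icc_self hθ')).2
  have hqle : ∀ θ ∈ Ico θlow θhigh, q θ ≤ sq := fun θ h =>
    le_csSup hbdd (mem_image_of_mem _ h)
  have hsq0 : 0 ≤ sq :=
    le_trans (hqmem θlow ⟨le_rfl, hle⟩).1 (hqle θlow ⟨le_rfl, hθ⟩)
  -- facts about elements of M0
  have hm_int : ∀ m ∈ M0 F μ, Integrable m F := by
    intro m hm
    by_contra h
    have h3 := hm.2.2
    rw [integral_undef h] at h3
    exact absurd h3.symm (ne_of_gt hμ)
  have hmq_int : ∀ m ∈ M0 F μ, Integrable (fun θ => m θ * qt θ) F := by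
    intro m hm
    refine ((hm_int m hm).const_mul A).mono'
      (hm.1.aestronglyMeasurable.mul hqt_meas.aestronglyMeasurable)
      (Filter.Eventually.of_forall fun θ => ?_)
    rw [Real.norm_eq_abs, abs_of_nonneg (mul_nonneg (hm.2.1 θ) (hqt_mem θ).1)]
    calc m θ * qt θ ≤ m θ * A := mul_le_mul_of_nonneg_left (hqt_mem θ).2 (hm.2.1 θ)
      _ = A * m θ := mul_comm _ _
  have hW : ∀ m ∈ M0 F μ, Wneg F u c q m = (∫ θ, ψ θ ∂F) - ∫ θ, m θ * qt θ ∂F := by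
    intro m hm
    have hcongr : (fun θ => u (q θ) θ - (c + m θ) * q θ) =ᵐ[F]
        fun θ => ψ θ - m θ * qt θ := by
      refine hae fun θ hθ' => ?_
      have h1 : θ ∈ Icc θlow θhigh := Ico_subset_Icc_self hθ'
      simp only [hψdef, hqt_eq θ hθ', hP, prj_id h1]
      ring
    rw [Wneg, integral_congr_ae hcongr, integral_sub hIψ (hmq_int m hm)]
  have hub : ∀ m ∈ M0 F μ, ∫ θ, m θ * qt θ ∂F ≤ μ * sq := by
    intro m hm
    have h1 : ∫ θ, m θ * qt θ ∂F ≤ ∫ θ, m θ * sq ∂F := by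
      refine integral_mono_ae (hmq_int m hm) ((hm_int m hm).mul_const sq)
        (hae fun θ hθ' => ?_)
      show m θ * qt θ ≤ m θ * sq
      rw [hqt_eq θ hθ']
      exact mul_le_mul_of_nonneg_left (hqle θ hθ') (hm.2.1 θ)
    calc ∫ θ, m θ * qt θ ∂F ≤ ∫ θ, m θ * sq ∂F := h1
      _ = (∫ θ, m θ ∂F) * sq := integral_mul_const sq m
      _ = μ * sq := by rw [hm.2.2]
  have hlb : ∀ y ∈ (fun m => Wneg F u c q m) '' (M0 F μ),
      (∫ θ, ψ θ ∂F) - μ * sq ≤ y := by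
    rintro y ⟨m, hm, rfl⟩
    show (∫ θ, ψ θ ∂F) - μ * sq ≤ Wneg F u c q m
    rw [hW m hm]
    linarith [hub m hm]
  have hkey : ∀ ε > (0:ℝ), ∃ m ∈ M0 F μ,
      Wneg F u c q m ≤ (∫ θ, ψ θ ∂F) - μ * sq + ε := by
    intro ε hε
    have hε' : 0 < ε / μ := div_pos hε hμ
    have h2 : sq - ε / μ < sq := by linarith
    obtain ⟨y, ⟨θ0, hθ0, rfl⟩, hy⟩ := exists_lt_of_lt_csSup himg_ne h2
    set E := Ico θ0 θhigh with hE
    have hEmeas : MeasurableSet E := measurableSet_Ico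
    have hEpos : 0 < F E := hpos θ0 hθ0.1 hθ0.2
    set r := (F E).toReal with hr
    have hrpos : 0 < r := ENNReal.toReal_pos hEpos.ne' (measure_ne_top F E)
    set m : ℝ → ℝ := E.indicator (fun _ => μ / r) with hm
    have hmM0 : m ∈ M0 F μ := by
      refine ⟨measurable_const.indicator hEmeas,
        fun θ => indicator_nonneg (fun _ _ => by positivity) θ, ?_⟩
      rw [hm, integral_indicator_const _ hEmeas, smul_eq_mul, measureReal_def, ← hr]
      field_simp
    have hqt_int : Integrable qt F := by
      refine (integrable_const A).mono' hqt_meas.aestronglyMeasurable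
        (Filter.Eventually.of_forall fun θ => ?_)
      rw [Real.norm_eq_abs, abs_of_nonneg (hqt_mem θ).1]
      exact (hqt_mem θ).2
    have hmqt : (fun θ => m θ * qt θ) = E.indicator (fun θ => (μ / r) * qt θ) := by
      funext θ
      by_cases hθE : θ ∈ E
      · simp [hm, indicator_of_mem hθE]
      · simp [hm, indicator_of_notMem hθE]
    have hlow : μ * sq - ε ≤ ∫ θ, m θ * qt θ ∂F := by
      rw [hmqt, integral_indicator hEmeas]
      have h3 : ∫ θ in E, (μ / r) * (sq - ε / μ) ∂F ≤ ∫ θ in E, (μ / r) * qt θ ∂F := by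
        refine setIntegral_mono_on (integrableOn_const (measure_lt_top F E).ne)
          ((hqt_int.const_mul _).integrableOn) hEmeas fun θ hθE => ?_
        have hθIco : θ ∈ Ico θlow θhigh := ⟨le_trans hθ0.1 hθE.1, hθE.2⟩
        have hmono := hqmono (Ico_subset_Icc_self hθ0) (Ico_subset_Icc_self hθIco) hθE.1
        rw [hqt_eq θ hθIco]
        have : sq - ε / μ ≤ q θ := le_trans hy.le hmono
        exact mul_le_mul_of_nonneg_left this (by positivity)
      have h4 : ∫ θ in E, (μ / r) * (sq - ε / μ) ∂F = μ * sq - ε := by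
        rw [setIntegral_const, smul_eq_mul, measureReal_def, ← hr]
        field_simp
      linarith
    refine ⟨m, hmM0, ?_⟩
    rw [hW m hmM0]
    linarith
  -- conclude
  have hne : ((fun m => Wneg F u c q m) '' (M0 F μ)).Nonempty := by
    obtain ⟨m, hm, _⟩ := hkey 1 one_pos
    exact ⟨_, mem_image_of_mem _ hm⟩
  have hbb : BddBelow ((fun m => Wneg F u c q m) '' (M0 F μ)) := ⟨_, hlb⟩
  refine le_antisymm ?_ (le_csInf hne hlb)
  refine le_of_forall_pos_le_add fun ε hε => ?_
  obtain ⟨m, hm, hmle⟩ := hkey ε hε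
  exact le_trans (csInf_le hbb (mem_image_of_mem _ hm)) hmle

lemma min_lip (a x y : ℝ) : |min a x - min a y| ≤ |x - y| := by
  rcases le_total a x with h1 | h1 <;> rcases le_total a y with h2 | h2 <;>
    rcases abs_cases (x - y) with ⟨h3, h4⟩ | ⟨h3, h4⟩ <;>
    rcases abs_cases (min a x - min a y) with ⟨h5, h6⟩ | ⟨h5, h6⟩ <;>
    simp only [min_eq_left, min_eq_right, h1, h2] at h5 h6 ⊢ <;> linarith

lemma max_lip (a x y : ℝ) : |max a x - max a y| ≤ |x - y| := by
  rcases le_total a x with h1 | h1 <;> rcases le_total a y with h2 | h2 <;>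
    rcases abs_cases (x - y) with ⟨h3, h4⟩ | ⟨h3, h4⟩ <;>
    rcases abs_cases (max a x - max a y) with ⟨h5, h6⟩ | ⟨h5, h6⟩ <;>
    simp only [max_eq_left, max_eq_right, h1, h2] at h5 h6 ⊢ <;> linarith

lemma clamp_lip (A x y : ℝ) : |clamp A x - clamp A y| ≤ |x - y| := by
  unfold clamp
  refine le_trans (max_lip 0 _ _) ?_
  rw [show min x A = min A x from min_comm _ _, show min y A = min A y from min_comm _ _]
  exact min_lip A x y

end UCQC

/-- **Theorem 1'.** With negative externalities, under the unknown-correlation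
benchmark there is a quantity ceiling `q̄ ∈ [0,A]` so that `q₀*(θ) = min (q^LF θ) q̄` maximizes
the worst-case total surplus, and it is the F-a.e. unique maximizer. -/
theorem unknown_correlation_quantity_ceiling
    (θlow θhigh A c μ : ℝ) (hθlow : 0 ≤ θlow) (hθ : θlow < θhigh)
    (hA : 0 < A) (hc : 0 < c) (hμ : 0 < μ)
    (F : Measure ℝ) [IsProbabilityMeasure F]
    (f : ℝ → ℝ) (hf_cont : ContinuousOn f (Icc θlow θhigh))
    (hf_pos : ∀ θ ∈ Icc θlow θhigh, 0 < f θ)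
    (hF : F = (volume.restrict (Icc θlow θhigh)).withDensity fun θ => ENNReal.ofReal (f θ))
    (u : ℝ → ℝ → ℝ)
    (hu_cont : ContinuousOn (fun p : ℝ × ℝ => u p.1 p.2) (Icc 0 A ×ˢ Icc θlow θhigh))
    (hu_mono : ∀ θ ∈ Icc θlow θhigh, StrictMonoOn (fun x => u x θ) (Icc 0 A))
    (hu_conc : ∀ θ ∈ Icc θlow θhigh, StrictConcaveOn ℝ (Icc 0 A) fun x => u x θ)
    (hu_sid : ∀ x x' θ θ', 0 ≤ x → x < x' → x' ≤ A →
      θ ∈ Icc θlow θhigh → θ' ∈ Icc θlow θhigh → θ < θ' →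
      u x' θ - u x θ < u x' θ' - u x θ')
    (D : ℝ → ℝ → ℝ)
    (hD : ∀ p : ℝ, ∀ θ ∈ Icc θlow θhigh, D p θ ∈ Icc 0 A ∧
      ∀ x ∈ Icc 0 A, x ≠ D p θ → u x θ - p * x < u (D p θ) θ - p * D p θ) :
    ∃ qc ∈ Icc (0:ℝ) A,
      (∀ q ∈ Qset θlow θhigh A,
        worstNeg F u c (M0 F μ) q ≤ worstNeg F u c (M0 F μ) (fun θ => min (D c θ) qc)) ∧
      (∀ q ∈ Qset θlow θhigh A,
        worstNeg F u c (M0 F μ) q = worstNeg F u c (M0 F μ) (fun θ => min (D c θ) qc) →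
        q =ᵐ[F] fun θ => min (D c θ) qc) := by
  open UCQC in
  have hle : θlow ≤ θhigh := hθ.le
  set P := UCQC.prj θlow θhigh with hPdef
  -- measure-theoretic facts
  have hac : F ≪ volume.restrict (Icc θlow θhigh) := by
    rw [hF]; exact withDensity_absolutelyContinuous _ _
  have hnullIcc : F (Icc θlow θhigh)ᶜ = 0 := by
    refine hac ?_
    rw [Measure.restrict_apply measurableSet_Icc.compl]
    simp
  have hpt : F {θhigh} = 0 := by
    refine hac ?_
    rw [Measure.restrict_apply (measurableSet_singleton _)]
    exact measure_mono_null inter_subset_left Real.volume_singleton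
  have hnullIco : F (Ico θlow θhigh)ᶜ = 0 := by
    have hsub : (Ico θlow θhigh)ᶜ ⊆ (Icc θlow θhigh)ᶜ ∪ {θhigh} := by
      intro x hx
      by_cases hxI : x ∈ Icc θlow θhigh
      · have h1 : ¬ x < θhigh := fun hlt => hx ⟨hxI.1, hlt⟩
        exact Or.inr (le_antisymm hxI.2 (not_lt.mp h1))
      · exact Or.inl hxI
    exact measure_mono_null hsub (measure_union_null hnullIcc hpt)
  have hpos : ∀ θ0, θlow ≤ θ0 → θ0 < θhigh → 0 < F (Ico θ0 θhigh) := by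
    intro θ0 h0 h1
    obtain ⟨θm, hθm, hmin⟩ := isCompact_Icc.exists_isMinOn ⟨θlow, le_rfl, hle⟩ hf_cont
    have hε : 0 < f θm := hf_pos θm hθm
    have hsubI : Ico θ0 θhigh ⊆ Icc θlow θhigh := fun x hx => ⟨le_trans h0 hx.1, hx.2.le⟩
    have hlbnd : ∫⁻ θ in Ico θ0 θhigh, ENNReal.ofReal (f θm)
        ∂(volume.restrict (Icc θlow θhigh))
        ≤ ∫⁻ θ in Ico θ0 θhigh, ENNReal.ofReal (f θ)
        ∂(volume.restrict (Icc θlow θhigh)) := by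
      refine lintegral_mono_ae ?_
      filter_upwards [ae_restrict_mem measurableSet_Ico] with θ hθ'
      exact ENNReal.ofReal_le_ofReal ((isMinOn_iff.mp hmin) θ (hsubI hθ'))
    rw [hF, withDensity_apply _ measurableSet_Ico]
    refine lt_of_lt_of_le ?_ hlbnd
    rw [setLIntegral_const, Measure.restrict_apply measurableSet_Ico,
      inter_eq_left.mpr hsubI, Real.volume_Ico]
    exact ENNReal.mul_pos (ENNReal.ofReal_pos.mpr hε).ne'
      (ENNReal.ofReal_pos.mpr (sub_pos.mpr h1)).ne'
  have hae : ∀ {Pr : ℝ → Prop}, (∀ θ ∈ Ico θlow θhigh, Pr θ) → (∀ᵐ θ ∂F, Pr θ) := by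
    intro Pr h
    refine ae_iff.mpr (measure_mono_null ?_ hnullIco)
    intro θ hθ'
    simp only [mem_setOf_eq] at hθ'
    exact fun hmem => hθ' (h θ hmem)
  -- facts about D
  have hDmem : ∀ θ ∈ Icc θlow θhigh, D c θ ∈ Icc 0 A := fun θ h => (hD c θ h).1
  have hDopt : ∀ θ ∈ Icc θlow θhigh, ∀ x ∈ Icc 0 A, x ≠ D c θ →
      u x θ - c * x < u (D c θ) θ - c * D c θ := fun θ h => (hD c θ h).2
  have hDmono : MonotoneOn (D c) (Icc θlow θhigh) := by
    intro θ hθ1 θ' hθ2 hle'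
    rcases eq_or_lt_of_le hle' with rfl | hlt
    · exact le_rfl
    by_contra hgt
    push_neg at hgt
    have h1 := hDopt θ hθ1 (D c θ') (hDmem θ' hθ2) (ne_of_lt hgt)
    have h2 := hDopt θ' hθ2 (D c θ) (hDmem θ hθ1) (ne_of_gt hgt)
    have h3 := hu_sid (D c θ') (D c θ) θ θ' (hDmem θ' hθ2).1 hgt (hDmem θ hθ1).2 hθ1 hθ2 hlt
    linarith
  -- pointwise concavity facts
  have hconc : ∀ θ ∈ Icc θlow θhigh, ∀ x ∈ Icc 0 A, ∀ y ∈ Icc 0 A, x ≠ y →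
      ∀ a b : ℝ, 0 < a → 0 < b → a + b = 1 →
      a * (u x θ - c * x) + b * (u y θ - c * y)
        < u (a * x + b * y) θ - c * (a * x + b * y) := by
    intro θ hθ' x hx y hy hxy a b ha hb hab
    have h1 := (hu_conc θ hθ').2 hx hy hxy ha hb hab
    simp only [smul_eq_mul] at h1
    have h2 : c * (a * x + b * y) = a * (c * x) + b * (c * y) := by ring
    linarith
  have hφlt : ∀ θ ∈ Icc θlow θhigh, ∀ x x' : ℝ, 0 ≤ x → x < x' → x' ≤ D c θ →
      u x θ - c * x < u x' θ - c * x' := by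
    intro θ hθ' x x' hx0 hxx hx'd
    have hdA := hDmem θ hθ'
    have hx'mem : x' ∈ Icc (0:ℝ) A := ⟨le_trans hx0 hxx.le, le_trans hx'd hdA.2⟩
    have hxmem : x ∈ Icc (0:ℝ) A := ⟨hx0, le_trans hxx.le hx'mem.2⟩
    rcases eq_or_lt_of_le hx'd with rfl | hlt
    · exact hDopt θ hθ' x hxmem (ne_of_lt hxx)
    · have hxd : x < D c θ := lt_trans hxx hlt
      have hdx : 0 < D c θ - x := by linarith
      set a := (D c θ - x') / (D c θ - x) with hadef
      set b := (x' - x) / (D c θ - x) with hbdef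
      have ha : 0 < a := div_pos (by linarith) hdx
      have hb : 0 < b := div_pos (by linarith) hdx
      have hab : a + b = 1 := by
        rw [hadef, hbdef]
        field_simp
        ring
      have hcomb : a * x + b * D c θ = x' := by
        rw [hadef, hbdef]
        field_simp
        ring
      have h1 := hconc θ hθ' x hxmem (D c θ) hdA (ne_of_lt hxd) a b ha hb hab
      rw [hcomb] at h1
      have h2 := hDopt θ hθ' x hxmem (ne_of_lt hxd)
      have h4 : b * (u x θ - c * x) < b * (u (D c θ) θ - c * D c θ) :=
        mul_lt_mul_of_pos_left h2 hb
      have h5 : a * (u x θ - c * x) + b * (u x θ - c * x) = u x θ - c * x := by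
        rw [← add_mul, hab, one_mul]
      linarith
  have hPmax : ∀ θ ∈ Icc θlow θhigh, ∀ s ∈ Icc (0:ℝ) A, ∀ x ∈ Icc (0:ℝ) A, x ≤ s →
      x ≠ min (D c θ) s →
      u x θ - c * x < u (min (D c θ) s) θ - c * min (D c θ) s := by
    intro θ hθ' s hs x hx hxs hne
    rcases le_total (D c θ) s with hds | hsd
    · rw [min_eq_left hds] at hne ⊢
      exact hDopt θ hθ' x hx hne
    · rw [min_eq_right hsd] at hne ⊢
      exact hφlt θ hθ' x s hx.1 (lt_of_le_of_ne hxs hne) hsd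
  have hPle : ∀ θ ∈ Icc θlow θhigh, ∀ s ∈ Icc (0:ℝ) A, ∀ x ∈ Icc (0:ℝ) A, x ≤ s →
      u x θ - c * x ≤ u (min (D c θ) s) θ - c * min (D c θ) s := by
    intro θ hθ' s hs x hx hxs
    by_cases hne : x = min (D c θ) s
    · rw [hne]
    · exact (hPmax θ hθ' s hs x hx hxs hne).le
  -- midpoint lemma
  have hmidpair : ∀ θ ∈ Icc θlow θhigh, ∀ a b : ℝ, a ∈ Icc (0:ℝ) A → b ∈ Icc (0:ℝ) A →
      a < b →
      ((1/2) * (u (min (D c θ) a) θ - c * min (D c θ) a)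
        + (1/2) * (u (min (D c θ) b) θ - c * min (D c θ) b)
        ≤ u (min (D c θ) ((a+b)/2)) θ - c * min (D c θ) ((a+b)/2))
      ∧ (a < D c θ →
        (1/2) * (u (min (D c θ) a) θ - c * min (D c θ) a)
        + (1/2) * (u (min (D c θ) b) θ - c * min (D c θ) b)
        < u (min (D c θ) ((a+b)/2)) θ - c * min (D c θ) ((a+b)/2)) := by
    intro θ hθ' a b hamem hbmem hab
    have hdA := hDmem θ hθ'
    have htmem : (a+b)/2 ∈ Icc (0:ℝ) A := ⟨by linarith [hamem.1, hbmem.1], by linarith [hamem.2, hbmem.2]⟩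
    have hat : a < (a+b)/2 := by linarith
    have htb : (a+b)/2 < b := by linarith
    rcases le_or_gt (D c θ) a with hda | had
    · -- D ≤ a : all three minima equal D, equality
      rw [min_eq_left hda, min_eq_left (by linarith : D c θ ≤ (a+b)/2),
        min_eq_left (by linarith : D c θ ≤ b)]
      constructor
      · linarith
      · intro h; linarith
    · -- a < D
      have hstrict : (1/2) * (u (min (D c θ) a) θ - c * min (D c θ) a)
          + (1/2) * (u (min (D c θ) b) θ - c * min (D c θ) b)
          < u (min (D c θ) ((a+b)/2)) θ - c * min (D c θ) ((a+b)/2) := by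
        rw [min_eq_right had.le]
        rcases le_or_gt (D c θ) ((a+b)/2) with hdt | htd
        · -- D ≤ midpoint : min at midpoint is D
          rw [min_eq_left hdt]
          have h1 : u a θ - c * a < u (D c θ) θ - c * D c θ :=
            hφlt θ hθ' a (D c θ) hamem.1 had le_rfl
          have h2 : u (min (D c θ) b) θ - c * min (D c θ) b
              ≤ u (D c θ) θ - c * D c θ := by
            by_cases hne : min (D c θ) b = D c θ
            · rw [hne]
            · refine (hDopt θ hθ' (min (D c θ) b)
                ⟨le_min hdA.1 hbmem.1, le_trans (min_le_left _ _) hdA.2⟩ hne).le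
          linarith
        · -- midpoint < D
          rw [min_eq_right htd.le]
          set b' := min (D c θ) b with hb'def
          have hb'mem : b' ∈ Icc (0:ℝ) A :=
            ⟨le_min hdA.1 hbmem.1, le_trans (min_le_left _ _) hdA.2⟩
          have htb' : (a+b)/2 < b' := lt_min htd (by linarith)
          have hab' : a < b' := lt_trans hat htb'
          have h3 : (a + b')/2 ≤ (a+b)/2 := by
            have : b' ≤ b := min_le_right _ _
            linarith
          have h4 : (1/2) * (u a θ - c * a) + (1/2) * (u b' θ - c * b')
              < u ((a+b')/2) θ - c * ((a+b')/2) := by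
            have := hconc θ hθ' a hamem b' hb'mem (ne_of_lt hab') (1/2) (1/2)
              (by norm_num) (by norm_num) (by norm_num)
            have hcomb : (1/2) * a + (1/2) * b' = (a+b')/2 := by ring
            rw [hcomb] at this
            exact this
          have h5 : u ((a+b')/2) θ - c * ((a+b')/2)
              ≤ u ((a+b)/2) θ - c * ((a+b)/2) := by
            rcases eq_or_lt_of_le h3 with heq | hlt'
            · rw [heq]
            · refine (hφlt θ hθ' ((a+b')/2) ((a+b)/2) (by linarith [hamem.1, hb'mem.1])
                hlt' ?_).le
              have : b' ≤ D c θ := min_le_left _ _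
              linarith
          linarith
      exact ⟨hstrict.le, fun _ => hstrict⟩
  -- measurable monotone version of D and the family of ceiling allocations
  set Dm : ℝ → ℝ := fun θ => D c (P θ) with hDmdef
  have hDm_mono : Monotone Dm := fun x y hxy =>
    hDmono (UCQC.prj_mem hle x) (UCQC.prj_mem hle y) (UCQC.prj_mono _ _ hxy)
  have hDm_meas : Measurable Dm := hDm_mono.measurable
  have hDm_mem : ∀ θ, Dm θ ∈ Icc (0:ℝ) A := fun θ => hDmem _ (UCQC.prj_mem hle θ)
  have hDm_eq : ∀ θ ∈ Icc θlow θhigh, Dm θ = D c θ := fun θ h => by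
    rw [hDmdef]; simp only [hPdef, UCQC.prj_id h]
  set X : ℝ → ℝ → ℝ := fun s θ => min (Dm θ) (UCQC.clamp A s) with hXdef
  have hX_meas : ∀ s, Measurable (X s) := fun s => hDm_meas.min measurable_const
  have hX_mem : ∀ s θ, X s θ ∈ Icc (0:ℝ) A := fun s θ =>
    ⟨le_min (hDm_mem θ).1 (UCQC.clamp_mem hA.le s).1,
      le_trans (min_le_left _ _) (hDm_mem θ).2⟩
  set hfun : ℝ → ℝ := fun s => ∫ θ, (u (X s θ) (P θ) - c * X s θ) ∂F with hhfundef
  have hXint : ∀ s, Integrable (fun θ => u (X s θ) (P θ) - c * X s θ) F := fun s =>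
    UCQC.int_aux hu_cont hle hA.le (hX_meas s) (hX_mem s)
  set g : ℝ → ℝ := fun s => hfun s - μ * s with hgdef
  -- continuity of hfun, existence of the optimal ceiling
  have hhcont : Continuous hfun := by
    rw [Metric.continuous_iff]
    intro s ε hε
    have hK : IsCompact (Icc (0:ℝ) A ×ˢ Icc θlow θhigh) := isCompact_Icc.prod isCompact_Icc
    have huc := hK.uniformContinuousOn_of_continuous hu_cont
    rw [Metric.uniformContinuousOn_iff] at huc
    obtain ⟨δ, hδ, hδ'⟩ := huc (ε/4) (by linarith)
    refine ⟨min δ (ε/(4*(c+1))), lt_min hδ (by positivity), fun t ht => ?_⟩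
    have ht1 : dist t s < δ := lt_of_lt_of_le ht (min_le_left _ _)
    have ht2 : dist t s < ε/(4*(c+1)) := lt_of_lt_of_le ht (min_le_right _ _)
    have hbound : ∀ θ, ‖(u (X t θ) (P θ) - c * X t θ) - (u (X s θ) (P θ) - c * X s θ)‖
        ≤ ε/4 + ε/4 := by
      intro θ
      have hXd : |X t θ - X s θ| ≤ dist t s := by
        rw [Real.dist_eq]
        exact le_trans (UCQC.min_lip (Dm θ) _ _) (UCQC.clamp_lip A t s)
      have hpair : dist ((X t θ, P θ) : ℝ × ℝ) ((X s θ, P θ) : ℝ × ℝ) < δ := by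
        rw [Prod.dist_eq]
        simp only [dist_self]
        rw [max_eq_left dist_nonneg]
        calc dist (X t θ) (X s θ) = |X t θ - X s θ| := Real.dist_eq _ _
          _ ≤ dist t s := hXd
          _ < δ := ht1
      have h1 : |u (X t θ) (P θ) - u (X s θ) (P θ)| < ε/4 := by
        have := hδ' ((X t θ, P θ) : ℝ × ℝ)
          (mem_prod.mpr ⟨hX_mem t θ, UCQC.prj_mem hle θ⟩)
          ((X s θ, P θ) : ℝ × ℝ)
          (mem_prod.mpr ⟨hX_mem s θ, UCQC.prj_mem hle θ⟩) hpair
        rwa [Real.dist_eq] at this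
      have h2 : |c * X t θ - c * X s θ| ≤ ε/4 := by
        rw [← mul_sub, abs_mul, abs_of_pos hc]
        calc c * |X t θ - X s θ| ≤ c * (ε/(4*(c+1))) :=
              mul_le_mul_of_nonneg_left (le_trans hXd ht2.le) hc.le
          _ ≤ ε/4 := by
              rw [le_div_iff₀ (by norm_num : (0:ℝ) < 4)]
              have hd : (ε/(4*(c+1))) * (4*(c+1)) = ε := div_mul_cancel₀ _ (by positivity)
              nlinarith [hd, (by positivity : (0:ℝ) ≤ ε/(4*(c+1)))]
      calc ‖(u (X t θ) (P θ) - c * X t θ) - (u (X s θ) (P θ) - c * X s θ)‖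
          = |(u (X t θ) (P θ) - u (X s θ) (P θ)) - (c * X t θ - c * X s θ)| := by
            rw [Real.norm_eq_abs]; ring_nf
        _ ≤ |u (X t θ) (P θ) - u (X s θ) (P θ)| + |c * X t θ - c * X s θ| :=
            abs_sub _ _
        _ ≤ ε/4 + ε/4 := add_le_add h1.le h2
    have hint : hfun t - hfun s
        = ∫ θ, ((u (X t θ) (P θ) - c * X t θ) - (u (X s θ) (P θ) - c * X s θ)) ∂F :=
      (integral_sub (hXint t) (hXint s)).symm
    rw [Real.dist_eq, ← Real.norm_eq_abs, hint]
    calc ‖∫ θ, ((u (X t θ) (P θ) - c * X t θ) - (u (X s θ) (P θ) - c * X s θ)) ∂F‖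
        ≤ (ε/4 + ε/4) * (F univ).toReal :=
          norm_integral_le_of_norm_le_const (Filter.Eventually.of_forall hbound)
      _ = ε/2 := by rw [measure_univ]; simp; ring
      _ < ε := by linarith
  have hgcont : ContinuousOn g (Icc (0:ℝ) A) :=
    (hhcont.sub (continuous_const.mul continuous_id)).continuousOn
  obtain ⟨qc, hqcmem, hqcmax'⟩ :=
    isCompact_Icc.exists_isMaxOn ⟨0, le_rfl, hA.le⟩ hgcont
  have hqcmax : ∀ s ∈ Icc (0:ℝ) A, g s ≤ g qc := fun s hs => hqcmax' hs
  have hXgen : ∀ s, s ∈ Icc (0:ℝ) A → ∀ θ ∈ Icc θlow θhigh, X s θ = min (D c θ) s := by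
    intro s hs θ h'
    simp only [hXdef, UCQC.clamp_id hs]
    rw [hDm_eq θ h']
  -- the candidate allocation
  have hq0Q : (fun θ => min (D c θ) qc) ∈ Qset θlow θhigh A := by
    constructor
    · intro θ1 h1 θ2 h2 h12
      exact min_le_min (hDmono h1 h2 h12) le_rfl
    · intro θ hθ'
      exact ⟨le_min (hDmem θ hθ').1 hqcmem.1, le_trans (min_le_left _ _) (hDmem θ hθ').2⟩
  -- the worst-case value of the candidate is g qc
  have hWq0 : worstNeg F u c (M0 F μ) (fun θ => min (D c θ) qc) = g qc := by
    have hwf := UCQC.worst_formula (c := c) hθ hA hμ hu_cont hnullIco hpos hq0Q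
    rw [← hPdef] at hwf
    beta_reduce at hwf
    set s0 := sSup ((fun θ => min (D c θ) qc) '' Ico θlow θhigh) with hs0def
    have himg_ne : ((fun θ => min (D c θ) qc) '' Ico θlow θhigh).Nonempty :=
      ⟨min (D c θlow) qc, mem_image_of_mem _ ⟨le_rfl, hθ⟩⟩
    have hbdd : BddAbove ((fun θ => min (D c θ) qc) '' Ico θlow θhigh) := by
      refine ⟨qc, ?_⟩
      rintro y ⟨θ', hθ', rfl⟩
      exact min_le_right _ _
    have hs0le : s0 ≤ qc := by
      refine csSup_le himg_ne ?_
      rintro y ⟨θ', hθ', rfl⟩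
      exact min_le_right _ _
    have hq0le : ∀ θ ∈ Ico θlow θhigh, min (D c θ) qc ≤ s0 := fun θ h =>
      le_csSup hbdd (mem_image_of_mem _ h)
    have hs0mem : s0 ∈ Icc (0:ℝ) A := by
      constructor
      · refine le_trans ?_ (hq0le θlow ⟨le_rfl, hθ⟩)
        exact le_min (hDmem θlow ⟨le_rfl, hle⟩).1 hqcmem.1
      · exact le_trans hs0le hqcmem.2
    have hinteq : ∀ θ, UCQC.clamp A (min (D c (P θ)) qc) = X qc θ := by
      intro θ
      have hmem : min (D c (P θ)) qc ∈ Icc (0:ℝ) A :=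
        ⟨le_min (hDmem _ (UCQC.prj_mem hle θ)).1 hqcmem.1,
          le_trans (min_le_left _ _) (hDmem _ (UCQC.prj_mem hle θ)).2⟩
      simp only [hXdef, UCQC.clamp_id hmem, UCQC.clamp_id hqcmem, hDmdef]
    have hIq0 : (∫ θ, (u (UCQC.clamp A (min (D c (P θ)) qc)) (P θ)
        - c * UCQC.clamp A (min (D c (P θ)) qc)) ∂F) = hfun qc := by
      refine integral_congr_ae (Filter.Eventually.of_forall fun θ => ?_)
      show u (UCQC.clamp A (min (D c (P θ)) qc)) (P θ)
          - c * UCQC.clamp A (min (D c (P θ)) qc) = u (X qc θ) (P θ) - c * X qc θ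
      rw [hinteq θ]
    have hfeq : hfun qc = hfun s0 := by
      refine integral_congr_ae (hae fun θ hθ' => ?_)
      show u (X qc θ) (P θ) - c * X qc θ = u (X s0 θ) (P θ) - c * X s0 θ
      have h2 : θ ∈ Icc θlow θhigh := Ico_subset_Icc_self hθ'
      have hXq : X qc θ = min (D c θ) qc := hXgen qc hqcmem θ h2
      have hXs : X s0 θ = min (D c θ) s0 := hXgen s0 hs0mem θ h2
      rcases le_total (D c θ) qc with hd | hd
      · have h3 : D c θ ≤ s0 := by
          have h4 := hq0le θ hθ'
          rwa [min_eq_left hd] at h4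
        rw [hXq, hXs, min_eq_left hd, min_eq_left h3]
      · have h4 : qc ≤ s0 := by
          have h5 := hq0le θ hθ'
          rwa [min_eq_right hd] at h5
        have h5 : s0 = qc := le_antisymm hs0le h4
        rw [hXq, hXs, h5]
    rw [hwf, hIq0, hfeq]
    have h6 : g s0 ≤ g qc := hqcmax s0 hs0mem
    have h7 : g s0 = hfun s0 - μ * s0 := rfl
    have h8 : g qc = hfun qc - μ * qc := rfl
    have h9 : μ * s0 ≤ μ * qc := mul_le_mul_of_nonneg_left hs0le hμ.le
    linarith [hfeq]
  -- the key lemma for arbitrary monotone allocations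
  have hkey : ∀ q, q ∈ Qset θlow θhigh A →
      worstNeg F u c (M0 F μ) q ≤ g qc ∧
      (worstNeg F u c (M0 F μ) q = g qc → q =ᵐ[F] fun θ => min (D c θ) qc) := by
    intro q hq
    obtain ⟨hqmono, hqmem⟩ := hq
    have hwf := UCQC.worst_formula (c := c) hθ hA hμ hu_cont hnullIco hpos
      (⟨hqmono, hqmem⟩ : q ∈ Qset θlow θhigh A)
    rw [← hPdef] at hwf
    beta_reduce at hwf
    set qt : ℝ → ℝ := fun θ => UCQC.clamp A (q (P θ)) with hqtdef
    have hqt_meas : Measurable qt := by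
      have hmono : Monotone qt := fun a b hab =>
        UCQC.clamp_mono A (hqmono (UCQC.prj_mem hle a) (UCQC.prj_mem hle b)
          (UCQC.prj_mono θlow θhigh hab))
      exact hmono.measurable
    have hqt_mem : ∀ θ, qt θ ∈ Icc (0:ℝ) A := fun θ => UCQC.clamp_mem hA.le _
    have hqt_eq : ∀ θ ∈ Ico θlow θhigh, qt θ = q θ := by
      intro θ hθ'
      have h1 : θ ∈ Icc θlow θhigh := Ico_subset_Icc_self hθ'
      simp only [hqtdef, hPdef, UCQC.prj_id h1, UCQC.clamp_id (hqmem θ h1)]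
    have hqt_int : Integrable (fun θ => u (qt θ) (P θ) - c * qt θ) F :=
      UCQC.int_aux hu_cont hle hA.le hqt_meas hqt_mem
    set sq := sSup (q '' Ico θlow θhigh) with hsqdef
    have himg_ne : (q '' Ico θlow θhigh).Nonempty :=
      ⟨q θlow, mem_image_of_mem _ ⟨le_rfl, hθ⟩⟩
    have hbdd : BddAbove (q '' Ico θlow θhigh) := by
      refine ⟨A, ?_⟩
      rintro y ⟨θ', hθ', rfl⟩
      exact (hqmem θ' (Ico_subset_Icc_self hθ')).2
    have hqle : ∀ θ ∈ Ico θlow θhigh, q θ ≤ sq := fun θ h =>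
      le_csSup hbdd (mem_image_of_mem _ h)
    have hsqmem : sq ∈ Icc (0:ℝ) A := by
      constructor
      · exact le_trans (hqmem θlow ⟨le_rfl, hle⟩).1 (hqle θlow ⟨le_rfl, hθ⟩)
      · refine csSup_le himg_ne ?_
        rintro y ⟨θ', hθ', rfl⟩
        exact (hqmem θ' (Ico_subset_Icc_self hθ')).2
    have hptwise : ∀ θ ∈ Ico θlow θhigh,
        u (qt θ) (P θ) - c * qt θ ≤ u (X sq θ) (P θ) - c * X sq θ := by
      intro θ hθ'
      have h1 : θ ∈ Icc θlow θhigh := Ico_subset_Icc_self hθ'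
      rw [hXgen sq hsqmem θ h1, hqt_eq θ hθ']
      simp only [hPdef, UCQC.prj_id h1]
      exact hPle θ h1 sq hsqmem (q θ) (hqmem θ h1) (hqle θ hθ')
    have hIle : (∫ θ, (u (qt θ) (P θ) - c * qt θ) ∂F) ≤ hfun sq :=
      integral_mono_ae hqt_int (hXint sq) (hae hptwise)
    have hgsq : g sq = hfun sq - μ * sq := rfl
    have hle2 : g sq ≤ g qc := hqcmax sq hsqmem
    have hle1 : worstNeg F u c (M0 F μ) q ≤ g qc := by
      rw [hwf]
      linarith
    refine ⟨hle1, ?_⟩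
    intro heq
    have h0 : (∫ θ, (u (qt θ) (P θ) - c * qt θ) ∂F) - μ * sq = g qc := by
      rw [← hwf]; exact heq
    have hIeq : (∫ θ, (u (qt θ) (P θ) - c * qt θ) ∂F) = hfun sq := by linarith
    have hgeq : g sq = g qc := by linarith
    -- step 1 : q agrees a.e. with min (D c θ) sq
    have hΔ0 : ∫ θ, ((u (X sq θ) (P θ) - c * X sq θ) - (u (qt θ) (P θ) - c * qt θ)) ∂F = 0 := by
      rw [integral_sub (hXint sq) hqt_int]
      have h1 : hfun sq = ∫ θ, (u (X sq θ) (P θ) - c * X sq θ) ∂F := rfl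
      linarith
    have hΔae := (integral_eq_zero_iff_of_nonneg_ae
      (hae fun θ hθ' => sub_nonneg.mpr (hptwise θ hθ'))
      ((hXint sq).sub hqt_int)).mp hΔ0
    have hq_eq_sq : q =ᵐ[F] fun θ => min (D c θ) sq := by
      have h1 : ∀ᵐ θ ∂F, θ ∈ Ico θlow θhigh := hae fun θ h => h
      filter_upwards [hΔae, h1] with θ hΔθ hθIco
      have h2 : θ ∈ Icc θlow θhigh := Ico_subset_Icc_self hθIco
      simp only [Pi.zero_apply] at hΔθ
      rw [hXgen sq hsqmem θ h2, hqt_eq θ hθIco] at hΔθ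
      simp only [hPdef, UCQC.prj_id h2] at hΔθ
      by_contra hne
      have h3 : u (q θ) θ - c * q θ < u (min (D c θ) sq) θ - c * min (D c θ) sq :=
        hPmax θ h2 sq hsqmem (q θ) (hqmem θ h2) (hqle θ hθIco) hne
      linarith
    -- step 2 : min (D c θ) sq = min (D c θ) qc a.e.
    by_cases hsqc : sq = qc
    · refine hq_eq_sq.trans ?_
      rw [hsqc]
    · set a := min sq qc with hadef
      set b := max sq qc with hbdef
      have hamem : a ∈ Icc (0:ℝ) A :=
        ⟨le_min hsqmem.1 hqcmem.1, le_trans (min_le_left _ _) hsqmem.2⟩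
      have hbmem : b ∈ Icc (0:ℝ) A :=
        ⟨le_trans hsqmem.1 (le_max_left _ _), max_le hsqmem.2 hqcmem.2⟩
      have hab : a < b := min_lt_max.mpr hsqc
      have hgag : g a = g qc ∧ g b = g qc := by
        rcases le_total sq qc with h | h
        · rw [hadef, hbdef, min_eq_left h, max_eq_right h]
          exact ⟨hgeq, rfl⟩
        · rw [hadef, hbdef, min_eq_right h, max_eq_left h]
          exact ⟨rfl, hgeq⟩
      have hDlea : ∀ θ ∈ Ico θlow θhigh, D c θ ≤ a := by
        by_contra hcon
        push_neg at hcon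
        obtain ⟨θ1, hθ1, hθ1a⟩ := hcon
        set t := (a + b)/2 with htdef
        have htmem : t ∈ Icc (0:ℝ) A :=
          ⟨by rw [htdef]; linarith [hamem.1, hbmem.1], by rw [htdef]; linarith [hamem.2, hbmem.2]⟩
        set Δ2 : ℝ → ℝ := fun θ => (u (X t θ) (P θ) - c * X t θ)
          - ((1/2) * (u (X a θ) (P θ) - c * X a θ)
            + (1/2) * (u (X b θ) (P θ) - c * X b θ)) with hΔ2def
        have hΔ2int : Integrable Δ2 F :=
          (hXint t).sub (((hXint a).const_mul _).add ((hXint b).const_mul _))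
        have hΔ2nonneg : ∀ θ ∈ Ico θlow θhigh, 0 ≤ Δ2 θ := by
          intro θ hθ'
          have h2 : θ ∈ Icc θlow θhigh := Ico_subset_Icc_self hθ'
          have hm := (hmidpair θ h2 a b hamem hbmem hab).1
          simp only [hΔ2def, hXgen t htmem θ h2, hXgen a hamem θ h2, hXgen b hbmem θ h2,
            hPdef, UCQC.prj_id h2, htdef, hXgen ((a+b)/2) (by rw [← htdef]; exact htmem) θ h2]
          linarith
        have hΔ2pos : ∀ θ ∈ Ico θ1 θhigh, 0 < Δ2 θ := by
          intro θ hθ'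
          have hθIco : θ ∈ Ico θlow θhigh := ⟨le_trans hθ1.1 hθ'.1, hθ'.2⟩
          have h2 : θ ∈ Icc θlow θhigh := Ico_subset_Icc_self hθIco
          have hDθ : a < D c θ :=
            lt_of_lt_of_le hθ1a (hDmono (Ico_subset_Icc_self hθ1) h2 hθ'.1)
          have hm := (hmidpair θ h2 a b hamem hbmem hab).2 hDθ
          simp only [hΔ2def, hXgen t htmem θ h2, hXgen a hamem θ h2, hXgen b hbmem θ h2,
            hPdef, UCQC.prj_id h2, htdef, hXgen ((a+b)/2) (by rw [← htdef]; exact htmem) θ h2]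
          linarith
        have hint2 : 0 < ∫ θ, Δ2 θ ∂F := by
          rw [integral_pos_iff_support_of_nonneg_ae (hae hΔ2nonneg) hΔ2int]
          refine lt_of_lt_of_le (hpos θ1 hθ1.1 hθ1.2) (measure_mono ?_)
          intro θ hθ'
          exact ne_of_gt (hΔ2pos θ hθ')
        have hsplit : ∫ θ, Δ2 θ ∂F = hfun t - ((1/2) * hfun a + (1/2) * hfun b) := by
          have e1 : Integrable (fun θ => (1/2) * (u (X a θ) (P θ) - c * X a θ)
              + (1/2) * (u (X b θ) (P θ) - c * X b θ)) F :=
            ((hXint a).const_mul _).add ((hXint b).const_mul _)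
          calc ∫ θ, Δ2 θ ∂F
              = (∫ θ, (u (X t θ) (P θ) - c * X t θ) ∂F)
                - ∫ θ, ((1/2) * (u (X a θ) (P θ) - c * X a θ)
                  + (1/2) * (u (X b θ) (P θ) - c * X b θ)) ∂F :=
                integral_sub (hXint t) e1
            _ = (∫ θ, (u (X t θ) (P θ) - c * X t θ) ∂F)
                - ((∫ θ, (1/2) * (u (X a θ) (P θ) - c * X a θ) ∂F)
                  + ∫ θ, (1/2) * (u (X b θ) (P θ) - c * X b θ) ∂F) := by
                rw [integral_add ((hXint a).const_mul _) ((hXint b).const_mul _)]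
            _ = hfun t - ((1/2) * hfun a + (1/2) * hfun b) := by
                rw [integral_const_mul, integral_const_mul]
        have hgt : g qc < g t := by
          have h6 : (1/2) * hfun a + (1/2) * hfun b < hfun t := by linarith
          have h7 : g t = hfun t - μ * t := rfl
          have h8 : g a = hfun a - μ * a := rfl
          have h9 : g b = hfun b - μ * b := rfl
          have h10 : μ * t = (1/2)*(μ*a) + (1/2)*(μ*b) := by rw [htdef]; ring
          linarith [hgag.1, hgag.2]
        exact absurd (hqcmax t htmem) (not_le.mpr hgt)
      have hfinal : ∀ θ ∈ Ico θlow θhigh, min (D c θ) sq = min (D c θ) qc := by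
        intro θ hθ'
        have h := hDlea θ hθ'
        rw [min_eq_left (le_trans h (min_le_left _ _)),
          min_eq_left (le_trans h (min_le_right _ _))]
      exact hq_eq_sq.trans (hae hfinal)
  refine ⟨qc, hqcmem, ?_, ?_⟩
  · intro q hq
    rw [hWq0]
    exact (hkey q hq).1
  · intro q hq heq
    rw [hWq0] at heq
    exact (hkey q hq).2 heq
end
end
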